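/- arXiv:1801.09140 — 6 statements merged into one kernel-verified Lean document; each statement's English description precedes it below -/
import Mathlib

section
/- Let (v, π) be a configuration with v e ≠ 0 for every e ∈ E and no two of the vectors v e, v e' (e ≠ e') parallel. If every monotone path of (v, π) is coherent, then (v, π) is all-coherent. -/
open Finset

section CommonDefs

variable {E : Type*} [Fintype E] {V : Type*} [AddCommGroup V] [Module ℝ V]

/-- An ordered set partition of the finite index set `E` with `l` blocks is encoded by a
surjective block map `b : E → Fin l` (block `E_i = b⁻¹ i`, blocks listed in the order of
`Fin l`).  Such an ordered set partition is a *cellular string* of the configuration `v` if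
for each block index `i` there is a linear functional vanishing on the vectors of block `i`,
negative on the vectors of earlier blocks and positive on the vectors of later blocks. -/
def IsCellularString (v : E → V) (l : ℕ) (b : E → Fin l) : Prop :=
  Function.Surjective b ∧
  ∀ i : Fin l, ∃ φ : V →ₗ[ℝ] ℝ, ∀ e : E,
    (b e = i → φ (v e) = 0) ∧ (b e < i → φ (v e) < 0) ∧ (i < b e → 0 < φ (v e))

/-- A cellular string (ordered set partition) is *coherent* for the configuration `(v, π)` if
some linear functional `ψ` orders the ratios `ψ(v e)/π(v e)` according to the blocks:
equal within a block, strictly increasing between blocks. -/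
def IsCoherent (v : E → V) (π : V →ₗ[ℝ] ℝ) (l : ℕ) (b : E → Fin l) : Prop :=
  ∃ ψ : V →ₗ[ℝ] ℝ, ∀ e e' : E,
    (b e = b e' → ψ (v e) / π (v e) = ψ (v e') / π (v e')) ∧
    (b e < b e' → ψ (v e) / π (v e) < ψ (v e') / π (v e'))

/-- The configuration `(v, π)` is *all-coherent* if every cellular string is coherent. -/
def AllCoherent (v : E → V) (π : V →ₗ[ℝ] ℝ) : Prop :=
  ∀ (l : ℕ) (b : E → Fin l), IsCellularString v l b → IsCoherent v π l b

end CommonDefs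


open Matrix

namespace Statement3Aux


/-- dot product as a linear map in the second argument -/
noncomputable def dotL {d : ℕ} (g : Fin d → ℝ) : (Fin d → ℝ) →ₗ[ℝ] ℝ where
  toFun x := g ⬝ᵥ x
  map_add' x y := dotProduct_add g x y
  map_smul' c x := by simp [dotProduct_smul, smul_eq_mul]

@[simp] lemma dotL_apply {d : ℕ} (g x : Fin d → ℝ) : dotL g x = g ⬝ᵥ x := rfl

lemma exists_dot_repr {d : ℕ} (φ : (Fin d → ℝ) →ₗ[ℝ] ℝ) :
    ∃ g : Fin d → ℝ, ∀ x, φ x = g ⬝ᵥ x := by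
  classical
  refine ⟨fun i => φ ((Pi.single i (1:ℝ) : Fin d → ℝ)), fun x => ?_⟩
  have hx : x = ∑ i, Pi.single i (x i) := by
    rw [Finset.univ_sum_single]
  have h1 : ∀ i, Pi.single i (x i) = x i • (Pi.single i (1:ℝ) : Fin d → ℝ) := by
    intro i; funext j
    by_cases hji : j = i
    · subst hji; simp
    · simp [Pi.single_apply, hji]
  calc φ x = φ (∑ i, Pi.single i (x i)) := by rw [← hx]
    _ = ∑ i, φ (Pi.single i (x i)) := map_sum φ _ _
    _ = ∑ i, x i • φ ((Pi.single i (1:ℝ) : Fin d → ℝ)) := by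
        refine Finset.sum_congr rfl fun i _ => ?_
        rw [h1 i, _root_.map_smul]
    _ = (fun i => φ ((Pi.single i (1:ℝ) : Fin d → ℝ))) ⬝ᵥ x := by
        simp [dotProduct, smul_eq_mul, mul_comm]

lemma continuous_dot {d : ℕ} (x : Fin d → ℝ) :
    Continuous fun g : Fin d → ℝ => g ⬝ᵥ x := by
  show Continuous fun g : Fin d → ℝ => ∑ i, g i * x i
  exact continuous_finset_sum _ fun i _ => (continuous_apply i).mul continuous_const

lemma islin_dot {d : ℕ} (x : Fin d → ℝ) :
    IsLinearMap ℝ (fun g : Fin d → ℝ => g ⬝ᵥ x) :=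
  ⟨fun a b => add_dotProduct a b x, fun r a => smul_dotProduct r a x⟩

/-- choose a small positive ε avoiding a finite bad set -/
lemma exists_eps (bad : Set ℝ) (hbad : bad.Finite) (δ : ℝ) (hδ : 0 < δ) :
    ∃ ε : ℝ, 0 < ε ∧ ε < δ ∧ ε ∉ bad := by
  have hinf : (Set.Ioo (0:ℝ) δ).Infinite := Set.infinite_coe_iff.mp (Set.Ioo.infinite hδ)
  obtain ⟨ε, hε⟩ := (hinf.diff hbad).nonempty
  exact ⟨ε, hε.1.1, hε.1.2, hε.2⟩

/-- a generic functional not vanishing on finitely many nonzero vectors -/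
lemma exists_dot_ne_zero {d : ℕ} (S : Finset (Fin d → ℝ)) (hS : ∀ x ∈ S, x ≠ 0) :
    ∃ w : Fin d → ℝ, ∀ x ∈ S, w ⬝ᵥ x ≠ 0 := by
  classical
  induction S using Finset.induction_on with
  | empty => exact ⟨0, by simp⟩
  | @insert y S hy ih =>
    obtain ⟨w, hw⟩ := ih (fun x hx => hS x (Finset.mem_insert_of_mem hx))
    have hy0 : y ≠ 0 := hS y (Finset.mem_insert_self y S)
    set bad : Set ℝ := (fun x => -(w ⬝ᵥ x) / (y ⬝ᵥ x)) '' (insert y S : Finset _) with hbad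
    obtain ⟨ε, hε0, -, hεbad⟩ := exists_eps bad (Set.Finite.image _ (Finset.finite_toSet _)) 1 one_pos
    refine ⟨w + ε • y, fun x hx => ?_⟩
    have hdot : (w + ε • y) ⬝ᵥ x = w ⬝ᵥ x + ε * (y ⬝ᵥ x) := by
      rw [add_dotProduct, smul_dotProduct, smul_eq_mul]
    by_cases hxy : y ⬝ᵥ x = 0
    · have hxS : x ∈ S := by
        rcases Finset.mem_insert.mp hx with rfl | h
        · exfalso
          rw [dotProduct_self_eq_zero] at hxy
          exact hy0 hxy
        · exact h
      rw [hdot, hxy, mul_zero, add_zero]; exact hw x hxS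
    · rw [hdot]
      intro hcon
      have : ε = -(w ⬝ᵥ x) / (y ⬝ᵥ x) := by
        field_simp
        linarith
      exact hεbad (this ▸ ⟨x, by simpa using hx, rfl⟩)

/-- Gordan-type lemma: positively independent vectors lie in an open halfspace. -/
lemma gordan {d : ℕ} {ι : Type*} [Fintype ι] (dv : ι → Fin d → ℝ)
    (hind : ∀ s : ι → ℝ, (∀ i, 0 ≤ s i) → ∑ i, s i • dv i = 0 → ∀ i, s i = 0) :
    ∃ w : Fin d → ℝ, ∀ i, 0 < w ⬝ᵥ dv i := by
  classical
  set F : Finset (Fin d → ℝ) := Finset.univ.image dv with hF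
  have h0 : (0:Fin d → ℝ) ∉ convexHull ℝ (F : Set (Fin d → ℝ)) := by
    rw [Finset.convexHull_eq]
    rintro ⟨W, hW0, hW1, hWc⟩
    set s : ι → ℝ := fun i => W (dv i) / ((Finset.univ.filter (fun j => dv j = dv i)).card : ℝ) with hs
    have hfibne : ∀ i : ι, (0:ℝ) < ((Finset.univ.filter (fun j => dv j = dv i)).card : ℝ) := by
      intro i
      have : i ∈ Finset.univ.filter (fun j => dv j = dv i) := by simp
      exact_mod_cast Finset.card_pos.mpr ⟨i, this⟩
    have hs0 : ∀ i, 0 ≤ s i := fun i =>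
      div_nonneg (hW0 _ (Finset.mem_image_of_mem dv (Finset.mem_univ i))) (hfibne i).le
    have hsum : ∑ i, s i • dv i = 0 := by
      have hmaps : ∀ i ∈ Finset.univ, dv i ∈ F := fun i _ => Finset.mem_image_of_mem dv (Finset.mem_univ i)
      have hfib := Finset.sum_fiberwise_of_maps_to hmaps (fun i => s i • dv i)
      rw [← hfib]
      have : ∀ y ∈ F, ∑ i ∈ Finset.univ.filter (fun i => dv i = y), s i • dv i = W y • y := by
        intro y hyF
        obtain ⟨i₀, -, rfl⟩ := Finset.mem_image.mp hyF
        have hconst : ∀ i ∈ Finset.univ.filter (fun i => dv i = dv i₀), s i • dv i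
            = (W (dv i₀) / ((Finset.univ.filter (fun j => dv j = dv i₀)).card : ℝ)) • dv i₀ := by
          intro i hi
          have hdvi : dv i = dv i₀ := (Finset.mem_filter.mp hi).2
          rw [hs]
          simp only [hdvi]
        rw [Finset.sum_congr rfl hconst, Finset.sum_const, ← Nat.cast_smul_eq_nsmul ℝ, smul_smul]
        congr 1
        rw [mul_div_cancel₀]
        exact (hfibne i₀).ne'
      rw [Finset.sum_congr rfl this]
      have := Finset.centerMass_eq_of_sum_1 F id hW1
      rw [this] at hWc
      simpa using hWc
    have hW00 : ∀ y ∈ F, W y = 0 := by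
      intro y hyF
      obtain ⟨i, -, rfl⟩ := Finset.mem_image.mp hyF
      have := hind s hs0 hsum i
      rw [hs] at this
      simp only at this
      rcases div_eq_zero_iff.mp this with h | h
      · exact h
      · exact absurd h (hfibne i).ne'
    rw [Finset.sum_congr rfl hW00, Finset.sum_const, smul_zero] at hW1
    exact one_ne_zero hW1.symm
  obtain ⟨f, u0, hfu, hub⟩ := geometric_hahn_banach_point_closed (convex_convexHull ℝ _)
      ((Set.Finite.isCompact_convexHull ℝ (F.finite_toSet)).isClosed) h0
  obtain ⟨g, hg⟩ := exists_dot_repr (f.toLinearMap : (Fin d → ℝ) →ₗ[ℝ] ℝ)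
  refine ⟨g, fun i => ?_⟩
  have h1 : u0 < f (dv i) := hub _ (subset_convexHull ℝ _ (Finset.mem_coe.mpr (Finset.mem_image_of_mem dv (Finset.mem_univ i))))
  have h2 : f 0 < u0 := hfu
  rw [map_zero] at h2
  have h3 : (0:ℝ) < f (dv i) := lt_trans h2 h1
  have h4 : f (dv i) = g ⬝ᵥ dv i := hg (dv i)
  linarith [h4 ▸ h3]

/-- double-orthogonality for the dot pairing -/
lemma dot_orth_span {d : ℕ} (S : Set (Fin d → ℝ)) (c : Fin d → ℝ)
    (h : ∀ g : Fin d → ℝ, (∀ x ∈ S, g ⬝ᵥ x = 0) → g ⬝ᵥ c = 0) :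
    c ∈ Submodule.span ℝ S := by
  classical
  set ee : EuclideanSpace ℝ (Fin d) ≃ₗ[ℝ] (Fin d → ℝ) :=
    WithLp.linearEquiv 2 ℝ (Fin d → ℝ) with hee
  have hinner : ∀ x y : EuclideanSpace ℝ (Fin d), (inner ℝ x y : ℝ) = (ee x) ⬝ᵥ (ee y) := by
    intro x y
    rw [PiLp.inner_apply]
    simp only [RCLike.inner_apply, starRingEnd_apply, star_trivial]
    exact Finset.sum_congr rfl fun i _ => mul_comm _ _
  set K : Submodule ℝ (EuclideanSpace ℝ (Fin d)) := Submodule.span ℝ (ee.symm '' S) with hKdef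
  have hcK : ee.symm c ∈ Kᗮᗮ := by
    rw [Submodule.mem_orthogonal]
    intro y hy
    have hgS : ∀ x ∈ S, (ee y) ⬝ᵥ x = 0 := by
      intro x hx
      have hxK : ee.symm x ∈ K := Submodule.subset_span ⟨x, hx, rfl⟩
      have h0 : (inner ℝ (ee.symm x) y : ℝ) = 0 := (Submodule.mem_orthogonal K y).mp hy _ hxK
      rw [hinner, ee.apply_symm_apply] at h0
      rw [dotProduct_comm]
      exact h0
    have hc := h (ee y) hgS
    rw [hinner, ee.apply_symm_apply]
    exact hc
  haveI : CompleteSpace K := FiniteDimensional.complete ℝ K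
  rw [Submodule.orthogonal_orthogonal] at hcK
  rw [hKdef, Submodule.span_image_linearEquiv] at hcK
  obtain ⟨y, hy, heq⟩ := Submodule.mem_map.mp hcK
  have : y = c := by
    have := congrArg ee heq
    rwa [ee.apply_symm_apply] at this
  · exact this ▸ hy



lemma refine_lemma {E : Type*} [Fintype E] {d : ℕ}
    (v : E → Fin d → ℝ) (π : (Fin d → ℝ) →ₗ[ℝ] ℝ) (hπ : ∀ e, 0 < π (v e))
    (u : E → Fin d → ℝ) (hu : ∀ e, v e = (π (v e)) • u e)
    {l : ℕ} (b : E → Fin l) (hstr : IsCellularString v l b) (k : Fin l)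
    (w : Fin d → ℝ)
    (hw : ∀ e e', b e = k → b e' = k → w ⬝ᵥ u e = w ⬝ᵥ u e' → e = e')
    (e₁ e₂ : E) (h12 : e₁ ≠ e₂) (hbe₁ : b e₁ = k) (hbe₂ : b e₂ = k) :
    ∃ (l' : ℕ) (b' : E → Fin l'), IsCellularString v l' b' ∧ l < l' ∧
      (∀ e e', b e = b e' → b e ≠ k → b' e = b' e') ∧
      (∀ e e', b e < b e' → b' e < b' e') ∧
      (∀ e e', b e = k → b e' = k → w ⬝ᵥ u e < w ⬝ᵥ u e' → b' e < b' e') := by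
  classical
  obtain ⟨hsurj, hφ⟩ := hstr
  have hNE : Nonempty E := ⟨e₁⟩
  set m := Fintype.card E with hm
  have hm0 : 0 < m := Fintype.card_pos
  set val : E → ℝ := fun e => w ⬝ᵥ u e with hval
  set rk : E → ℕ := fun e => (Finset.univ.filter (fun x => b x = k ∧ val x < val e)).card with hrk
  set K : E → ℕ := fun e => m * (b e).val + (if b e = k then rk e else 0) with hK
  have hrk_lt : ∀ e, rk e < m := by
    intro e
    have hsub : (Finset.univ.filter (fun x => b x = k ∧ val x < val e)) ⊆ Finset.univ.erase e := by
      intro x hx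
      obtain ⟨hxu, -, hlt⟩ := Finset.mem_filter.mp hx
      exact Finset.mem_erase.mpr ⟨fun hxe => by rw [hxe] at hlt; exact lt_irrefl _ hlt, hxu⟩
    calc rk e ≤ (Finset.univ.erase e).card := Finset.card_le_card hsub
      _ = m - 1 := by rw [Finset.card_erase_of_mem (Finset.mem_univ e), Finset.card_univ]
      _ < m := by omega
  have hif_lt : ∀ e, (if b e = k then rk e else 0) < m := by
    intro e; split
    · exact hrk_lt e
    · exact hm0
  have hK3 : ∀ e e', b e < b e' → K e < K e' := by
    intro e e' h
    have h1 : K e < m * ((b e).val + 1) := by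
      rw [hK, Nat.mul_succ]
      exact Nat.add_lt_add_left (hif_lt e) _
    have h2 : m * ((b e).val + 1) ≤ m * (b e').val := Nat.mul_le_mul_left m h
    have h3 : m * (b e').val ≤ K e' := by rw [hK]; exact Nat.le_add_right _ _
    omega
  have hK4 : ∀ e e', b e = b e' → b e ≠ k → K e = K e' := by
    intro e e' h hne
    have hne' : b e' ≠ k := by rw [← h]; exact hne
    rw [hK]
    simp only
    rw [h, if_neg hne', if_neg hne']
  have hrk5 : ∀ e e', b e = k → b e' = k → val e < val e' → rk e < rk e' := by
    intro e e' he he' hlt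
    apply Finset.card_lt_card
    rw [Finset.ssubset_def]
    constructor
    · intro x hx
      obtain ⟨hxu, hbk, hl⟩ := Finset.mem_filter.mp hx
      exact Finset.mem_filter.mpr ⟨hxu, hbk, lt_trans hl hlt⟩
    · intro hcon
      have hmem : e ∈ Finset.univ.filter (fun x => b x = k ∧ val x < val e') :=
        Finset.mem_filter.mpr ⟨Finset.mem_univ e, he, hlt⟩
      obtain ⟨-, -, hl⟩ := Finset.mem_filter.mp (hcon hmem)
      exact lt_irrefl _ hl
  have hK5 : ∀ e e', b e = k → b e' = k → val e < val e' → K e < K e' := by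
    intro e e' he he' hlt
    rw [hK]
    simp only
    rw [if_pos he, if_pos he', he, he']
    exact Nat.add_lt_add_left (hrk5 e e' he he' hlt) _
  have hK6 : ∀ e e', K e = K e' → b e = b e' := by
    intro e e' h
    rcases lt_trichotomy (b e) (b e') with hlt | heq | hgt
    · exact absurd h (Nat.ne_of_lt (hK3 _ _ hlt))
    · exact heq
    · exact absurd h (Nat.ne_of_gt (hK3 _ _ hgt))
  have hK7 : ∀ e e', K e = K e' → b e = k → e = e' := by
    intro e e' h he
    have hbb := hK6 e e' h
    have hbe' : b e' = k := by rw [← hbb]; exact he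
    have hrkeq : rk e = rk e' := by
      have h2 := h
      rw [hK] at h2
      simp only at h2
      rw [if_pos he, if_pos hbe', he, hbe'] at h2
      omega
    rcases lt_trichotomy (val e) (val e') with hlt | heq | hgt
    · exact absurd hrkeq (Nat.ne_of_lt (hrk5 _ _ he hbe' hlt))
    · exact hw e e' he hbe' heq
    · exact absurd hrkeq (Nat.ne_of_gt (hrk5 _ _ hbe' he hgt))
  -- the refined block map
  set s : Finset ℕ := Finset.univ.image K with hs
  have hmem : ∀ e, K e ∈ s := fun e => Finset.mem_image_of_mem K (Finset.mem_univ e)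
  set l' := s.card with hl'
  set iso := s.orderIsoOfFin rfl with hiso
  set b' : E → Fin l' := fun e => iso.symm ⟨K e, hmem e⟩ with hb'
  have hb'le : ∀ e e', b' e ≤ b' e' ↔ K e ≤ K e' := by
    intro e e'
    rw [hb']
    simp only
    rw [iso.symm.le_iff_le, Subtype.mk_le_mk]
  have hb'lt : ∀ e e', b' e < b' e' ↔ K e < K e' := by
    intro e e'
    rw [hb']
    simp only
    rw [iso.symm.lt_iff_lt, Subtype.mk_lt_mk]
  have hb'eq : ∀ e e', b' e = b' e' ↔ K e = K e' := by
    intro e e'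
    constructor
    · intro h
      exact le_antisymm ((hb'le e e').mp h.le) ((hb'le e' e).mp h.ge)
    · intro h
      exact le_antisymm ((hb'le e e').mpr h.le) ((hb'le e' e).mpr h.ge)
  have hb'surj : Function.Surjective b' := by
    intro i
    obtain ⟨e, -, hKe⟩ := Finset.mem_image.mp (iso i).2
    refine ⟨e, ?_⟩
    rw [hb']
    simp only
    have : (⟨K e, hmem e⟩ : {x // x ∈ s}) = iso i := Subtype.ext hKe
    rw [this, OrderIso.symm_apply_apply]
  -- l < l'
  obtain ⟨g, hg⟩ := hsurj.hasRightInverse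
  set G : Fin l → E := fun i => if i = k then e₁ else g i with hG
  have hbG : ∀ i, b (G i) = i := by
    intro i
    rw [hG]
    simp only
    split
    · rename_i hik; rw [hbe₁, hik]
    · exact hg i
  have hGne₂ : ∀ i, b' (G i) ≠ b' e₂ := by
    intro i hcon
    have hKeq := (hb'eq _ _).mp hcon
    have hbb : b (G i) = b e₂ := hK6 _ _ hKeq
    have hik : i = k := (hbG i).symm.trans (hbb.trans hbe₂)
    have hGe : G i = e₂ := hK7 _ _ hKeq (by rw [hbG i, hik])
    rw [hG] at hGe
    simp only [if_pos hik] at hGe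
    exact h12 hGe
  have hll' : l < l' := by
    have hinj : Function.Injective (fun i : Fin l => b' (G i)) := by
      intro i j h
      simp only at h
      have := hK6 _ _ ((hb'eq _ _).mp h)
      rw [hbG i, hbG j] at this
      exact this
    have hnotmem : b' e₂ ∉ Finset.univ.image (fun i : Fin l => b' (G i)) := by
      intro hmem2
      obtain ⟨i, -, hi⟩ := Finset.mem_image.mp hmem2
      exact hGne₂ i hi
    have h1 : (insert (b' e₂) (Finset.univ.image fun i : Fin l => b' (G i))).card = l + 1 := by
      rw [Finset.card_insert_of_notMem hnotmem, Finset.card_image_of_injective _ hinj,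
        Finset.card_univ, Fintype.card_fin]
    have h2 : (insert (b' e₂) (Finset.univ.image fun i : Fin l => b' (G i))).card ≤ l' := by
      calc _ ≤ (Finset.univ : Finset (Fin l')).card := Finset.card_le_univ _
        _ = l' := by rw [Finset.card_univ, Fintype.card_fin]
    omega
  refine ⟨l', b', ⟨hb'surj, ?_⟩, hll',
    fun e e' h hne => (hb'eq _ _).mpr (hK4 _ _ h hne),
    fun e e' h => (hb'lt _ _).mpr (hK3 _ _ h),
    fun e e' he he' hlt => (hb'lt _ _).mpr (hK5 _ _ he he' hlt)⟩
  -- functionals for the refined string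
  intro i'
  obtain ⟨e₀, he₀⟩ := hb'surj i'
  obtain ⟨φk, hφk⟩ := hφ (b e₀)
  -- helper : comparisons against e₀'s new block
  have hlt_blk : ∀ e, b e ≠ k ∨ b e₀ ≠ k → K e < K e₀ → b e < b e₀ := by
    intro e hne hKlt
    rcases lt_trichotomy (b e) (b e₀) with h1 | h1 | h1
    · exact h1
    · exfalso
      have hek : b e ≠ k := by
        rcases hne with h | h
        · exact h
        · rw [h1]; exact h
      rw [hK4 _ _ h1 hek] at hKlt
      exact lt_irrefl _ hKlt
    · exact absurd hKlt (not_lt.mpr (le_of_lt (hK3 _ _ h1)))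
  have hgt_blk : ∀ e, b e ≠ k ∨ b e₀ ≠ k → K e₀ < K e → b e₀ < b e := by
    intro e hne hKlt
    rcases lt_trichotomy (b e₀) (b e) with h1 | h1 | h1
    · exact h1
    · exfalso
      have hek : b e₀ ≠ k := by
        rcases hne with h | h
        · rw [h1]; exact h
        · exact h
      rw [hK4 _ _ h1 hek] at hKlt
      exact lt_irrefl _ hKlt
    · exact absurd hKlt (not_lt.mpr (le_of_lt (hK3 _ _ h1)))
  by_cases hbk : b e₀ = k
  case neg =>
    refine ⟨φk, fun e => ⟨?_, ?_, ?_⟩⟩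
    · intro h
      rw [← he₀] at h
      exact (hφk e).1 (hK6 _ _ ((hb'eq _ _).mp h))
    · intro h
      rw [← he₀] at h
      exact (hφk e).2.1 (hlt_blk e (Or.inr hbk) ((hb'lt _ _).mp h))
    · intro h
      rw [← he₀] at h
      exact (hφk e).2.2 (hgt_blk e (Or.inr hbk) ((hb'lt _ _).mp h))
  case pos =>
    set c₀ : ℝ := w ⬝ᵥ u e₀ with hc₀
    set θ : (Fin d → ℝ) →ₗ[ℝ] ℝ := dotL w - c₀ • π with hθ
    have hθval : ∀ e, θ (v e) = π (v e) * (val e - c₀) := by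
      intro e
      have h1 : dotL w (v e) = π (v e) * val e := by
        conv_lhs => rw [hu e]
        simp only [dotL_apply, dotProduct_smul, smul_eq_mul, hval]
      rw [hθ]
      simp only [LinearMap.sub_apply, LinearMap.smul_apply, smul_eq_mul, h1]
      ring
    -- block-k elements have φk value zero, others nonzero
    have hφk0 : ∀ e, b e = k → φk (v e) = 0 := by
      intro e he
      exact (hφk e).1 (by rw [he, hbk])
    have hφkne : ∀ e, b e ≠ k → φk (v e) ≠ 0 := by
      intro e he
      rcases lt_trichotomy (b e) (b e₀) with h1 | h1 | h1
      · exact ne_of_lt ((hφk e).2.1 h1)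
      · exact absurd (h1.trans hbk) he
      · exact ne_of_gt ((hφk e).2.2 h1)
    set Nc : ℝ := 1 + ∑ e ∈ Finset.univ.filter (fun e => b e ≠ k), |θ (v e)| / |φk (v e)| with hN
    have hNpos : 0 < Nc := by
      rw [hN]
      have : 0 ≤ ∑ e ∈ Finset.univ.filter (fun e => b e ≠ k), |θ (v e)| / |φk (v e)| :=
        Finset.sum_nonneg fun e _ => div_nonneg (abs_nonneg _) (abs_nonneg _)
      linarith
    have hNterm : ∀ e, b e ≠ k → |θ (v e)| < Nc * |φk (v e)| := by
      intro e hek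
      have habs : 0 < |φk (v e)| := abs_pos.mpr (hφkne e hek)
      have hterm : |θ (v e)| / |φk (v e)| ≤ Nc - 1 := by
        rw [hN]
        have hmem2 : e ∈ Finset.univ.filter (fun e => b e ≠ k) := by
          simp [hek]
        have := Finset.single_le_sum (f := fun e => |θ (v e)| / |φk (v e)|)
          (fun x _ => div_nonneg (abs_nonneg _) (abs_nonneg _)) hmem2
        linarith
      have h1 : |θ (v e)| ≤ (Nc - 1) * |φk (v e)| := by
        rw [div_le_iff₀ habs] at hterm
        linarith
      nlinarith
    refine ⟨Nc • φk + θ, fun e => ⟨?_, ?_, ?_⟩⟩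
    · intro h
      rw [← he₀] at h
      have hKeq := (hb'eq _ _).mp h
      have hbe : b e = b e₀ := hK6 _ _ hKeq
      have hee : e = e₀ := hK7 _ _ hKeq (hbe.trans hbk)
      subst hee
      simp only [LinearMap.add_apply, LinearMap.smul_apply, smul_eq_mul]
      have hvc : val e - c₀ = 0 := by simp only [hval, hc₀]; ring
      rw [hφk0 e (hbe.trans hbk), hθval e, hvc]
      ring
    · intro h
      rw [← he₀] at h
      have hKlt := (hb'lt _ _).mp h
      simp only [LinearMap.add_apply, LinearMap.smul_apply, smul_eq_mul]
      by_cases hek : b e = k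
      · -- within block k : use θ
        have hrklt : rk e < rk e₀ := by
          have h2 := hKlt
          rw [hK] at h2
          simp only at h2
          rw [if_pos hek, if_pos hbk, hek, hbk] at h2
          omega
        have hvlt : val e < val e₀ := by
          rcases lt_trichotomy (val e) (val e₀) with h1 | h1 | h1
          · exact h1
          · exfalso
            have hee : e = e₀ := hw _ _ hek hbk h1
            rw [hee] at hrklt
            exact lt_irrefl _ hrklt
          · exact absurd hrklt (not_lt.mpr (le_of_lt (hrk5 _ _ hbk hek h1)))
        rw [hφk0 e hek, hθval e]
        have hc0v : c₀ = val e₀ := by simp only [hc₀, hval]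
        have : val e - c₀ < 0 := by rw [hc0v]; linarith
        have := mul_neg_of_pos_of_neg (hπ e) this
        linarith
      · have hblt : b e < b e₀ := hlt_blk e (Or.inl hek) hKlt
        have hφneg : φk (v e) < 0 := (hφk e).2.1 hblt
        have h2 := hNterm e hek
        rw [abs_of_neg hφneg] at h2
        have h3 : θ (v e) ≤ |θ (v e)| := le_abs_self _
        have h4 : Nc * φk (v e) + Nc * -(φk (v e)) = 0 := by ring
        linarith
    · intro h
      rw [← he₀] at h
      have hKlt := (hb'lt _ _).mp h
      simp only [LinearMap.add_apply, LinearMap.smul_apply, smul_eq_mul]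
      by_cases hek : b e = k
      · have hrklt : rk e₀ < rk e := by
          have h2 := hKlt
          rw [hK] at h2
          simp only at h2
          rw [if_pos hek, if_pos hbk, hek, hbk] at h2
          omega
        have hvlt : val e₀ < val e := by
          rcases lt_trichotomy (val e₀) (val e) with h1 | h1 | h1
          · exact h1
          · exfalso
            have hee : e₀ = e := hw _ _ hbk hek h1
            rw [hee] at hrklt
            exact lt_irrefl _ hrklt
          · exact absurd hrklt (not_lt.mpr (le_of_lt (hrk5 _ _ hek hbk h1)))
        rw [hφk0 e hek, hθval e]
        have hc0v : c₀ = val e₀ := by simp only [hc₀, hval]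
        have : 0 < val e - c₀ := by rw [hc0v]; linarith
        have := mul_pos (hπ e) this
        linarith
      · have hblt : b e₀ < b e := hgt_blk e (Or.inl hek) hKlt
        have hφpos : 0 < φk (v e) := (hφk e).2.2 hblt
        have h2 := hNterm e hek
        rw [abs_of_pos hφpos] at h2
        have h3 : -θ (v e) ≤ |θ (v e)| := neg_le_abs _
        linarith


end Statement3Aux

open Statement3Aux Matrix in
/-- If every monotone path (cellular string with all blocks singletons,
i.e. with injective block map) of `(v, π)` is coherent, then `(v, π)` is all-coherent. -/
theorem statement3 {E : Type*} [Fintype E] {d : ℕ}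
    (v : E → Fin d → ℝ) (π : (Fin d → ℝ) →ₗ[ℝ] ℝ)
    (hπ : ∀ e, 0 < π (v e))
    (hv : ∀ e, v e ≠ 0)
    (hpar : ∀ e e', e ≠ e' → ∀ c : ℝ, v e' ≠ c • v e)
    (hmono : ∀ (l : ℕ) (b : E → Fin l), Function.Injective b →
      IsCellularString v l b → IsCoherent v π l b) :
    AllCoherent v π := by
  classical
  have hπne : ∀ e, π (v e) ≠ 0 := fun e => ne_of_gt (hπ e)
  set u : E → Fin d → ℝ := fun e => (π (v e))⁻¹ • v e with hu_def
  have hu : ∀ e, v e = (π (v e)) • u e := by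
    intro e
    rw [hu_def]
    simp only
    rw [smul_smul, mul_inv_cancel₀ (hπne e), one_smul]
  have hratio : ∀ (ψ : (Fin d → ℝ) →ₗ[ℝ] ℝ) (e : E), ψ (v e) / π (v e) = ψ (u e) := by
    intro ψ e
    rw [hu_def]
    simp only [_root_.map_smul, smul_eq_mul]
    rw [div_eq_inv_mul]
  have huinj : Function.Injective u := by
    intro e e' h
    by_contra hne
    apply hpar e e' hne (π (v e') * (π (v e))⁻¹)
    calc v e' = π (v e') • u e' := hu e'
      _ = π (v e') • u e := by rw [← h]
      _ = (π (v e') * (π (v e))⁻¹) • v e := by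
          rw [hu_def]
          simp only
          rw [smul_smul]
  -- strong induction on the excess
  have main : ∀ (N l : ℕ) (b : E → Fin l), Fintype.card E - l ≤ N →
      IsCellularString v l b → IsCoherent v π l b := by
    intro N
    induction N with
    | zero =>
      intro l b hle hstr
      have hsurj := hstr.1
      have h1 : l ≤ Fintype.card E := by
        have := Fintype.card_le_of_surjective b hsurj
        simpa using this
      have hcard : Fintype.card E = l := by omega
      exact hmono l b ((Fintype.bijective_iff_surjective_and_card b).mpr
        ⟨hsurj, by simpa using hcard⟩).injective hstr
    | succ N ih =>
      intro l b hle hstr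
      by_cases hinj : Function.Injective b
      · exact hmono l b hinj hstr
      obtain ⟨e₁, e₂, hbeq, h12⟩ := Function.not_injective_iff.mp hinj
      set k := b e₁ with hk
      have hbe₁ : b e₁ = k := hk.symm
      have hbe₂ : b e₂ = k := hbeq.symm
      -- refinement machine
      have href : ∀ w : Fin d → ℝ,
          (∀ e e', b e = k → b e' = k → w ⬝ᵥ u e = w ⬝ᵥ u e' → e = e') →
          ∃ g : Fin d → ℝ,
            (∀ e e', b e = b e' → b e ≠ k → g ⬝ᵥ u e = g ⬝ᵥ u e') ∧
            (∀ e e', b e < b e' → g ⬝ᵥ u e < g ⬝ᵥ u e') ∧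
            (∀ e e', b e = k → b e' = k → w ⬝ᵥ u e < w ⬝ᵥ u e' → g ⬝ᵥ u e < g ⬝ᵥ u e') := by
        intro w hw
        obtain ⟨l', b', hstr', hll', hP1, hP2, hP3⟩ :=
          refine_lemma v π hπ u hu b hstr k w hw e₁ e₂ h12 hbe₁ hbe₂
        obtain ⟨ψ, hψ⟩ := ih l' b' (by omega) hstr'
        obtain ⟨g, hg⟩ := exists_dot_repr ψ
        have hge : ∀ e, g ⬝ᵥ u e = ψ (v e) / π (v e) := by
          intro e
          rw [hratio ψ e, hg (u e)]
        refine ⟨g, ?_, ?_, ?_⟩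
        · intro e e' h hne
          rw [hge, hge]
          exact (hψ e e').1 (hP1 e e' h hne)
        · intro e e' h
          rw [hge, hge]
          exact (hψ e e').2 (hP2 e e' h)
        · intro e e' he he' hlt
          rw [hge, hge]
          exact (hψ e e').2 (hP3 e e' he he' hlt)
      -- a generic direction
      set DF : Finset (Fin d → ℝ) :=
        (Finset.univ.filter (fun p : E × E => p.1 ≠ p.2)).image (fun p => u p.1 - u p.2) with hDF
      have hDFne : ∀ x ∈ DF, x ≠ 0 := by
        intro x hx
        obtain ⟨p, hp, rfl⟩ := Finset.mem_image.mp hx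
        have hpne := (Finset.mem_filter.mp hp).2
        intro h0
        exact hpne (huinj (sub_eq_zero.mp h0))
      obtain ⟨w₀, hw₀⟩ := exists_dot_ne_zero DF hDFne
      have hwsep : ∀ w' : Fin d → ℝ,
          (∀ e e', e ≠ e' → b e = k → b e' = k → w' ⬝ᵥ (u e - u e') ≠ 0) →
          (∀ e e', b e = k → b e' = k → w' ⬝ᵥ u e = w' ⬝ᵥ u e' → e = e') := by
        intro w' hsep e e' he he' heq
        by_contra hne
        apply hsep e e' hne he he'
        rw [dotProduct_sub, heq, sub_self]
      have hw₀' := hwsep w₀ (fun e e' hne _ _ => hw₀ _ (Finset.mem_image.mpr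
        ⟨(e, e'), Finset.mem_filter.mpr ⟨Finset.mem_univ _, hne⟩, rfl⟩))
      obtain ⟨g₀, hg₀1, hg₀2, hg₀3⟩ := href w₀ hw₀'
      by_contra hnc
      -- the two convex sets
      set Ot : Set (Fin d → ℝ) := {x | ∀ e e', b e < b e' → x ⬝ᵥ u e < x ⬝ᵥ u e'} with hOt
      set V₂ : Set (Fin d → ℝ) := {x | ∀ e e', b e = b e' → x ⬝ᵥ (u e - u e') = 0} with hV₂
      have hOtiInter : Ot = ⋂ (e : E) (e' : E), {x : Fin d → ℝ | b e < b e' → 0 < x ⬝ᵥ (u e' - u e)} := by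
        ext x
        simp only [hOt, Set.mem_setOf_eq, Set.mem_iInter]
        constructor
        · intro h e e' hlt
          rw [dotProduct_sub, sub_pos]
          exact h e e' hlt
        · intro h e e' hlt
          have := h e e' hlt
          rw [dotProduct_sub, sub_pos] at this
          exact this
      have hOtopen : IsOpen Ot := by
        rw [hOtiInter]
        refine isOpen_iInter_of_finite fun e => isOpen_iInter_of_finite fun e' => ?_
        by_cases h : b e < b e'
        · have heq : {x : Fin d → ℝ | b e < b e' → 0 < x ⬝ᵥ (u e' - u e)}
              = (fun x : Fin d → ℝ => x ⬝ᵥ (u e' - u e)) ⁻¹' Set.Ioi 0 := by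
            ext x; simp [h]
          rw [heq]
          exact (continuous_dot (u e' - u e)).isOpen_preimage _ isOpen_Ioi
        · have heq : {x : Fin d → ℝ | b e < b e' → 0 < x ⬝ᵥ (u e' - u e)} = Set.univ := by
            ext x; simp [h]
          rw [heq]; exact isOpen_univ
      have hOtconv : Convex ℝ Ot := by
        rw [hOtiInter]
        refine convex_iInter fun e => convex_iInter fun e' => ?_
        by_cases h : b e < b e'
        · have heq : {x : Fin d → ℝ | b e < b e' → 0 < x ⬝ᵥ (u e' - u e)}
              = {x : Fin d → ℝ | 0 < x ⬝ᵥ (u e' - u e)} := by ext x; simp [h]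
          rw [heq]
          exact convex_halfSpace_gt (islin_dot _) 0
        · have heq : {x : Fin d → ℝ | b e < b e' → 0 < x ⬝ᵥ (u e' - u e)} = Set.univ := by
            ext x; simp [h]
          rw [heq]; exact convex_univ
      have hV₂conv : Convex ℝ V₂ := by
        have hV₂iInter : V₂ = ⋂ (e : E) (e' : E), {x : Fin d → ℝ | b e = b e' → x ⬝ᵥ (u e - u e') = 0} := by
          ext x
          simp only [hV₂, Set.mem_setOf_eq, Set.mem_iInter]
        rw [hV₂iInter]
        refine convex_iInter fun e => convex_iInter fun e' => ?_
        by_cases h : b e = b e'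
        · have heq : {x : Fin d → ℝ | b e = b e' → x ⬝ᵥ (u e - u e') = 0}
              = {x : Fin d → ℝ | x ⬝ᵥ (u e - u e') = 0} := by ext x; simp [h]
          rw [heq]
          exact convex_hyperplane (islin_dot _) 0
        · have heq : {x : Fin d → ℝ | b e = b e' → x ⬝ᵥ (u e - u e') = 0} = Set.univ := by
            ext x; simp [h]
          rw [heq]; exact convex_univ
      have hg₀Ot : g₀ ∈ Ot := by
        simp only [hOt, Set.mem_setOf_eq]
        exact hg₀2
      have hdisj : Disjoint Ot V₂ := by
        rw [Set.disjoint_left]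
        intro x hxO hxV
        simp only [hOt, Set.mem_setOf_eq] at hxO
        simp only [hV₂, Set.mem_setOf_eq] at hxV
        apply hnc
        refine ⟨dotL x, fun e e' => ⟨?_, ?_⟩⟩
        · intro h
          rw [hratio, hratio]
          simp only [dotL_apply]
          have := hxV e e' h
          rw [dotProduct_sub] at this
          linarith
        · intro h
          rw [hratio, hratio]
          simp only [dotL_apply]
          exact hxO e e' h
      obtain ⟨f, u₀, hfO, hfV⟩ := geometric_hahn_banach_open hOtconv hOtopen hV₂conv hdisj
      have hfV0 : ∀ x ∈ V₂, f x = 0 := by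
        intro x hx
        simp only [hV₂, Set.mem_setOf_eq] at hx
        by_contra hne
        have hmemV : (((u₀ - 1) / f x) • x) ∈ V₂ := by
          simp only [hV₂, Set.mem_setOf_eq]
          intro e e' h
          rw [smul_dotProduct, hx e e' h, smul_zero]
        have := hfV _ hmemV
        rw [_root_.map_smul, smul_eq_mul, div_mul_cancel₀ _ hne] at this
        linarith
      have h0V : (0 : Fin d → ℝ) ∈ V₂ := by
        simp only [hV₂, Set.mem_setOf_eq]
        intro e e' h
        rw [zero_dotProduct]
      have hu₀0 : u₀ ≤ 0 := by
        have := hfV 0 h0V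
        rw [map_zero] at this
        linarith
      have hfneg : ∀ x ∈ Ot, f x < 0 := fun x hx => lt_of_lt_of_le (hfO x hx) hu₀0
      obtain ⟨c, hc⟩ := exists_dot_repr (f.toLinearMap : (Fin d → ℝ) →ₗ[ℝ] ℝ)
      have hc' : ∀ x, f x = c ⬝ᵥ x := fun x => hc x
      set SK : Set (Fin d → ℝ) := {x | ∃ e e', b e = k ∧ b e' = k ∧ x = u e - u e'} with hSK
      set SR : Set (Fin d → ℝ) := {x | ∃ e e', b e = b e' ∧ b e ≠ k ∧ x = u e - u e'} with hSR
      have hcspan : c ∈ Submodule.span ℝ (SK ∪ SR) := by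
        apply dot_orth_span
        intro x hx
        have hxV : x ∈ V₂ := by
          simp only [hV₂, Set.mem_setOf_eq]
          intro e e' h
          by_cases hek : b e = k
          · exact hx _ (Or.inl ⟨e, e', hek, by rw [← h]; exact hek, rfl⟩)
          · exact hx _ (Or.inr ⟨e, e', h, hek, rfl⟩)
        rw [dotProduct_comm, ← hc' x]
        exact hfV0 x hxV
      rw [Submodule.span_union, Submodule.mem_sup] at hcspan
      obtain ⟨z, hz, z₀, hz₀, hczz⟩ := hcspan
      have hperp : ∀ x : Fin d → ℝ,
          (∀ e e', b e = b e' → b e ≠ k → x ⬝ᵥ u e = x ⬝ᵥ u e') → x ⬝ᵥ z₀ = 0 := by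
        intro x hxeq
        have hle2 : Submodule.span ℝ SR ≤ LinearMap.ker (dotL x) := by
          rw [Submodule.span_le]
          rintro y ⟨e, e', heq, hek, rfl⟩
          rw [SetLike.mem_coe, LinearMap.mem_ker, dotL_apply, dotProduct_sub,
            hxeq e e' heq hek, sub_self]
        have := hle2 hz₀
        rw [LinearMap.mem_ker, dotL_apply] at this
        exact this
      set δ : E × E → (Fin d → ℝ) :=
        fun p => if b p.1 = k ∧ b p.2 = k then u p.1 - u p.2 else 0 with hδ
      have hzrep : ∃ t : E × E → ℝ, (∀ p, 0 ≤ t p) ∧ ∑ p : E × E, t p • δ p = z := by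
        set Λ : (E × E → ℝ) →ₗ[ℝ] (Fin d → ℝ) :=
          { toFun := fun t => ∑ p : E × E, t p • δ p
            map_add' := by
              intro a b'
              simp [add_smul, Finset.sum_add_distrib]
            map_smul' := by
              intro r a
              simp [Finset.smul_sum, smul_smul] } with hΛ
        have hzran : z ∈ LinearMap.range Λ := by
          have hsp : Submodule.span ℝ SK ≤ LinearMap.range Λ := by
            rw [Submodule.span_le]
            rintro y ⟨e, e', he, he', rfl⟩
            rw [SetLike.mem_coe, LinearMap.mem_range]
            refine ⟨Pi.single (e, e') 1, ?_⟩
            rw [hΛ]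
            simp only [LinearMap.coe_mk, AddHom.coe_mk]
            rw [Finset.sum_eq_single (e, e')]
            · rw [Pi.single_eq_same, one_smul, hδ]
              simp only [if_pos (And.intro he he')]
            · intro q _ hq
              rw [Pi.single_eq_of_ne hq, zero_smul]
            · intro hq
              exact absurd (Finset.mem_univ _) hq
          exact hsp hz
        obtain ⟨t₀, ht₀⟩ := hzran
        rw [hΛ] at ht₀
        simp only [LinearMap.coe_mk, AddHom.coe_mk] at ht₀
        refine ⟨fun p => max (t₀ p) 0 + max (-(t₀ p.swap)) 0, fun p => by positivity, ?_⟩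
        have hδswap : ∀ p : E × E, δ p.swap = -δ p := by
          intro p
          rw [hδ]
          simp only [Prod.fst_swap, Prod.snd_swap]
          by_cases hp : b p.1 = k ∧ b p.2 = k
          · rw [if_pos (And.intro hp.2 hp.1), if_pos hp, neg_sub]
          · rw [if_neg (fun h => hp (And.intro h.2 h.1)), if_neg hp, neg_zero]
        have hsplit : ∀ p : E × E, (max (t₀ p) 0 + max (-(t₀ p.swap)) 0) • δ p
            = max (t₀ p) 0 • δ p + max (-(t₀ p.swap)) 0 • δ p := fun p => add_smul _ _ _
        rw [Finset.sum_congr rfl (fun p _ => hsplit p), Finset.sum_add_distrib]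
        have hre : ∑ p : E × E, max (-(t₀ p.swap)) 0 • δ p
            = ∑ p : E × E, max (-(t₀ p)) 0 • (-δ p) := by
          apply Fintype.sum_equiv (Equiv.prodComm E E)
          intro p
          show max (-(t₀ p.swap)) 0 • δ p = max (-(t₀ p.swap)) 0 • (-δ p.swap)
          rw [hδswap p, neg_neg]
        rw [hre, ← Finset.sum_add_distrib]
        have hcomb : ∀ p : E × E, max (t₀ p) 0 • δ p + max (-(t₀ p)) 0 • (-δ p) = t₀ p • δ p := by
          intro p
          rw [smul_neg, ← sub_eq_add_neg, ← sub_smul, max_zero_sub_max_neg_zero_eq_self]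
        rw [Finset.sum_congr rfl (fun p _ => hcomb p)]
        exact ht₀
      have hEx : ∃ n, ∃ t : E × E → ℝ, (∀ p, 0 ≤ t p) ∧ (∑ p : E × E, t p • δ p = z) ∧
          (Finset.univ.filter (fun p => t p ≠ 0)).card = n := by
        obtain ⟨t, h1, h2⟩ := hzrep
        exact ⟨_, t, h1, h2, rfl⟩
      obtain ⟨t, ht0, htz, htcard⟩ := Nat.find_spec hEx
      set supt : Finset (E × E) := Finset.univ.filter (fun p => t p ≠ 0) with hsupt
      by_cases hz0 : z = 0
      · have h2 : g₀ ⬝ᵥ z₀ = 0 := hperp g₀ hg₀1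
        have h1 : f g₀ = g₀ ⬝ᵥ z + g₀ ⬝ᵥ z₀ := by
          rw [hc' g₀, ← hczz, dotProduct_comm]
          exact dotProduct_add g₀ z z₀
        have h3 := hfneg g₀ hg₀Ot
        rw [h1, hz0, dotProduct_zero, h2] at h3
        linarith
      · have hsupne : supt.Nonempty := by
          by_contra hempty
          rw [Finset.not_nonempty_iff_eq_empty] at hempty
          apply hz0
          rw [← htz]
          apply Finset.sum_eq_zero
          intro p hp
          have htp : t p = 0 := by
            by_contra hne
            have : p ∈ supt := by
              rw [hsupt]
              simp [hne]
            rw [hempty] at this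
            exact absurd this (Finset.notMem_empty p)
          rw [htp, zero_smul]
        have hind : ∀ s : {p // p ∈ supt} → ℝ, (∀ i, 0 ≤ s i) →
            ∑ i, s i • δ i.val = 0 → ∀ i, s i = 0 := by
          intro s hs0 hssum
          by_contra hcon
          push_neg at hcon
          obtain ⟨i₀, hi₀⟩ := hcon
          set sbar : E × E → ℝ := fun p => if hp : p ∈ supt then s ⟨p, hp⟩ else 0 with hsbar
          have hsbar_sum : ∑ p : E × E, sbar p • δ p = 0 := by
            have h1 : ∑ p : E × E, sbar p • δ p = ∑ p ∈ supt, sbar p • δ p := by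
              refine (Finset.sum_subset (Finset.subset_univ supt) ?_).symm
              intro p _ hp
              rw [hsbar]
              simp only [dif_neg hp, zero_smul]
            have h2 : ∑ p ∈ supt, sbar p • δ p = ∑ i : {p // p ∈ supt}, sbar i.val • δ i.val :=
              (Finset.sum_coe_sort supt _).symm
            have h3 : ∀ i : {p // p ∈ supt}, sbar i.val • δ i.val = s i • δ i.val := by
              intro i
              rw [hsbar]
              simp only [dif_pos i.2, Subtype.coe_eta]
            rw [h1, h2, Finset.sum_congr rfl (fun i _ => h3 i)]
            exact hssum
          set B : Finset {p // p ∈ supt} := Finset.univ.filter (fun i => 0 < s i) with hB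
          have hBne : B.Nonempty := by
            refine ⟨i₀, ?_⟩
            rw [hB]
            simp only [Finset.mem_filter, Finset.mem_univ, true_and]
            exact lt_of_le_of_ne (hs0 i₀) (Ne.symm hi₀)
          obtain ⟨i₁, hi₁B, hi₁min⟩ := Finset.exists_min_image B (fun i => t i.val / s i) hBne
          have hsi₁ : 0 < s i₁ := by
            rw [hB] at hi₁B
            exact (Finset.mem_filter.mp hi₁B).2
          have hti₁ : 0 < t i₁.val := by
            have h1 : t i₁.val ≠ 0 := (Finset.mem_filter.mp i₁.2).2
            exact lt_of_le_of_ne (ht0 _) (Ne.symm h1)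
          set r : ℝ := t i₁.val / s i₁ with hr
          have hr0 : 0 < r := div_pos hti₁ hsi₁
          set t' : E × E → ℝ := fun p => t p - r * sbar p with ht'
          have ht'0 : ∀ p, 0 ≤ t' p := by
            intro p
            rw [ht']
            simp only
            by_cases hp : p ∈ supt
            · rw [hsbar]
              simp only [dif_pos hp]
              rcases (lt_or_eq_of_le (hs0 ⟨p, hp⟩)) with hlt | heq
              · have h1 : r ≤ t p / s ⟨p, hp⟩ := by
                  refine hi₁min ⟨p, hp⟩ ?_
                  rw [hB]
                  simp only [Finset.mem_filter, Finset.mem_univ, true_and]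
                  exact hlt
                have h2 := (le_div_iff₀ hlt).mp h1
                linarith
              · rw [← heq, mul_zero]
                linarith [ht0 p]
            · rw [hsbar]
              simp only [dif_neg hp, mul_zero]
              linarith [ht0 p]
          have ht'z : ∑ p : E × E, t' p • δ p = z := by
            have h1 : ∀ p : E × E, t' p • δ p = t p • δ p - r • (sbar p • δ p) := by
              intro p
              rw [ht']
              simp only
              rw [sub_smul, smul_smul]
            rw [Finset.sum_congr rfl (fun p _ => h1 p), Finset.sum_sub_distrib,
              ← Finset.smul_sum, hsbar_sum, smul_zero, sub_zero]
            exact htz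
          have hsub : (Finset.univ.filter (fun p => t' p ≠ 0)) ⊆ supt.erase i₁.val := by
            intro p hp
            have hpne : t' p ≠ 0 := (Finset.mem_filter.mp hp).2
            have hpsup : p ∈ supt := by
              by_contra hns
              apply hpne
              rw [ht']
              simp only
              rw [hsbar]
              simp only [dif_neg hns, mul_zero, sub_zero]
              by_contra htp
              exact hns (by rw [hsupt]; simp [htp])
            refine Finset.mem_erase.mpr ⟨?_, hpsup⟩
            intro hpi
            apply hpne
            subst hpi
            rw [ht']
            simp only
            rw [hsbar]
            simp only [dif_pos i₁.2, Subtype.coe_eta]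
            rw [hr, div_mul_cancel₀ _ (ne_of_gt hsi₁), sub_self]
          have hltc : (Finset.univ.filter (fun p => t' p ≠ 0)).card < supt.card := by
            calc _ ≤ (supt.erase i₁.val).card := Finset.card_le_card hsub
              _ < supt.card := Finset.card_erase_lt_of_mem i₁.2
          have hmin := Nat.find_min' hEx ⟨t', ht'0, ht'z, rfl⟩
          omega
        obtain ⟨w₁, hw₁⟩ := gordan (fun i : {p // p ∈ supt} => δ i.val) hind
        have hsupk : ∀ p ∈ supt, b p.1 = k ∧ b p.2 = k := by
          intro p hp
          by_contra hcon
          have hδ0 : δ p = 0 := by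
            rw [hδ]
            simp only [if_neg hcon]
          have h2 := hw₁ ⟨p, hp⟩
          simp only [hδ0, dotProduct_zero] at h2
          exact lt_irrefl _ h2
        set bad : Set ℝ := (fun p : E × E => -(w₁ ⬝ᵥ (u p.1 - u p.2)) / (w₀ ⬝ᵥ (u p.1 - u p.2))) ''
          Set.univ with hbad
        have hbadfin : bad.Finite := Set.Finite.image _ (Set.toFinite _)
        set bnd : Finset ℝ := supt.image (fun p => (w₁ ⬝ᵥ δ p) / (|w₀ ⬝ᵥ δ p| + 1)) with hbnd
        have hbndne : bnd.Nonempty := hsupne.image _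
        set δm : ℝ := bnd.min' hbndne with hδm
        have hδmpos : 0 < δm := by
          rw [hδm, Finset.lt_min'_iff]
          intro y hy
          obtain ⟨p, hp, rfl⟩ := Finset.mem_image.mp hy
          exact div_pos (hw₁ ⟨p, hp⟩) (by positivity)
        obtain ⟨ε, hε0, hεδ, hεbad⟩ := exists_eps bad hbadfin δm hδmpos
        set w' : Fin d → ℝ := w₁ + ε • w₀ with hw'
        have hw'pos : ∀ p ∈ supt, 0 < w' ⬝ᵥ δ p := by
          intro p hp
          rw [hw', add_dotProduct, smul_dotProduct, smul_eq_mul]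
          have h1 : δm ≤ (w₁ ⬝ᵥ δ p) / (|w₀ ⬝ᵥ δ p| + 1) :=
            Finset.min'_le _ _ (Finset.mem_image_of_mem _ hp)
          have h3 : (0:ℝ) < |w₀ ⬝ᵥ δ p| + 1 := by positivity
          have h4 : ε < (w₁ ⬝ᵥ δ p) / (|w₀ ⬝ᵥ δ p| + 1) := lt_of_lt_of_le hεδ h1
          have h2 : ε * (|w₀ ⬝ᵥ δ p| + 1) < w₁ ⬝ᵥ δ p := (lt_div_iff₀ h3).mp h4
          have h5 : -(ε * (w₀ ⬝ᵥ δ p)) ≤ ε * |w₀ ⬝ᵥ δ p| := by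
            rw [← mul_neg]
            exact mul_le_mul_of_nonneg_left (neg_le_abs _) hε0.le
          have h6 : ε * (|w₀ ⬝ᵥ δ p| + 1) = ε * |w₀ ⬝ᵥ δ p| + ε := by ring
          linarith
        have hw'sep : ∀ e e', b e = k → b e' = k → w' ⬝ᵥ u e = w' ⬝ᵥ u e' → e = e' := by
          apply hwsep
          intro e e' hne he he' h0
          apply hεbad
          have hw₀ne : w₀ ⬝ᵥ (u e - u e') ≠ 0 := hw₀ _ (Finset.mem_image.mpr
            ⟨(e, e'), Finset.mem_filter.mpr ⟨Finset.mem_univ _, hne⟩, rfl⟩)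
          have hεeq : ε = -(w₁ ⬝ᵥ (u e - u e')) / (w₀ ⬝ᵥ (u e - u e')) := by
            rw [hw', add_dotProduct, smul_dotProduct, smul_eq_mul] at h0
            rw [eq_div_iff hw₀ne]
            linarith
          rw [hbad]
          exact ⟨(e, e'), Set.mem_univ _, hεeq.symm⟩
        obtain ⟨g', hg'1, hg'2, hg'3⟩ := href w' hw'sep
        have hOt' : g' ∈ Ot := by
          simp only [hOt, Set.mem_setOf_eq]
          exact hg'2
        have hzpos : 0 ≤ g' ⬝ᵥ z := by
          rw [← htz]
          have hsum : g' ⬝ᵥ (∑ p : E × E, t p • δ p) = ∑ p : E × E, t p * (g' ⬝ᵥ δ p) := by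
            rw [← dotL_apply, map_sum]
            refine Finset.sum_congr rfl fun p _ => ?_
            rw [_root_.map_smul, dotL_apply, smul_eq_mul]
          rw [hsum]
          apply Finset.sum_nonneg
          intro p _
          by_cases hp : p ∈ supt
          · have hkk := hsupk p hp
            have hw'p := hw'pos p hp
            have hδp : δ p = u p.1 - u p.2 := by
              rw [hδ]
              simp only [if_pos hkk]
            rw [hδp, dotProduct_sub, sub_pos] at hw'p
            have hgg := hg'3 p.2 p.1 hkk.2 hkk.1 hw'p
            have hgpos : 0 < g' ⬝ᵥ δ p := by
              rw [hδp, dotProduct_sub]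
              linarith
            exact mul_nonneg (ht0 p) hgpos.le
          · have htp : t p = 0 := by
              by_contra hne
              exact hp (by rw [hsupt]; simp [hne])
            rw [htp, zero_mul]
        have hz₀0 : g' ⬝ᵥ z₀ = 0 := hperp g' hg'1
        have hfg' : f g' = g' ⬝ᵥ z + g' ⬝ᵥ z₀ := by
          rw [hc' g', ← hczz, dotProduct_comm]
          exact dotProduct_add g' z z₀
        have hneg := hfneg g' hOt'
        rw [hfg', hz₀0] at hneg
        linarith
  intro l b hstr
  exact main (Fintype.card E - l) l b le_rfl hstr
end

section
/- Let (v, π) be a configuration with v e ≠ 0 for every e ∈ E and no two of the vectors v e, v e' (e ≠ e') parallel, and let m ≥ 1. Define an extended configuration on the index set E ⊔ {1, …, m}: in ℝ^{d+m} = ℝ^d × ℝ^m, set ṽ e = (v e, 0) for e ∈ E and ṽ k = (0, u_k) for k ∈ {1, …, m}, where u_1, …, u_m is the standard basis of ℝ^m; and set π̃(x, t) = π(x) + c_1 t_1 + ⋯ + c_m t_m for fixed constants c_1, …, c_m > 0. Then (v, π) is all-coherent if and only if (ṽ, π̃) is all-coherent. -/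
open Finset

section Aux

lemma filter_range_lt {N k : ℕ} (hk : k ≤ N) :
    (Finset.range N).filter (fun i => i < k) = Finset.range k := by
  ext i; simp only [Finset.mem_filter, Finset.mem_range]; omega

lemma exists_strictMono_extension {n l : ℕ} (g : Fin n → Fin l) (hg : StrictMono g)
    (r : Fin n → ℝ) (hr : StrictMono r) :
    ∃ t : Fin l → ℝ, StrictMono t ∧ ∀ i, t (g i) = r i := by
  rcases n with _ | N
  · exact ⟨fun j => (j : ℕ), fun a b hab => Nat.cast_lt.mpr hab, fun i => i.elim0⟩
  have hl : 0 < l := (g 0).pos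
  set G : ℕ → ℕ := fun i => (g ⟨min i N, by omega⟩ : ℕ) with hGdef
  set R : ℕ → ℝ := fun i => r ⟨min i N, by omega⟩ with hRdef
  have keyle : ∀ a b : ℕ, a ≤ N → b ≤ N → (G a ≤ G b ↔ a ≤ b) := by
    intro a b ha hb
    show (g _ : ℕ) ≤ (g _ : ℕ) ↔ _
    rw [← Fin.le_def, hg.le_iff_le, Fin.mk_le_mk, min_eq_left ha, min_eq_left hb]
  have hRlt : ∀ i, i < N → R i < R (i + 1) := by
    intro i hi
    apply hr
    rw [Fin.mk_lt_mk]
    omega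
  set δ : ℝ := (insert (1:ℝ) ((Finset.range N).image fun i => R (i+1) - R i)).min'
      (Finset.insert_nonempty _ _) with hδdef
  have hδpos : 0 < δ := by
    rw [hδdef, Finset.lt_min'_iff]
    intro x hx
    simp only [Finset.mem_insert, Finset.mem_image, Finset.mem_range] at hx
    rcases hx with rfl | ⟨i, hi, rfl⟩
    · norm_num
    · linarith [hRlt i hi]
  have hδle : ∀ i, i < N → δ ≤ R (i+1) - R i := by
    intro i hi
    apply Finset.min'_le
    simp only [Finset.mem_insert, Finset.mem_image, Finset.mem_range]
    exact Or.inr ⟨i, hi, rfl⟩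
  set ε : ℝ := δ / (l + 1) with hεdef
  have hε : 0 < ε := by positivity
  set D : ℕ → ℝ := fun i => (R (i+1) - R i) - ε * ((G (i+1) : ℝ) - (G i : ℝ)) with hDdef
  have hD : ∀ i, i < N → 0 ≤ D i := by
    intro i hi
    have h1 : (G (i+1) : ℝ) - (G i : ℝ) ≤ (l : ℝ) + 1 := by
      have h2 : G (i+1) < l := (g _).isLt
      have h3 : (0:ℝ) ≤ (G i : ℝ) := Nat.cast_nonneg _
      have : (G (i+1) : ℝ) < l := by exact_mod_cast h2
      linarith
    have h4 : ε * ((G (i+1) : ℝ) - (G i : ℝ)) ≤ ε * ((l:ℝ) + 1) := by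
      apply mul_le_mul_of_nonneg_left h1 hε.le
    have h5 : ε * ((l:ℝ)+1) = δ := by
      rw [hεdef]; field_simp
    have := hδle i hi
    simp only [hDdef]
    linarith
  set t : Fin l → ℝ := fun j => R 0 + ε * ((j:ℝ) - (G 0 : ℝ)) +
      ∑ i ∈ Finset.range N, (if G (i+1) ≤ (j:ℕ) then D i else 0) with htdef
  refine ⟨t, ?_, ?_⟩
  · intro a b hab
    have habn : (a : ℕ) < (b : ℕ) := hab
    have hsum : (∑ i ∈ Finset.range N, (if G (i+1) ≤ (a:ℕ) then D i else 0)) ≤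
        ∑ i ∈ Finset.range N, (if G (i+1) ≤ (b:ℕ) then D i else 0) := by
      apply Finset.sum_le_sum
      intro i hi
      by_cases h : G (i+1) ≤ (a:ℕ)
      · rw [if_pos h, if_pos (h.trans habn.le)]
      · rw [if_neg h]
        by_cases h' : G (i+1) ≤ (b:ℕ)
        · rw [if_pos h']; exact hD i (Finset.mem_range.1 hi)
        · rw [if_neg h']
    have hlin : ε * ((a:ℝ) - (G 0 : ℝ)) < ε * ((b:ℝ) - (G 0 : ℝ)) := by
      apply mul_lt_mul_of_pos_left _ hε
      have : (a:ℝ) < (b:ℝ) := by exact_mod_cast habn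
      linarith
    simp only [htdef]
    linarith
  · intro i
    have hiN : (i : ℕ) ≤ N := by omega
    have hmk : (⟨min (i:ℕ) N, by omega⟩ : Fin (N+1)) = i := by
      apply Fin.ext; simp [min_eq_left hiN]
    have hgi : ((g i : Fin l) : ℕ) = G (i : ℕ) := by
      show _ = (g _ : ℕ)
      rw [hmk]
    have hri : R (i:ℕ) = r i := by
      show r _ = r i
      rw [hmk]
    have hcond : ∀ i' : ℕ, i' < N → ((if G (i'+1) ≤ G (i:ℕ) then D i' else 0)
        = if i' < (i:ℕ) then D i' else 0) := by
      intro i' hi'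
      have : G (i'+1) ≤ G (i:ℕ) ↔ i' + 1 ≤ (i:ℕ) := keyle _ _ (by omega) hiN
      simp only [this]
      congr 1
    have hsum1 : (∑ i' ∈ Finset.range N, (if G (i'+1) ≤ G (i:ℕ) then D i' else 0)) =
        ∑ i' ∈ Finset.range ((i:ℕ)), D i' := by
      rw [Finset.sum_congr rfl (fun i' hi' => hcond i' (Finset.mem_range.1 hi')),
        ← Finset.sum_filter, filter_range_lt hiN]
    have htel : ∑ i' ∈ Finset.range ((i:ℕ)), D i' =
        (R (i:ℕ) - R 0) - ε * ((G (i:ℕ) : ℝ) - (G 0 : ℝ)) := by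
      have h1 : ∑ i' ∈ Finset.range ((i:ℕ)), (R (i'+1) - R i') = R (i:ℕ) - R 0 :=
        Finset.sum_range_sub R _
      have h2 : ∑ i' ∈ Finset.range ((i:ℕ)), ((G (i'+1) : ℝ) - (G i' : ℝ)) =
          (G (i:ℕ) : ℝ) - (G 0 : ℝ) := Finset.sum_range_sub (fun i' => (G i' : ℝ)) _
      simp only [hDdef]
      rw [Finset.sum_sub_distrib, h1, ← Finset.mul_sum, h2]
    simp only [htdef, hgi, hsum1, htel]
    rw [← hri]
    ring

end Aux

/-- Adding `m` coloops (an `m`-cube factor) to a configuration preserves and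
reflects all-coherence.  Here `ℝ^{d+m}` is identified with `ℝ^d × ℝ^m`, the new vectors are
the standard basis vectors of the `ℝ^m` factor, and `π̃(x, t) = π(x) + ∑ c_k t_k` with
`c_k > 0`. -/
theorem statement6 {E : Type*} [Fintype E] {d m : ℕ} (hm : 1 ≤ m)
    (v : E → Fin d → ℝ) (π : (Fin d → ℝ) →ₗ[ℝ] ℝ)
    (hπ : ∀ e, 0 < π (v e))
    (hv : ∀ e, v e ≠ 0)
    (hpar : ∀ e e', e ≠ e' → ∀ c : ℝ, v e' ≠ c • v e)
    (c : Fin m → ℝ) (hc : ∀ k, 0 < c k)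
    (w : E ⊕ Fin m → (Fin d → ℝ) × (Fin m → ℝ))
    (hw1 : ∀ e, w (Sum.inl e) = (v e, 0))
    (hw2 : ∀ k, w (Sum.inr k) = (0, Pi.single k 1))
    (π' : ((Fin d → ℝ) × (Fin m → ℝ)) →ₗ[ℝ] ℝ)
    (hπ' : ∀ (x : Fin d → ℝ) (t : Fin m → ℝ), π' (x, t) = π x + ∑ k, c k * t k) :
    AllCoherent v π ↔ AllCoherent w π' := by
  classical
  constructor
  · -- forward
    intro AC l b' hcs
    set S : Finset (Fin l) := Finset.image (fun e => b' (Sum.inl e)) Finset.univ with hS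
    set n : ℕ := S.card with hn
    set emb := S.orderIsoOfFin rfl with hemb
    set g : Fin n → Fin l := fun i => (emb i : Fin l) with hgdef
    have hgmono : StrictMono g := fun a b hab => Subtype.coe_lt_coe.mpr (emb.strictMono hab)
    have hmemS : ∀ e, b' (Sum.inl e) ∈ S := fun e => Finset.mem_image_of_mem _ (Finset.mem_univ e)
    set b : E → Fin n := fun e => emb.symm ⟨b' (Sum.inl e), hmemS e⟩ with hbdef
    have hgb : ∀ e, g (b e) = b' (Sum.inl e) := by
      intro e
      simp only [hgdef, hbdef, OrderIso.apply_symm_apply]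
    have hbsurj : Function.Surjective b := by
      intro i
      have : (emb i : Fin l) ∈ S := (emb i).2
      obtain ⟨e, _, he⟩ := Finset.mem_image.1 this
      refine ⟨e, ?_⟩
      have : (⟨b' (Sum.inl e), hmemS e⟩ : {x // x ∈ S}) = emb i := Subtype.ext he
      rw [hbdef]
      simp only [this, OrderIso.symm_apply_apply]
    have hbcell : IsCellularString v n b := by
      refine ⟨hbsurj, fun i => ?_⟩
      obtain ⟨φ', hφ'⟩ := hcs.2 (g i)
      refine ⟨φ'.comp (LinearMap.inl ℝ (Fin d → ℝ) (Fin m → ℝ)), fun e => ?_⟩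
      have hev : φ'.comp (LinearMap.inl ℝ (Fin d → ℝ) (Fin m → ℝ)) (v e)
          = φ' (w (Sum.inl e)) := by
        rw [hw1]; rfl
      refine ⟨fun h => ?_, fun h => ?_, fun h => ?_⟩
      · rw [hev]; exact (hφ' (Sum.inl e)).1 (by rw [← hgb e, h])
      · rw [hev]; exact (hφ' (Sum.inl e)).2.1 (by rw [← hgb e]; exact hgmono h)
      · rw [hev]; exact (hφ' (Sum.inl e)).2.2 (by rw [← hgb e]; exact hgmono h)
    obtain ⟨ψ, hψ⟩ := AC n b hbcell
    set rep : Fin n → E := Function.surjInv hbsurj with hrepdef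
    have hrep : ∀ i, b (rep i) = i := fun i => Function.surjInv_eq hbsurj i
    set r : Fin n → ℝ := fun i => ψ (v (rep i)) / π (v (rep i)) with hrdef
    have hrmono : StrictMono r := fun a b hab =>
      (hψ (rep a) (rep b)).2 (by rw [hrep, hrep]; exact hab)
    have hratio : ∀ e, ψ (v e) / π (v e) = r (b e) := fun e =>
      (hψ e (rep (b e))).1 (by rw [hrep])
    obtain ⟨t, htm, hte⟩ := exists_strictMono_extension g hgmono r hrmono
    set coeff : Fin m → ℝ := fun k => c k * t (b' (Sum.inr k)) with hcoeff
    set ψ' : ((Fin d → ℝ) × (Fin m → ℝ)) →ₗ[ℝ] ℝ :=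
      ψ.comp (LinearMap.fst ℝ _ _) +
        (∑ k, coeff k • LinearMap.proj k).comp (LinearMap.snd ℝ _ _) with hψ'def
    have hψ'app : ∀ (x : Fin d → ℝ) (s : Fin m → ℝ),
        ψ' (x, s) = ψ x + ∑ k, coeff k * s k := by
      intro x s
      simp [hψ'def, LinearMap.sum_apply, LinearMap.smul_apply, LinearMap.proj_apply,
        smul_eq_mul]
    have hkey : ∀ x : E ⊕ Fin m, ψ' (w x) / π' (w x) = t (b' x) := by
      intro x
      cases x with
      | inl e =>
        rw [hw1]
        have h1 : ψ' (v e, 0) = ψ (v e) := by rw [hψ'app]; simp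
        have h2 : π' (v e, 0) = π (v e) := by rw [hπ']; simp
        rw [h1, h2, hratio, ← hte (b e), hgb]
      | inr k =>
        rw [hw2]
        have h1 : ψ' (0, Pi.single k 1) = coeff k := by
          rw [hψ'app]
          simp [Pi.single_apply, mul_ite]
        have h2 : π' (0, Pi.single k 1) = c k := by
          rw [hπ']
          simp [Pi.single_apply, mul_ite]
        rw [h1, h2, hcoeff]
        exact mul_div_cancel_left₀ _ (ne_of_gt (hc k))
    exact ⟨ψ', fun x x' =>
      ⟨fun h => by rw [hkey, hkey, h], fun h => by rw [hkey, hkey]; exact htm h⟩⟩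
  · -- backward
    intro AC' l b hcs
    set b' : E ⊕ Fin m → Fin (l+1) :=
      Sum.elim (fun e => (b e).succ) (fun _ => 0) with hb'def
    have hb'surj : Function.Surjective b' := by
      intro i
      induction i using Fin.cases with
      | zero => exact ⟨Sum.inr ⟨0, hm⟩, rfl⟩
      | succ j =>
        obtain ⟨e, he⟩ := hcs.1 j
        exact ⟨Sum.inl e, by simp [hb'def, he]⟩
    have hcell' : IsCellularString w (l+1) b' := by
      refine ⟨hb'surj, fun i => ?_⟩
      induction i using Fin.cases with
      | zero =>
        refine ⟨π.comp (LinearMap.fst ℝ _ _), fun x => ?_⟩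
        cases x with
        | inl e =>
          refine ⟨fun h => absurd h (Fin.succ_ne_zero _),
            fun h => absurd h (Fin.not_lt_zero _), fun _ => ?_⟩
          rw [hw1]
          simpa using hπ e
        | inr k =>
          refine ⟨fun _ => ?_, fun h => absurd h (Fin.not_lt_zero _),
            fun h => absurd h (lt_irrefl _)⟩
          rw [hw2]; simp
      | succ j =>
        obtain ⟨φ, hφ⟩ := hcs.2 j
        set Φ : ((Fin d → ℝ) × (Fin m → ℝ)) →ₗ[ℝ] ℝ :=
          φ.comp (LinearMap.fst ℝ _ _) -
            (∑ k, LinearMap.proj k).comp (LinearMap.snd ℝ _ _) with hΦdef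
        have hΦe : ∀ e, Φ (w (Sum.inl e)) = φ (v e) := by
          intro e; rw [hw1]; simp [hΦdef, LinearMap.sum_apply, LinearMap.proj_apply]
        have hΦk : ∀ k, Φ (w (Sum.inr k)) = -1 := by
          intro k; rw [hw2]
          simp [hΦdef, LinearMap.sum_apply, LinearMap.proj_apply, Pi.single_apply]
        refine ⟨Φ, fun x => ?_⟩
        cases x with
        | inl e =>
          refine ⟨fun h => ?_, fun h => ?_, fun h => ?_⟩
          · rw [hΦe]; exact (hφ e).1 (Fin.succ_injective _ h)
          · rw [hΦe]; exact (hφ e).2.1 (Fin.succ_lt_succ_iff.mp h)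
          · rw [hΦe]; exact (hφ e).2.2 (Fin.succ_lt_succ_iff.mp h)
        | inr k =>
          refine ⟨fun h => absurd h.symm (Fin.succ_ne_zero _), fun _ => ?_,
            fun h => absurd h (Fin.not_lt_zero _).elim⟩
          · rw [hΦk]; norm_num
    obtain ⟨ψ', hψ'⟩ := AC' (l+1) b' hcell'
    set ψ : (Fin d → ℝ) →ₗ[ℝ] ℝ := ψ'.comp (LinearMap.inl ℝ _ _) with hψdef
    have hratio : ∀ e, ψ (v e) / π (v e) = ψ' (w (Sum.inl e)) / π' (w (Sum.inl e)) := by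
      intro e
      rw [hw1]
      have h2 : π' (v e, 0) = π (v e) := by rw [hπ']; simp
      rw [h2]
      rfl
    refine ⟨ψ, fun e e' => ⟨fun h => ?_, fun h => ?_⟩⟩
    · rw [hratio, hratio]
      exact (hψ' (Sum.inl e) (Sum.inl e')).1 (by simp [hb'def, h])
    · rw [hratio, hratio]
      exact (hψ' (Sum.inl e) (Sum.inl e')).2
        (by simp only [hb'def, Sum.elim_inl]; exact Fin.succ_lt_succ_iff.mpr h)
end

section
/- For i = 1, 2, let (v_i, π_i) be a configuration on a finite set E_i with vectors in ℝ^{d_i}, having no zero vectors and no two parallel vectors, and suppose each family {v_i(e) : e ∈ E_i} contains a circuit with at least 3 elements, i.e., a subset C ⊆ E_i with |C| ≥ 3 such that {v_i(e) : e ∈ C} is linearly dependent and every proper subset of it is linearly independent. Define the direct sum configuration on E_1 ⊔ E_2 in ℝ^{d_1} × ℝ^{d_2} by v(e) = (v_1(e), 0) for e ∈ E_1 and v(e) = (0, v_2(e)) for e ∈ E_2, with π(x, y) = π_1(x) + π_2(y). Then (v, π) is not all-coherent: it has a cellular string that is not coherent. -/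
open Finset

/-- A linearly independent family admits a functional with arbitrarily prescribed values. -/
lemma exists_dual_functional {ι V : Type*} [Fintype ι] [AddCommGroup V] [Module ℝ V]
    {v : ι → V} (hv : LinearIndependent ℝ v) (r : ι → ℝ) :
    ∃ ψ : V →ₗ[ℝ] ℝ, ∀ i, ψ (v i) = r i := by
  have hinj : LinearMap.ker (Finsupp.linearCombination ℝ v) = ⊥ :=
    LinearMap.ker_eq_bot.2 hv
  obtain ⟨g, hg⟩ := LinearMap.exists_leftInverse_of_injective _ hinj
  refine ⟨(Finsupp.linearCombination ℝ r).comp g, fun i => ?_⟩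
  have h1 : (Finsupp.linearCombination ℝ v) (Finsupp.single i 1) = v i := by
    simp [Finsupp.linearCombination_single]
  have h2 : g (v i) = Finsupp.single i 1 := by
    rw [← h1, ← LinearMap.comp_apply, hg]; simp
  simp [LinearMap.comp_apply, h2, Finsupp.linearCombination_single]

/-- Block map from a key function into a linear order. -/
lemma exists_blockMap {E κ : Type*} [Fintype E] [LinearOrder κ] (K : E → κ) :
    ∃ (l : ℕ) (b : E → Fin l), Function.Surjective b ∧
      (∀ e e', b e = b e' ↔ K e = K e') ∧ (∀ e e', b e < b e' ↔ K e < K e') := by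
  classical
  set T : Finset κ := Finset.image K Finset.univ with hT
  have hmem : ∀ e, K e ∈ T := fun e => Finset.mem_image_of_mem _ (Finset.mem_univ e)
  set oi := T.orderIsoOfFin rfl with hoi
  refine ⟨T.card, fun e => oi.symm ⟨K e, hmem e⟩, ?_, ?_, ?_⟩
  · intro i
    have hmem2 : (oi i : κ) ∈ T := (oi i).2
    obtain ⟨e, -, he⟩ := Finset.mem_image.1 hmem2
    refine ⟨e, ?_⟩
    show oi.symm ⟨K e, hmem e⟩ = i
    have h3 : (⟨K e, hmem e⟩ : {x // x ∈ T}) = oi i := Subtype.ext he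
    rw [h3]; simp
  · intro e e'
    constructor
    · intro h
      have h2 : (⟨K e, hmem e⟩ : {x // x ∈ T}) = ⟨K e', hmem e'⟩ := oi.symm.injective h
      exact Subtype.ext_iff.1 h2
    · intro h
      show oi.symm ⟨K e, hmem e⟩ = oi.symm ⟨K e', hmem e'⟩
      congr 1
      exact Subtype.ext h
  · intro e e'
    show oi.symm ⟨K e, hmem e⟩ < oi.symm ⟨K e', hmem e'⟩ ↔ _
    rw [oi.symm.lt_iff_lt, Subtype.mk_lt_mk]

/-- gap above a threshold for a finite family -/
lemma exists_gap {ι : Type*} [Fintype ι] (f : ι → ℝ) (t : ℝ) :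
    ∃ θ : ℝ, t < θ ∧ ∀ i, t < f i → θ < f i := by
  classical
  set S : Finset ℝ := (Finset.univ.image f).filter (fun u => t < u) with hS
  by_cases h : S.Nonempty
  · refine ⟨(t + S.min' h) / 2, ?_, ?_⟩
    · have : t < S.min' h := (Finset.mem_filter.1 (S.min'_mem h)).2
      linarith
    · intro i hi
      have hfi : f i ∈ S := Finset.mem_filter.2 ⟨Finset.mem_image_of_mem _ (Finset.mem_univ i), hi⟩
      have := S.min'_le _ hfi
      have h2 : t < S.min' h := (Finset.mem_filter.1 (S.min'_mem h)).2
      linarith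
  · refine ⟨t + 1, by linarith, fun i hi => ?_⟩
    exact absurd ⟨f i, Finset.mem_filter.2 ⟨Finset.mem_image_of_mem _ (Finset.mem_univ i), hi⟩⟩ h


lemma extract_circuit {E V : Type*} [Fintype E] [AddCommGroup V] [Module ℝ V]
    (v : E → V) (π : V →ₗ[ℝ] ℝ) (hπ : ∀ e, 0 < π (v e))
    (hC : ∃ C : Finset E, 3 ≤ C.card ∧
      ¬ LinearIndependent ℝ (fun x : C => v x.1) ∧
      ∀ C' : Finset E, C' ⊂ C → LinearIndependent ℝ (fun x : C' => v x.1)) :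
    ∃ (C : Finset E) (g : E → ℝ) (a b : E), a ∈ C ∧ b ∈ C ∧ a ≠ b ∧ 3 ≤ C.card ∧
      (∀ C' : Finset E, C' ⊂ C → LinearIndependent ℝ (fun x : C' => v x.1)) ∧
      (∑ e ∈ C, g e • v e = 0) ∧
      0 < g a * π (v a) ∧ 0 < g b * π (v b) := by
  classical
  obtain ⟨C, hcard, hdep, hind⟩ := hC
  obtain ⟨g0, hsum0, i0, hi0⟩ := Fintype.not_linearIndependent_iff.1 hdep
  set g : E → ℝ := fun e => if h : e ∈ C then g0 ⟨e, h⟩ else 0 with hgdef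
  have hgC : ∀ (i : C), g i.1 = g0 i := by
    rintro ⟨e, he⟩; simp [hgdef, he]
  have hsum : ∑ e ∈ C, g e • v e = 0 := by
    rw [← Finset.sum_coe_sort C (fun e => g e • v e)]
    rw [← hsum0]
    exact Finset.sum_congr rfl fun i _ => by rw [hgC]
  have hall : ∀ e ∈ C, g e ≠ 0 := by
    intro e0 he0 hz
    have hsub : C.erase e0 ⊂ C := Finset.erase_ssubset he0
    have hli := hind _ hsub
    have hsum' : ∑ e ∈ C.erase e0, g e • v e = 0 := by
      rw [Finset.sum_erase_eq_sub he0, hsum, hz]; simp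
    have hzero : ∀ e ∈ C.erase e0, g e = 0 := by
      have := Fintype.linearIndependent_iff.1 hli (fun i => g i.1) ?_
      · intro e he
        exact this ⟨e, he⟩
      · rw [Finset.sum_coe_sort (C.erase e0) (fun e => g e • v e)]
        exact hsum'
    have : ∀ e ∈ C, g e = 0 := by
      intro e he
      by_cases h : e = e0
      · rw [h]; exact hz
      · exact hzero e (Finset.mem_erase.2 ⟨h, he⟩)
    exact hi0 (by rw [← hgC i0]; exact this i0.1 i0.2)
  -- sign classes
  set P := C.filter (fun e => 0 < g e * π (v e)) with hP
  set N := C.filter (fun e => ¬ 0 < g e * π (v e)) with hN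
  have hPN : P.card + N.card = C.card := Finset.card_filter_add_card_filter_not _
  have hcase : 2 ≤ P.card ∨ 2 ≤ N.card := by omega
  rcases hcase with h | h
  · obtain ⟨a, ha, b, hb, hab⟩ := Finset.one_lt_card.1 h
    have haP := Finset.mem_filter.1 ha
    have hbP := Finset.mem_filter.1 hb
    exact ⟨C, g, a, b, haP.1, hbP.1, hab, hcard, hind, hsum, haP.2, hbP.2⟩
  · obtain ⟨a, ha, b, hb, hab⟩ := Finset.one_lt_card.1 h
    have haN := Finset.mem_filter.1 ha
    have hbN := Finset.mem_filter.1 hb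
    have hneg : ∀ e ∈ C, ¬ 0 < g e * π (v e) → 0 < (-g e) * π (v e) := by
      intro e he hn
      have hne : g e * π (v e) ≠ 0 := mul_ne_zero (hall e he) (ne_of_gt (hπ e))
      have : g e * π (v e) < 0 := lt_of_le_of_ne (not_lt.1 hn) hne
      nlinarith
    refine ⟨C, fun e => - g e, a, b, haN.1, hbN.1, hab, hcard, hind, ?_,
      hneg a haN.1 haN.2, hneg b hbN.1 hbN.2⟩
    have : ∑ e ∈ C, (fun e => -g e) e • v e = - ∑ e ∈ C, g e • v e := by
      rw [← Finset.sum_neg_distrib]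
      exact Finset.sum_congr rfl fun e _ => by rw [neg_smul]
    rw [this, hsum, neg_zero]

lemma side_functional {E : Type*} [Fintype E] [DecidableEq E] {V : Type*} [AddCommGroup V] [Module ℝ V]
    (v : E → V) (π : V →ₗ[ℝ] ℝ) (hπ : ∀ e, 0 < π (v e))
    (C : Finset E) (g : E → ℝ) (a b : E)
    (ha : a ∈ C) (hb : b ∈ C) (hab : a ≠ b)
    (hind : ∀ C' : Finset E, C' ⊂ C → LinearIndependent ℝ (fun x : C' => v x.1))
    (hdep : ∑ e ∈ C, g e • v e = 0)
    (hMa : 0 < g a * π (v a)) (hMb : 0 < g b * π (v b)) :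
    ∃ ψ : V →ₗ[ℝ] ℝ,
      ψ (v a) = 0 ∧
      (∀ e ∈ (C.erase b).erase a, ψ (v e) = π (v e)) ∧
      ψ (v b) = (1 + (g a * π (v a)) / (g b * π (v b))) * π (v b) := by
  classical
  have li := hind _ (Finset.erase_ssubset hb)
  obtain ⟨ψ, hψ⟩ := exists_dual_functional li (fun i => if i.1 = a then 0 else π (v i.1))
  have hmem_a : a ∈ C.erase b := Finset.mem_erase.2 ⟨hab, ha⟩
  have hψa : ψ (v a) = 0 := by have := hψ ⟨a, hmem_a⟩; simpa using this
  have hψD : ∀ e ∈ (C.erase b).erase a, ψ (v e) = π (v e) := by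
    intro e he
    obtain ⟨hea, heb⟩ := Finset.mem_erase.1 he
    have := hψ ⟨e, heb⟩
    simpa [hea] using this
  refine ⟨ψ, hψa, hψD, ?_⟩
  have hga : g a ≠ 0 := fun h => by simp [h] at hMa
  have hgb : g b ≠ 0 := fun h => by simp [h] at hMb
  have hπb : π (v b) ≠ 0 := ne_of_gt (hπ b)
  have h0 : ∑ e ∈ C, g e * ψ (v e) = 0 := by
    have h := congrArg ψ hdep
    rw [map_sum] at h
    simpa [map_smul, smul_eq_mul] using h
  have hπ0 : ∑ e ∈ C, g e * π (v e) = 0 := by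
    have h := congrArg π hdep
    rw [map_sum] at h
    simpa [map_smul, smul_eq_mul] using h
  have hsplit : ∀ (F : E → ℝ), ∑ e ∈ (C.erase b).erase a, F e
      = ∑ e ∈ C, F e - F b - F a := by
    intro F
    rw [Finset.sum_erase_eq_sub hmem_a, Finset.sum_erase_eq_sub hb]
  have hDeq : ∑ e ∈ (C.erase b).erase a, g e * ψ (v e)
      = ∑ e ∈ (C.erase b).erase a, g e * π (v e) :=
    Finset.sum_congr rfl fun e he => by rw [hψD e he]
  have h1 := hsplit (fun e => g e * ψ (v e))
  have h2 := hsplit (fun e => g e * π (v e))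
  rw [hDeq, h2, h0] at h1
  rw [hπ0] at h1
  -- h1 : 0 - g b * π (v b) - g a * π (v a) = 0 - g b * ψ (v b) - g a * ψ (v a)
  rw [hψa] at h1
  have hstep : g b * ψ (v b) = g a * π (v a) + g b * π (v b) := by linarith
  field_simp
  linear_combination hstep

lemma exists_above {ι : Type*} [Fintype ι] (f : ι → ℝ) : ∃ a : ℝ, ∀ i, f i < a := by
  classical
  by_cases h : Nonempty ι
  · refine ⟨(Finset.univ.image f).max' (by simpa using Finset.univ_nonempty) + 1, fun i => ?_⟩
    have := Finset.le_max' _ (f i) (Finset.mem_image_of_mem f (Finset.mem_univ i))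
    linarith
  · exact ⟨0, fun i => absurd ⟨i⟩ h⟩

lemma exists_below {ι : Type*} [Fintype ι] (f : ι → ℝ) : ∃ a : ℝ, ∀ i, a < f i := by
  obtain ⟨a, ha⟩ := exists_above (fun i => - f i)
  exact ⟨-a, fun i => by have := ha i; linarith⟩

set_option maxHeartbeats 2000000 in
lemma main_construction {E₁ E₂ : Type*} [Fintype E₁] [Fintype E₂] [DecidableEq E₁] [DecidableEq E₂]
    {d₁ d₂ : ℕ}
    (v₁ : E₁ → Fin d₁ → ℝ) (π₁ : (Fin d₁ → ℝ) →ₗ[ℝ] ℝ)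
    (v₂ : E₂ → Fin d₂ → ℝ) (π₂ : (Fin d₂ → ℝ) →ₗ[ℝ] ℝ)
    (hπ₁ : ∀ e, 0 < π₁ (v₁ e)) (hπ₂ : ∀ e, 0 < π₂ (v₂ e))
    (C₁ : Finset E₁) (g₁ : E₁ → ℝ) (a b : E₁)
    (ha : a ∈ C₁) (hb : b ∈ C₁) (hab : a ≠ b) (hcard₁ : 3 ≤ C₁.card)
    (hind₁ : ∀ C' : Finset E₁, C' ⊂ C₁ → LinearIndependent ℝ (fun x : C' => v₁ x.1))
    (hdep₁ : ∑ e ∈ C₁, g₁ e • v₁ e = 0)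
    (hMa : 0 < g₁ a * π₁ (v₁ a)) (hMb : 0 < g₁ b * π₁ (v₁ b))
    (C₂ : Finset E₂) (g₂ : E₂ → ℝ) (x y : E₂)
    (hx : x ∈ C₂) (hy : y ∈ C₂) (hxy : x ≠ y) (hcard₂ : 3 ≤ C₂.card)
    (hind₂ : ∀ C' : Finset E₂, C' ⊂ C₂ → LinearIndependent ℝ (fun x : C' => v₂ x.1))
    (hdep₂ : ∑ e ∈ C₂, g₂ e • v₂ e = 0)
    (hNx : 0 < g₂ x * π₂ (v₂ x)) (hNy : 0 < g₂ y * π₂ (v₂ y))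
    (hord : g₁ b * π₁ (v₁ b) * (g₂ x * π₂ (v₂ x)) ≤ g₁ a * π₁ (v₁ a) * (g₂ y * π₂ (v₂ y)))
    (w : E₁ ⊕ E₂ → (Fin d₁ → ℝ) × (Fin d₂ → ℝ))
    (hw1 : ∀ e, w (Sum.inl e) = (v₁ e, 0))
    (hw2 : ∀ e, w (Sum.inr e) = (0, v₂ e))
    (π : ((Fin d₁ → ℝ) × (Fin d₂ → ℝ)) →ₗ[ℝ] ℝ)
    (hπ : ∀ (u : Fin d₁ → ℝ) (z : Fin d₂ → ℝ), π (u, z) = π₁ u + π₂ z) :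
    ∃ (l : ℕ) (bm : E₁ ⊕ E₂ → Fin l),
      IsCellularString w l bm ∧ ¬ IsCoherent w π l bm := by
  classical
  obtain ⟨ψ₁, hψ₁a, hψ₁D, hψ₁b⟩ := side_functional v₁ π₁ hπ₁ C₁ g₁ a b ha hb hab hind₁ hdep₁ hMa hMb
  obtain ⟨ψ₂, hψ₂x, hψ₂D, hψ₂y⟩ := side_functional v₂ π₂ hπ₂ C₂ g₂ x y hx hy hxy hind₂ hdep₂ hNx hNy
  set Ma := g₁ a * π₁ (v₁ a) with hMadef
  set Mb := g₁ b * π₁ (v₁ b) with hMbdef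
  set Nx := g₂ x * π₂ (v₂ x) with hNxdef
  set Ny := g₂ y * π₂ (v₂ y) with hNydef
  set R₁ : ℝ := 1 + Ma / Mb with hR₁def
  set R₂ : ℝ := 1 + Nx / Ny with hR₂def
  have hR₁ : 1 < R₁ := by rw [hR₁def]; have := div_pos hMa hMb; linarith
  have hR₂ : 1 < R₂ := by rw [hR₂def]; have := div_pos hNx hNy; linarith
  set ρ₁ : E₁ → ℝ := fun e => ψ₁ (v₁ e) / π₁ (v₁ e) with hρ₁def
  set ρ₂ : E₂ → ℝ := fun e => ψ₂ (v₂ e) / π₂ (v₂ e) with hρ₂def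
  have hρ₁a : ρ₁ a = 0 := by rw [hρ₁def]; simp [hψ₁a]
  have hρ₁b : ρ₁ b = R₁ := by
    rw [hρ₁def]; simp only []
    rw [hψ₁b, mul_div_assoc, div_self (ne_of_gt (hπ₁ b)), mul_one]
  have hρ₁D : ∀ e ∈ (C₁.erase b).erase a, ρ₁ e = 1 := by
    intro e he
    rw [hρ₁def]; simp only []
    rw [hψ₁D e he, div_self (ne_of_gt (hπ₁ e))]
  have hρ₂x : ρ₂ x = 0 := by rw [hρ₂def]; simp [hψ₂x]
  have hρ₂y : ρ₂ y = R₂ := by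
    rw [hρ₂def]; simp only []
    rw [hψ₂y, mul_div_assoc, div_self (ne_of_gt (hπ₂ y)), mul_one]
  have hρ₂D : ∀ e ∈ (C₂.erase y).erase x, ρ₂ e = 1 := by
    intro e he
    rw [hρ₂def]; simp only []
    rw [hψ₂D e he, div_self (ne_of_gt (hπ₂ e))]
  -- keys
  set K : E₁ ⊕ E₂ → ℕ ×ₗ ℝ := Sum.elim
      (fun e => toLex ((if ρ₁ e ≤ 0 then 0 else if ρ₁ e ≤ R₁ then 2 else 4), ρ₁ e))
      (fun e => toLex ((if ρ₂ e ≤ 1 then 1 else 3), ρ₂ e)) with hKdef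
  obtain ⟨l, bm, hsurj, hbeq, hblt⟩ := exists_blockMap K
  -- thresholds
  obtain ⟨θ₀, hθ₀pos, hθ₀⟩ := exists_gap ρ₁ 0
  obtain ⟨θr, hθrR, hθr⟩ := exists_gap ρ₁ R₁
  obtain ⟨θ₂, hθ₂one, hθ₂⟩ := exists_gap ρ₂ 1
  obtain ⟨θlow, hθlow⟩ := exists_below ρ₂
  obtain ⟨θhigh, hθhigh⟩ := exists_above ρ₂
  -- generic cellular certificate
  have hcell : ∀ (s t : ℝ) (e₀ : E₁ ⊕ E₂),
      (∀ e : E₁ ⊕ E₂,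
        (K e = K e₀ → Sum.elim (fun e => ρ₁ e - s) (fun e => ρ₂ e - t) e = 0) ∧
        (K e < K e₀ → Sum.elim (fun e => ρ₁ e - s) (fun e => ρ₂ e - t) e < 0) ∧
        (K e₀ < K e → 0 < Sum.elim (fun e => ρ₁ e - s) (fun e => ρ₂ e - t) e)) →
      ∃ φ : ((Fin d₁ → ℝ) × (Fin d₂ → ℝ)) →ₗ[ℝ] ℝ, ∀ e,
        (bm e = bm e₀ → φ (w e) = 0) ∧ (bm e < bm e₀ → φ (w e) < 0) ∧
        (bm e₀ < bm e → 0 < φ (w e)) := by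
    intro s t e₀ h
    refine ⟨(ψ₁ - s • π₁).comp (LinearMap.fst ℝ (Fin d₁ → ℝ) (Fin d₂ → ℝ)) + (ψ₂ - t • π₂).comp (LinearMap.snd ℝ (Fin d₁ → ℝ) (Fin d₂ → ℝ)), ?_⟩
    intro e
    have hval : ((ψ₁ - s • π₁).comp (LinearMap.fst ℝ (Fin d₁ → ℝ) (Fin d₂ → ℝ)) + (ψ₂ - t • π₂).comp (LinearMap.snd ℝ (Fin d₁ → ℝ) (Fin d₂ → ℝ))) (w e)
        = (Sum.elim (fun e => ρ₁ e - s) (fun e => ρ₂ e - t) e) *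
          (Sum.elim (fun e => π₁ (v₁ e)) (fun e => π₂ (v₂ e)) e) := by
      cases e with
      | inl e =>
        rw [hw1]
        simp only [LinearMap.add_apply, LinearMap.comp_apply, LinearMap.fst_apply,
          LinearMap.snd_apply, LinearMap.sub_apply, LinearMap.smul_apply, smul_eq_mul,
          map_zero, Sum.elim_inl]
        rw [sub_mul, hρ₁def]
        simp only []
        rw [div_mul_cancel₀ _ (ne_of_gt (hπ₁ e))]
        ring
      | inr e =>
        rw [hw2]
        simp only [LinearMap.add_apply, LinearMap.comp_apply, LinearMap.fst_apply,
          LinearMap.snd_apply, LinearMap.sub_apply, LinearMap.smul_apply, smul_eq_mul,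
          map_zero, Sum.elim_inr]
        rw [sub_mul, hρ₂def]
        simp only []
        rw [div_mul_cancel₀ _ (ne_of_gt (hπ₂ e))]
        ring
    have hpos : 0 < Sum.elim (fun e => π₁ (v₁ e)) (fun e => π₂ (v₂ e)) e := by
      cases e with
      | inl e => exact hπ₁ e
      | inr e => exact hπ₂ e
    obtain ⟨h1, h2, h3⟩ := h e
    refine ⟨?_, ?_, ?_⟩
    · intro hbm
      rw [hval, h1 ((hbeq e e₀).1 hbm), zero_mul]
    · intro hbm
      rw [hval]
      exact mul_neg_of_neg_of_pos (h2 ((hblt e e₀).1 hbm)) hpos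
    · intro hbm
      rw [hval]
      exact mul_pos (h3 ((hblt e₀ e).1 hbm)) hpos
  -- same-side comparison lemmas
  have same₁lt : ∀ e e' : E₁, K (Sum.inl e) < K (Sum.inl e') → ρ₁ e < ρ₁ e' := by
    intro e e' h
    rw [hKdef] at h
    simp only [Sum.elim_inl] at h
    rw [Prod.Lex.lt_iff, ofLex_toLex] at h
    rcases h with h | ⟨-, h⟩
    · simp only [ofLex_toLex] at h
      split_ifs at h <;> first | omega | linarith
    · exact h
  have same₁eq : ∀ e e' : E₁, K (Sum.inl e) = K (Sum.inl e') → ρ₁ e = ρ₁ e' := by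
    intro e e' h
    rw [hKdef] at h
    simp only [Sum.elim_inl, toLex_inj, Prod.mk.injEq] at h
    exact h.2
  have same₂lt : ∀ e e' : E₂, K (Sum.inr e) < K (Sum.inr e') → ρ₂ e < ρ₂ e' := by
    intro e e' h
    rw [hKdef] at h
    simp only [Sum.elim_inr] at h
    rw [Prod.Lex.lt_iff, ofLex_toLex] at h
    rcases h with h | ⟨-, h⟩
    · simp only [ofLex_toLex] at h
      split_ifs at h <;> first | omega | linarith
    · exact h
  have same₂eq : ∀ e e' : E₂, K (Sum.inr e) = K (Sum.inr e') → ρ₂ e = ρ₂ e' := by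
    intro e e' h
    rw [hKdef] at h
    simp only [Sum.elim_inr, toLex_inj, Prod.mk.injEq] at h
    exact h.2
  refine ⟨l, bm, ⟨hsurj, ?_⟩, ?_⟩
  · -- cellularity
    intro i
    obtain ⟨e₀, rfl⟩ := hsurj i
    cases e₀ with
    | inl e₀ =>
      by_cases h0 : ρ₁ e₀ ≤ 0
      · -- chunk 0
        have hKe₀ : K (Sum.inl e₀) = toLex (0, ρ₁ e₀) := by
          rw [hKdef]; simp only [Sum.elim_inl, if_pos h0]
        apply hcell (ρ₁ e₀) θlow (Sum.inl e₀)
        intro e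
        cases e with
        | inl e =>
          exact ⟨fun h => sub_eq_zero_of_eq (same₁eq _ _ h),
                 fun h => sub_neg.2 (same₁lt _ _ h),
                 fun h => sub_pos.2 (same₁lt _ _ h)⟩
        | inr e =>
          refine ⟨fun h => absurd h ?_, fun h => absurd h ?_, fun _ => ?_⟩
          · rw [hKe₀, hKdef]
            simp only [Sum.elim_inr, toLex_inj, Prod.mk.injEq, not_and]
            intro h1
            split_ifs at h1 <;> omega
          · rw [hKe₀, hKdef]
            simp only [Sum.elim_inr, Prod.Lex.lt_iff, ofLex_toLex, not_or, not_and]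
            constructor
            · split_ifs <;> omega
            · intro h1; split_ifs at h1 <;> omega
          · simp only [Sum.elim_inr]
            have := hθlow e; linarith
      · by_cases h1 : ρ₁ e₀ ≤ R₁
        · -- chunk 2
          have hKe₀ : K (Sum.inl e₀) = toLex (2, ρ₁ e₀) := by
            rw [hKdef]; simp only [Sum.elim_inl, if_neg h0, if_pos h1]
          apply hcell (ρ₁ e₀) θ₂ (Sum.inl e₀)
          intro e
          cases e with
          | inl e =>
            exact ⟨fun h => sub_eq_zero_of_eq (same₁eq _ _ h),
                   fun h => sub_neg.2 (same₁lt _ _ h),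
                   fun h => sub_pos.2 (same₁lt _ _ h)⟩
          | inr e =>
            refine ⟨fun h => absurd h ?_, fun h => ?_, fun h => ?_⟩
            · rw [hKe₀, hKdef]
              simp only [Sum.elim_inr, toLex_inj, Prod.mk.injEq, not_and]
              intro h2
              split_ifs at h2 <;> omega
            · rw [hKe₀, hKdef] at h
              simp only [Sum.elim_inr, Prod.Lex.lt_iff, ofLex_toLex] at h
              simp only [Sum.elim_inr]
              by_cases h2 : ρ₂ e ≤ 1
              · linarith
              · rw [if_neg h2] at h
                rcases h with h | ⟨h, -⟩ <;> omega
            · rw [hKe₀, hKdef] at h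
              simp only [Sum.elim_inr, Prod.Lex.lt_iff, ofLex_toLex] at h
              simp only [Sum.elim_inr]
              by_cases h2 : ρ₂ e ≤ 1
              · rw [if_pos h2] at h
                rcases h with h | ⟨h, -⟩ <;> omega
              · have := hθ₂ e (by linarith); linarith
        · -- chunk 4
          have hKe₀ : K (Sum.inl e₀) = toLex (4, ρ₁ e₀) := by
            rw [hKdef]; simp only [Sum.elim_inl, if_neg h0, if_neg h1]
          apply hcell (ρ₁ e₀) θhigh (Sum.inl e₀)
          intro e
          cases e with
          | inl e =>
            exact ⟨fun h => sub_eq_zero_of_eq (same₁eq _ _ h),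
                   fun h => sub_neg.2 (same₁lt _ _ h),
                   fun h => sub_pos.2 (same₁lt _ _ h)⟩
          | inr e =>
            refine ⟨fun h => absurd h ?_, fun _ => ?_, fun h => absurd h ?_⟩
            · rw [hKe₀, hKdef]
              simp only [Sum.elim_inr, toLex_inj, Prod.mk.injEq, not_and]
              intro h2
              split_ifs at h2 <;> omega
            · simp only [Sum.elim_inr]
              have := hθhigh e; linarith
            · rw [hKe₀, hKdef]
              simp only [Sum.elim_inr, Prod.Lex.lt_iff, ofLex_toLex, not_or, not_and]
              constructor
              · split_ifs <;> omega
              · intro h2; split_ifs at h2 <;> omega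
    | inr e₀ =>
      by_cases h0 : ρ₂ e₀ ≤ 1
      · -- chunk 1
        have hKe₀ : K (Sum.inr e₀) = toLex (1, ρ₂ e₀) := by
          rw [hKdef]; simp only [Sum.elim_inr, if_pos h0]
        apply hcell θ₀ (ρ₂ e₀) (Sum.inr e₀)
        intro e
        cases e with
        | inr e =>
          exact ⟨fun h => sub_eq_zero_of_eq (same₂eq _ _ h),
                 fun h => sub_neg.2 (same₂lt _ _ h),
                 fun h => sub_pos.2 (same₂lt _ _ h)⟩
        | inl e =>
          refine ⟨fun h => absurd h ?_, fun h => ?_, fun h => ?_⟩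
          · rw [hKe₀, hKdef]
            simp only [Sum.elim_inl, toLex_inj, Prod.mk.injEq, not_and]
            intro h2
            split_ifs at h2 <;> omega
          · rw [hKe₀, hKdef] at h
            simp only [Sum.elim_inl, Prod.Lex.lt_iff, ofLex_toLex] at h
            simp only [Sum.elim_inl]
            by_cases h2 : ρ₁ e ≤ 0
            · linarith
            · rw [if_neg h2] at h
              split_ifs at h <;> (rcases h with h | ⟨h, -⟩ <;> omega)
          · rw [hKe₀, hKdef] at h
            simp only [Sum.elim_inl, Prod.Lex.lt_iff, ofLex_toLex] at h
            simp only [Sum.elim_inl]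
            by_cases h2 : ρ₁ e ≤ 0
            · rw [if_pos h2] at h
              rcases h with h | ⟨h, -⟩ <;> omega
            · have := hθ₀ e (by linarith); linarith
      · -- chunk 3
        have hKe₀ : K (Sum.inr e₀) = toLex (3, ρ₂ e₀) := by
          rw [hKdef]; simp only [Sum.elim_inr, if_neg h0]
        apply hcell θr (ρ₂ e₀) (Sum.inr e₀)
        intro e
        cases e with
        | inr e =>
          exact ⟨fun h => sub_eq_zero_of_eq (same₂eq _ _ h),
                 fun h => sub_neg.2 (same₂lt _ _ h),
                 fun h => sub_pos.2 (same₂lt _ _ h)⟩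
        | inl e =>
          refine ⟨fun h => absurd h ?_, fun h => ?_, fun h => ?_⟩
          · rw [hKe₀, hKdef]
            simp only [Sum.elim_inl, toLex_inj, Prod.mk.injEq, not_and]
            intro h2
            split_ifs at h2 <;> omega
          · rw [hKe₀, hKdef] at h
            simp only [Sum.elim_inl, Prod.Lex.lt_iff, ofLex_toLex] at h
            simp only [Sum.elim_inl]
            by_cases h2 : ρ₁ e ≤ 0
            · linarith
            · by_cases h3 : ρ₁ e ≤ R₁
              · linarith
              · rw [if_neg h2, if_neg h3] at h
                rcases h with h | ⟨h, -⟩ <;> omega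
          · rw [hKe₀, hKdef] at h
            simp only [Sum.elim_inl, Prod.Lex.lt_iff, ofLex_toLex] at h
            simp only [Sum.elim_inl]
            by_cases h2 : ρ₁ e ≤ 0
            · rw [if_pos h2] at h
              rcases h with h | ⟨h, -⟩ <;> omega
            · by_cases h3 : ρ₁ e ≤ R₁
              · rw [if_neg h2, if_pos h3] at h
                rcases h with h | ⟨h, -⟩ <;> omega
              · have := hθr e (by linarith); linarith
  · -- non-coherence
    rintro ⟨ψ, hψ⟩
    have hπw₁ : ∀ e : E₁, π (w (Sum.inl e)) = π₁ (v₁ e) := by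
      intro e; rw [hw1, hπ]; simp
    have hπw₂ : ∀ e : E₂, π (w (Sum.inr e)) = π₂ (v₂ e) := by
      intro e; rw [hw2, hπ]; simp
    have hres₁ : ∀ e : E₁, ψ (w (Sum.inl e)) = (ψ (w (Sum.inl e)) / π (w (Sum.inl e))) * π₁ (v₁ e) := by
      intro e
      rw [hπw₁, div_mul_cancel₀ _ (ne_of_gt (hπ₁ e))]
    have hres₂ : ∀ e : E₂, ψ (w (Sum.inr e)) = (ψ (w (Sum.inr e)) / π (w (Sum.inr e))) * π₂ (v₂ e) := by
      intro e
      rw [hπw₂, div_mul_cancel₀ _ (ne_of_gt (hπ₂ e))]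
    -- relations
    have hrel₁ : ∑ e ∈ C₁, g₁ e * ψ (w (Sum.inl e)) = 0 := by
      have key : ∀ e : E₁, ψ (w (Sum.inl e)) = (ψ.comp (LinearMap.inl ℝ (Fin d₁ → ℝ) (Fin d₂ → ℝ))) (v₁ e) := by
        intro e; rw [hw1]; simp [LinearMap.inl_apply]
      have h := congrArg (ψ.comp (LinearMap.inl ℝ (Fin d₁ → ℝ) (Fin d₂ → ℝ))) hdep₁
      rw [map_sum] at h
      simp only [map_smul, smul_eq_mul, map_zero] at h
      rw [← h]
      exact Finset.sum_congr rfl fun e _ => by rw [key]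
    have hrel₂ : ∑ e ∈ C₂, g₂ e * ψ (w (Sum.inr e)) = 0 := by
      have key : ∀ e : E₂, ψ (w (Sum.inr e)) = (ψ.comp (LinearMap.inr ℝ (Fin d₁ → ℝ) (Fin d₂ → ℝ))) (v₂ e) := by
        intro e; rw [hw2]; simp [LinearMap.inr_apply]
      have h := congrArg (ψ.comp (LinearMap.inr ℝ (Fin d₁ → ℝ) (Fin d₂ → ℝ))) hdep₂
      rw [map_sum] at h
      simp only [map_smul, smul_eq_mul, map_zero] at h
      rw [← h]
      exact Finset.sum_congr rfl fun e _ => by rw [key]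
    have hπrel₁ : ∑ e ∈ C₁, g₁ e * π₁ (v₁ e) = 0 := by
      have h := congrArg π₁ hdep₁
      rw [map_sum] at h
      simpa [map_smul, smul_eq_mul] using h
    have hπrel₂ : ∑ e ∈ C₂, g₂ e * π₂ (v₂ e) = 0 := by
      have h := congrArg π₂ hdep₂
      rw [map_sum] at h
      simpa [map_smul, smul_eq_mul] using h
    -- splitting
    have hmem_a : a ∈ C₁.erase b := Finset.mem_erase.2 ⟨hab, ha⟩
    have hmem_x : x ∈ C₂.erase y := Finset.mem_erase.2 ⟨hxy, hx⟩
    have hsplit₁ : ∀ (F : E₁ → ℝ), ∑ e ∈ (C₁.erase b).erase a, F e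
        = ∑ e ∈ C₁, F e - F b - F a := by
      intro F
      rw [Finset.sum_erase_eq_sub hmem_a, Finset.sum_erase_eq_sub hb]
    have hsplit₂ : ∀ (F : E₂ → ℝ), ∑ e ∈ (C₂.erase y).erase x, F e
        = ∑ e ∈ C₂, F e - F y - F x := by
      intro F
      rw [Finset.sum_erase_eq_sub hmem_x, Finset.sum_erase_eq_sub hy]
    -- D nonempty
    have hD₁ne : ((C₁.erase b).erase a).Nonempty := by
      rw [← Finset.card_pos, Finset.card_erase_of_mem hmem_a, Finset.card_erase_of_mem hb]
      omega
    have hD₂ne : ((C₂.erase y).erase x).Nonempty := by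
      rw [← Finset.card_pos, Finset.card_erase_of_mem hmem_x, Finset.card_erase_of_mem hy]
      omega
    obtain ⟨d₀, hd₀⟩ := hD₁ne
    obtain ⟨f₀, hf₀⟩ := hD₂ne
    -- keys of special elements
    have hKa : K (Sum.inl a) = toLex (0, (0:ℝ)) := by
      rw [hKdef]; simp only [Sum.elim_inl, hρ₁a]; norm_num
    have hKb : K (Sum.inl b) = toLex (2, R₁) := by
      rw [hKdef]; simp only [Sum.elim_inl, hρ₁b]
      rw [if_neg (by linarith), if_pos le_rfl]
    have hKD₁ : ∀ e ∈ (C₁.erase b).erase a, K (Sum.inl e) = toLex (2, (1:ℝ)) := by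
      intro e he
      rw [hKdef]; simp only [Sum.elim_inl, hρ₁D e he]
      rw [if_neg (by norm_num), if_pos hR₁.le]
    have hKx : K (Sum.inr x) = toLex (1, (0:ℝ)) := by
      rw [hKdef]; simp only [Sum.elim_inr, hρ₂x]; norm_num
    have hKy : K (Sum.inr y) = toLex (3, R₂) := by
      rw [hKdef]; simp only [Sum.elim_inr, hρ₂y]
      rw [if_neg (by linarith)]
    have hKD₂ : ∀ e ∈ (C₂.erase y).erase x, K (Sum.inr e) = toLex (1, (1:ℝ)) := by
      intro e he
      rw [hKdef]; simp only [Sum.elim_inr, hρ₂D e he]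
      rw [if_pos le_rfl]
    -- strict block inequalities
    have hlt_ax : bm (Sum.inl a) < bm (Sum.inr x) := by
      rw [hblt, hKa, hKx, Prod.Lex.lt_iff]; left; norm_num
    have hlt_xy : bm (Sum.inr x) < bm (Sum.inr y) := by
      rw [hblt, hKx, hKy, Prod.Lex.lt_iff]; left; norm_num
    have hlt_by : bm (Sum.inl b) < bm (Sum.inr y) := by
      rw [hblt, hKb, hKy, Prod.Lex.lt_iff]; left; norm_num
    have hlt_fd : bm (Sum.inr f₀) < bm (Sum.inl d₀) := by
      rw [hblt, hKD₂ f₀ hf₀, hKD₁ d₀ hd₀, Prod.Lex.lt_iff]; left; norm_num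
    -- coherence consequences
    have e_ax := (hψ (Sum.inl a) (Sum.inr x)).2 hlt_ax
    have e_xy := (hψ (Sum.inr x) (Sum.inr y)).2 hlt_xy
    have e_by := (hψ (Sum.inl b) (Sum.inr y)).2 hlt_by
    have e_fd := (hψ (Sum.inr f₀) (Sum.inl d₀)).2 hlt_fd
    have eD₁ : ∀ e ∈ (C₁.erase b).erase a,
        ψ (w (Sum.inl e)) / π (w (Sum.inl e)) = ψ (w (Sum.inl d₀)) / π (w (Sum.inl d₀)) := by
      intro e he
      exact (hψ (Sum.inl e) (Sum.inl d₀)).1 ((hbeq _ _).2 (by rw [hKD₁ e he, hKD₁ d₀ hd₀]))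
    have eD₂ : ∀ e ∈ (C₂.erase y).erase x,
        ψ (w (Sum.inr e)) / π (w (Sum.inr e)) = ψ (w (Sum.inr f₀)) / π (w (Sum.inr f₀)) := by
      intro e he
      exact (hψ (Sum.inr e) (Sum.inr f₀)).1 ((hbeq _ _).2 (by rw [hKD₂ e he, hKD₂ f₀ hf₀]))
    set Ta := ψ (w (Sum.inl a)) / π (w (Sum.inl a)) with hTa
    set Tb := ψ (w (Sum.inl b)) / π (w (Sum.inl b)) with hTb
    set Tx := ψ (w (Sum.inr x)) / π (w (Sum.inr x)) with hTx
    set Ty := ψ (w (Sum.inr y)) / π (w (Sum.inr y)) with hTy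
    set T1 := ψ (w (Sum.inl d₀)) / π (w (Sum.inl d₀)) with hT1
    set T2 := ψ (w (Sum.inr f₀)) / π (w (Sum.inr f₀)) with hT2
    -- weighted averages
    have hc₁ : Ma * Ta + Mb * Tb = (Ma + Mb) * T1 := by
      have hDψ : ∑ e ∈ (C₁.erase b).erase a, g₁ e * ψ (w (Sum.inl e))
          = (∑ e ∈ (C₁.erase b).erase a, g₁ e * π₁ (v₁ e)) * T1 := by
        rw [Finset.sum_mul]
        refine Finset.sum_congr rfl fun e he => ?_
        rw [hres₁ e, eD₁ e he]; ring
      have h1 := hsplit₁ (fun e => g₁ e * ψ (w (Sum.inl e)))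
      have h2 := hsplit₁ (fun e => g₁ e * π₁ (v₁ e))
      rw [hDψ, h2, hπrel₁, hrel₁] at h1
      rw [hres₁ a, hres₁ b] at h1
      rw [← hTa, ← hTb] at h1
      rw [hMadef, hMbdef]
      linear_combination h1
    have hc₂ : Nx * Tx + Ny * Ty = (Nx + Ny) * T2 := by
      have hDψ : ∑ e ∈ (C₂.erase y).erase x, g₂ e * ψ (w (Sum.inr e))
          = (∑ e ∈ (C₂.erase y).erase x, g₂ e * π₂ (v₂ e)) * T2 := by
        rw [Finset.sum_mul]
        refine Finset.sum_congr rfl fun e he => ?_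
        rw [hres₂ e, eD₂ e he]; ring
      have h1 := hsplit₂ (fun e => g₂ e * ψ (w (Sum.inr e)))
      have h2 := hsplit₂ (fun e => g₂ e * π₂ (v₂ e))
      rw [hDψ, h2, hπrel₂, hrel₂] at h1
      rw [hres₂ x, hres₂ y] at h1
      rw [← hTx, ← hTy] at h1
      rw [hNxdef, hNydef]
      linear_combination h1
    -- final contradiction
    have k1 : 0 < (Nx + Ny) * Ma * (Tx - Ta) :=
      mul_pos (mul_pos (add_pos hNx hNy) hMa) (sub_pos.2 e_ax)
    have k2 : 0 < (Nx + Ny) * Mb * (Ty - Tb) :=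
      mul_pos (mul_pos (add_pos hNx hNy) hMb) (sub_pos.2 e_by)
    have k3 : 0 ≤ (Ma * Ny - Mb * Nx) * (Ty - Tx) :=
      mul_nonneg (sub_nonneg.2 hord) (sub_nonneg.2 e_xy.le)
    have k4 : (Ma + Mb) * ((Nx + Ny) * T2) < (Ma + Mb) * ((Nx + Ny) * T1) := by
      apply mul_lt_mul_of_pos_left _ (add_pos hMa hMb)
      exact mul_lt_mul_of_pos_left e_fd (add_pos hNx hNy)
    have expand : (Ma + Mb) * ((Nx + Ny) * T2) - (Ma + Mb) * ((Nx + Ny) * T1)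
        = (Nx + Ny) * Ma * (Tx - Ta) + (Nx + Ny) * Mb * (Ty - Tb)
          + (Ma * Ny - Mb * Nx) * (Ty - Tx) := by
      linear_combination (Nx + Ny) * hc₁ - (Ma + Mb) * hc₂
    linarith [k1, k2, k3, k4, expand]


/-- The direct sum of two configurations (no zero vectors, no parallel
pairs), each of which contains a circuit with at least 3 elements, is not all-coherent:
it has a cellular string that is not coherent. -/
theorem statement7 {E₁ E₂ : Type*} [Fintype E₁] [Fintype E₂] {d₁ d₂ : ℕ}
    (v₁ : E₁ → Fin d₁ → ℝ) (π₁ : (Fin d₁ → ℝ) →ₗ[ℝ] ℝ)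
    (v₂ : E₂ → Fin d₂ → ℝ) (π₂ : (Fin d₂ → ℝ) →ₗ[ℝ] ℝ)
    (hπ₁ : ∀ e, 0 < π₁ (v₁ e)) (hπ₂ : ∀ e, 0 < π₂ (v₂ e))
    (hv₁ : ∀ e, v₁ e ≠ 0) (hv₂ : ∀ e, v₂ e ≠ 0)
    (hpar₁ : ∀ e e', e ≠ e' → ∀ c : ℝ, v₁ e' ≠ c • v₁ e)
    (hpar₂ : ∀ e e', e ≠ e' → ∀ c : ℝ, v₂ e' ≠ c • v₂ e)
    (hC₁ : ∃ C : Finset E₁, 3 ≤ C.card ∧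
      ¬ LinearIndependent ℝ (fun x : C => v₁ x.1) ∧
      ∀ C' : Finset E₁, C' ⊂ C → LinearIndependent ℝ (fun x : C' => v₁ x.1))
    (hC₂ : ∃ C : Finset E₂, 3 ≤ C.card ∧
      ¬ LinearIndependent ℝ (fun x : C => v₂ x.1) ∧
      ∀ C' : Finset E₂, C' ⊂ C → LinearIndependent ℝ (fun x : C' => v₂ x.1))
    (w : E₁ ⊕ E₂ → (Fin d₁ → ℝ) × (Fin d₂ → ℝ))
    (hw1 : ∀ e, w (Sum.inl e) = (v₁ e, 0))
    (hw2 : ∀ e, w (Sum.inr e) = (0, v₂ e))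
    (π : ((Fin d₁ → ℝ) × (Fin d₂ → ℝ)) →ₗ[ℝ] ℝ)
    (hπ : ∀ (x : Fin d₁ → ℝ) (y : Fin d₂ → ℝ), π (x, y) = π₁ x + π₂ y) :
    ∃ (l : ℕ) (b : E₁ ⊕ E₂ → Fin l),
      IsCellularString w l b ∧ ¬ IsCoherent w π l b := by
  classical
  obtain ⟨C₁, g₁, a, b, ha, hb, hab, hcard₁, hind₁, hdep₁, hMa, hMb⟩ :=
    extract_circuit v₁ π₁ hπ₁ hC₁
  obtain ⟨C₂, g₂, xx, yy, hx, hy, hxy, hcard₂, hind₂, hdep₂, hNx, hNy⟩ :=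
    extract_circuit v₂ π₂ hπ₂ hC₂
  rcases le_total (g₁ b * π₁ (v₁ b) * (g₂ xx * π₂ (v₂ xx)))
      (g₁ a * π₁ (v₁ a) * (g₂ yy * π₂ (v₂ yy))) with h | h
  · exact main_construction v₁ π₁ v₂ π₂ hπ₁ hπ₂ C₁ g₁ a b ha hb hab hcard₁ hind₁ hdep₁
      hMa hMb C₂ g₂ xx yy hx hy hxy hcard₂ hind₂ hdep₂ hNx hNy h w hw1 hw2 π hπ
  · exact main_construction v₁ π₁ v₂ π₂ hπ₁ hπ₂ C₁ g₁ b a hb ha hab.symm hcard₁ hind₁ hdep₁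
      hMb hMa C₂ g₂ yy xx hy hx hxy.symm hcard₂ hind₂ hdep₂ hNy hNx h w hw1 hw2 π hπ
end

section
/- For all positive integers r and m, the configuration E_{r,m} is all-coherent: every cellular string of E_{r,m} is coherent. -/
open Finset

lemma psi_apply {r : ℕ} (y : Fin r → ℝ) (x : Fin r → ℝ) :
    (∑ j, y j • (LinearMap.proj j : (Fin r → ℝ) →ₗ[ℝ] ℝ)) x = ∑ j, y j * x j := by
  simp

lemma psi_single {r : ℕ} (y : Fin r → ℝ) (j : Fin r) :
    (∑ j, y j • (LinearMap.proj j : (Fin r → ℝ) →ₗ[ℝ] ℝ)) (Pi.single j 1) = y j := by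
  rw [psi_apply]
  simp [Pi.single_apply]

lemma one_decomp {r : ℕ} : (fun _ => (1:ℝ)) = ∑ j : Fin r, (Pi.single j 1 : Fin r → ℝ) := by
  funext k
  simp [Finset.sum_apply, Pi.single_apply]

lemma f_inr {r m : ℕ} (hr : 1 ≤ r)
    (v : Fin r ⊕ Fin m → Fin r → ℝ)
    (hv1 : ∀ j : Fin r, v (Sum.inl j) = Pi.single j 1)
    (hv2 : ∀ i : Fin m, v (Sum.inr i)
      = fun k : Fin r => (if (k : ℕ) = r - 1 then ((i : ℕ) + 1 : ℝ) else 0) + 1)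
    (z : Fin r) (hz : (z : ℕ) = r - 1)
    (f : (Fin r → ℝ) →ₗ[ℝ] ℝ) (i : Fin m) :
    f (v (Sum.inr i)) = (∑ j, f (v (Sum.inl j))) + ((i:ℕ)+1:ℝ) * f (v (Sum.inl z)) := by
  have hd : v (Sum.inr i) = (fun _ => (1:ℝ)) + ((i:ℕ)+1:ℝ) • (Pi.single z 1 : Fin r → ℝ) := by
    funext k
    simp only [hv2, Pi.add_apply, Pi.smul_apply, Pi.single_apply, smul_eq_mul]
    have : ((k : ℕ) = r - 1) ↔ (k = z) := by
      rw [Fin.ext_iff, hz]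
    by_cases h : k = z
    · simp [this.mpr h, h, hz]
      ring
    · simp [h, (not_iff_not.mpr this).mpr h]
  rw [hd, map_add, map_smul, smul_eq_mul, one_decomp, map_sum]
  simp only [hv1]

lemma pi_inl {r m : ℕ}
    (v : Fin r ⊕ Fin m → Fin r → ℝ)
    (hv1 : ∀ j : Fin r, v (Sum.inl j) = Pi.single j 1)
    (π : (Fin r → ℝ) →ₗ[ℝ] ℝ) (hπ : ∀ x, π x = ∑ k, x k) (j : Fin r) :
    π (v (Sum.inl j)) = 1 := by
  rw [hπ, hv1]
  simp [Pi.single_apply]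

lemma pi_inr {r m : ℕ} (hr : 1 ≤ r)
    (v : Fin r ⊕ Fin m → Fin r → ℝ)
    (hv1 : ∀ j : Fin r, v (Sum.inl j) = Pi.single j 1)
    (hv2 : ∀ i : Fin m, v (Sum.inr i)
      = fun k : Fin r => (if (k : ℕ) = r - 1 then ((i : ℕ) + 1 : ℝ) else 0) + 1)
    (π : (Fin r → ℝ) →ₗ[ℝ] ℝ) (hπ : ∀ x, π x = ∑ k, x k)
    (z : Fin r) (hz : (z : ℕ) = r - 1) (i : Fin m) :
    π (v (Sum.inr i)) = (r:ℝ) + 1 + (i:ℕ) := by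
  rw [f_inr hr v hv1 hv2 z hz π i]
  have h1 : ∀ j : Fin r, π (v (Sum.inl j)) = 1 := pi_inl v hv1 π hπ
  simp only [h1]
  simp
  ring


set_option maxHeartbeats 1600000 in
lemma core_lemma (l r m : ℕ) (hr : 1 ≤ r) (hm : 1 ≤ m)
    (B : Fin r → Fin l) (α : Fin m → Fin l) (z : Fin r)
    (H1 : ∀ i, B z < α i)
    (H2 : ∀ i i' : Fin m, i' < i ↔ α i < α i')
    (H3 : ∃ j, α ⟨0, hm⟩ < B j) :
    ∃ u : Fin l → ℝ, StrictMono u ∧ u (B z) = 0 ∧ (∑ j, u (B j)) = 1 ∧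
      ∀ i : Fin m, u (α i) = 1 / ((r : ℝ) + 1 + (i : ℕ)) := by
  classical
  set i0 : Fin m := ⟨0, hm⟩ with hi0
  set β : Fin l := B z with hβ
  set istar : Fin l := α i0 with histar
  have hβistar : β < istar := H1 i0
  have hαle : ∀ i, α i ≤ istar := by
    intro i
    rcases eq_or_ne i i0 with h | h
    · rw [h]
    · refine le_of_lt ((H2 i i0).mp ?_)
      exact lt_of_le_of_ne (by simp [hi0, Fin.le_def]) (Ne.symm h)
  -- the counting function
  set g : Fin l → ℕ := fun k => (univ.filter (fun i => k < α i)).card with hg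
  have hg_anti : ∀ {k k' : Fin l}, k ≤ k' → g k' ≤ g k := by
    intro k k' hkk
    apply Finset.card_le_card
    intro i hi
    simp only [mem_filter, mem_univ, true_and] at hi ⊢
    exact lt_of_le_of_lt hkk hi
  have hg_lt : ∀ {k k' : Fin l} (i : Fin m), k < α i → α i ≤ k' → g k' < g k := by
    intro k k' i h1 h2
    have hsub : univ.filter (fun i' => k' < α i') ⊆ univ.filter (fun i' => k < α i') := by
      intro i' hi'
      simp only [mem_filter, mem_univ, true_and] at hi' ⊢
      exact lt_trans (lt_of_lt_of_le h1 h2) hi'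
    apply Finset.card_lt_card
    rw [Finset.ssubset_iff_of_subset hsub]
    exact ⟨i, by simp [h1], by simp [not_lt.mpr h2]⟩
  have hg_pin : ∀ i : Fin m, g (α i) = (i : ℕ) := by
    intro i
    have : univ.filter (fun i' => α i < α i') = Finset.Iio i := by
      ext i'
      simp [← H2 i i']
    simp only [hg, this, Fin.card_Iio]
  have hg_le : ∀ k, g k ≤ m := by
    intro k
    simpa using Finset.card_filter_le univ (fun i => k < α i)
  have hg_pos : ∀ k : Fin l, k < istar → 1 ≤ g k := by
    intro k hk
    have : i0 ∈ univ.filter (fun i => k < α i) := by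
      simp only [mem_filter, mem_univ, true_and]
      exact histar ▸ hk
    exact Finset.card_pos.mpr ⟨i0, this⟩
  -- epsilon
  set NR : ℝ := ((l + r + m + 2 : ℕ) : ℝ) with hNR
  have hNRpos : (0:ℝ) < NR := by
    rw [hNR]; exact_mod_cast Nat.succ_pos _
  have hlNR : (l:ℝ) ≤ NR := by rw [hNR]; exact_mod_cast by omega
  have hrNR : (r:ℝ) + (m:ℝ) + 2 ≤ NR := by
    rw [hNR]; push_cast
    have : (0:ℝ) ≤ (l:ℝ) := by positivity
    linarith
  set ε : ℝ := 1 / NR ^ 3 with hε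
  have hεpos : 0 < ε := by rw [hε]; positivity
  have hεl : ε * (l:ℝ) ≤ 1 / NR ^ 2 := by
    rw [hε, div_mul_eq_mul_div, one_mul, div_le_div_iff₀ (by positivity) (by positivity)]
    calc (l:ℝ) * NR ^ 2 ≤ NR * NR ^ 2 := by nlinarith
    _ = 1 * NR ^ 3 := by ring
  -- gap inequality
  have hgap : ∀ g1 g2 : ℕ, g2 < g1 → g1 ≤ m →
      1 / ((r:ℝ) + 1 + g1) + ε * (l:ℝ) < 1 / ((r:ℝ) + 1 + g2) := by
    intro g1 g2 h12 h1m
    have hc1 : (0:ℝ) < (r:ℝ) + 1 + g1 := by positivity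
    have hc2 : (0:ℝ) < (r:ℝ) + 1 + g2 := by positivity
    have hc3 : (0:ℝ) < (r:ℝ) + 2 + g2 := by positivity
    have hg12 : (g2:ℝ) + 1 ≤ g1 := by exact_mod_cast h12
    have step1 : 1 / ((r:ℝ) + 1 + g1) ≤ 1 / ((r:ℝ) + 2 + g2) := by
      apply one_div_le_one_div_of_le hc3
      linarith
    have hfacts : (r:ℝ) + 2 + g2 ≤ NR - 1 := by
      have : (g2:ℝ) + 1 ≤ m := le_trans hg12 (by exact_mod_cast h1m)
      linarith [hrNR]
    have step2 : ε * (l:ℝ) < 1 / ((r:ℝ) + 1 + g2) - 1 / ((r:ℝ) + 2 + g2) := by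
      have hdiff : 1 / ((r:ℝ) + 1 + g2) - 1 / ((r:ℝ) + 2 + g2)
          = 1 / (((r:ℝ) + 1 + g2) * ((r:ℝ) + 2 + g2)) := by
        field_simp
        ring
      rw [hdiff]
      have hprod : ((r:ℝ) + 1 + g2) * ((r:ℝ) + 2 + g2) < NR ^ 2 := by nlinarith
      calc ε * (l:ℝ) ≤ 1 / NR ^ 2 := hεl
      _ < 1 / (((r:ℝ) + 1 + g2) * ((r:ℝ) + 2 + g2)) := by
        apply one_div_lt_one_div_of_lt (by positivity) hprod
    linarith
  -- the base function
  set w : Fin l → ℝ := fun k =>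
    if (k:ℕ) ≤ (β:ℕ) then ε * (((k:ℕ):ℝ) - ((β:ℕ):ℝ))
    else 1 / ((r:ℝ) + 1 + g k) + (if ∃ i, α i = k then 0 else ε * (((k:ℕ):ℝ) - ((β:ℕ):ℝ)))
    with hw
  have hwβ : w β = 0 := by simp [hw]
  have hw_pin : ∀ i : Fin m, w (α i) = 1 / ((r:ℝ) + 1 + (i:ℕ)) := by
    intro i
    have h1 : ¬ ((α i : ℕ) ≤ (β:ℕ)) := not_le.mpr (H1 i)
    simp only [hw]
    rw [if_neg h1, if_pos ⟨i, rfl⟩, hg_pin i, add_zero]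
  have hw_ub : ∀ k, w k ≤ 1 / ((r:ℝ) + 1) + ε * (l:ℝ) := by
    intro k
    have hkl : ((k:ℕ):ℝ) - ((β:ℕ):ℝ) ≤ (l:ℝ) := by
      have : (k:ℕ) < l := k.isLt
      have h0 : (0:ℝ) ≤ ((β:ℕ):ℝ) := Nat.cast_nonneg _
      have : ((k:ℕ):ℝ) ≤ (l:ℝ) := by exact_mod_cast le_of_lt ‹(k:ℕ) < l›
      linarith
    simp only [hw]
    split_ifs with h1 h2
    · have : ((k:ℕ):ℝ) - ((β:ℕ):ℝ) ≤ 0 := by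
        have : ((k:ℕ):ℝ) ≤ ((β:ℕ):ℝ) := by exact_mod_cast h1
        linarith
      have h3 : ε * (((k:ℕ):ℝ) - ((β:ℕ):ℝ)) ≤ 0 := mul_nonpos_of_nonneg_of_nonpos (le_of_lt hεpos) this
      have h4 : (0:ℝ) < 1 / ((r:ℝ)+1) := by positivity
      nlinarith [mul_nonneg (le_of_lt hεpos) (show (0:ℝ) ≤ (l:ℝ) by positivity)]
    · have : 1 / ((r:ℝ) + 1 + (g k : ℕ)) ≤ 1 / ((r:ℝ) + 1) := by
        apply one_div_le_one_div_of_le (by positivity)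
        have : (0:ℝ) ≤ ((g k : ℕ):ℝ) := Nat.cast_nonneg _
        linarith
      nlinarith [mul_nonneg (le_of_lt hεpos) (show (0:ℝ) ≤ (l:ℝ) by positivity)]
    · have h5 : 1 / ((r:ℝ) + 1 + (g k : ℕ)) ≤ 1 / ((r:ℝ) + 1) := by
        apply one_div_le_one_div_of_le (by positivity)
        have : (0:ℝ) ≤ ((g k : ℕ):ℝ) := Nat.cast_nonneg _
        linarith
      have h6 : ε * (((k:ℕ):ℝ) - ((β:ℕ):ℝ)) ≤ ε * (l:ℝ) :=
        mul_le_mul_of_nonneg_left hkl (le_of_lt hεpos)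
      linarith
  -- weighted sums
  have hβi : (β:ℕ) ≤ (istar:ℕ) := le_of_lt hβistar
  set W : ℝ := ∑ j, w (B j) with hWdef
  set D : ℝ := ∑ j, ((((B j):ℕ) - ((istar):ℕ) : ℕ) : ℝ) with hDdef
  have hD : 0 < D := by
    obtain ⟨j0, hj0⟩ := H3
    rw [hDdef]
    apply Finset.sum_pos' (fun j _ => Nat.cast_nonneg _)
    refine ⟨j0, mem_univ _, ?_⟩
    have h1 : (istar:ℕ) < ((B j0):ℕ) := hj0
    have h2 : 1 ≤ ((B j0):ℕ) - (istar:ℕ) := by omega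
    exact_mod_cast Nat.lt_of_lt_of_le Nat.zero_lt_one h2
  have h1r : (1:ℝ) ≤ (r:ℝ) := by exact_mod_cast hr
  have hm1 : (1:ℝ) ≤ (m:ℝ) := by exact_mod_cast hm
  have hW : W < 1 := by
    have hsplit : ∑ j ∈ univ.erase z, w (B j) + w (B z) = W := Finset.sum_erase_add univ _ (mem_univ z)
    have hbz : w (B z) = 0 := by rw [← hβ]; exact hwβ
    have hbound : ∑ j ∈ univ.erase z, w (B j)
        ≤ ((univ.erase z).card : ℝ) * (1/((r:ℝ)+1) + ε * (l:ℝ)) := by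
      have := Finset.sum_le_card_nsmul (univ.erase z) (fun j => w (B j))
        (1/((r:ℝ)+1) + ε * (l:ℝ)) (fun j _ => hw_ub (B j))
      rwa [nsmul_eq_mul] at this
    have hcard : ((univ.erase z).card : ℝ) = (r:ℝ) - 1 := by
      rw [Finset.card_erase_of_mem (mem_univ z)]
      simp only [card_univ, Fintype.card_fin]
      push_cast [hr]
      ring
    have hεl0 : 0 ≤ ε * (l:ℝ) := mul_nonneg (le_of_lt hεpos) (Nat.cast_nonneg _)
    have e1 : ((r:ℝ)-1) * (ε*(l:ℝ)) < 1/NR := by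
      have i1 : ((r:ℝ)-1) * (ε*(l:ℝ)) ≤ ((r:ℝ)-1) * (1/NR^2) :=
        mul_le_mul_of_nonneg_left hεl (by linarith)
      have i2 : ((r:ℝ)-1) * (1/NR^2) < NR * (1/NR^2) := by
        apply mul_lt_mul_of_pos_right (by linarith) (by positivity)
      have i3 : NR * (1/NR^2) = 1/NR := by
        field_simp
      linarith
    have e2 : 1/NR < 2/((r:ℝ)+1) := by
      rw [div_lt_div_iff₀ (by positivity) (by positivity)]
      linarith
    have e3 : ((r:ℝ)-1) * (1/((r:ℝ)+1)) = 1 - 2/((r:ℝ)+1) := by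
      field_simp
      ring
    have e4 : ((r:ℝ)-1) * (1/((r:ℝ)+1) + ε * (l:ℝ))
        = ((r:ℝ)-1) * (1/((r:ℝ)+1)) + ((r:ℝ)-1) * (ε*(l:ℝ)) := by ring
    calc W = ∑ j ∈ univ.erase z, w (B j) + w (B z) := hsplit.symm
    _ = ∑ j ∈ univ.erase z, w (B j) := by rw [hbz, add_zero]
    _ ≤ ((r:ℝ) - 1) * (1/((r:ℝ)+1) + ε * (l:ℝ)) := by rw [← hcard]; exact hbound
    _ < 1 := by rw [e4, e3]; linarith
  set γ : ℝ := (1 - W) / D with hγdef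
  have hγ : 0 < γ := div_pos (by linarith) hD
  set u : Fin l → ℝ := fun k => w k + γ * ((((k):ℕ) - ((istar):ℕ) : ℕ) : ℝ) with hu
  have hns0 : ∀ k : Fin l, (k:ℕ) ≤ (istar:ℕ) → ((((k):ℕ) - ((istar):ℕ) : ℕ) : ℝ) = 0 := by
    intro k hk
    rw [Nat.sub_eq_zero_of_le hk]
    simp
  have huβ : u β = 0 := by
    simp only [hu]
    rw [hns0 β hβi, mul_zero, add_zero, hwβ]
  have hsum : ∑ j, u (B j) = 1 := by
    simp only [hu]
    rw [Finset.sum_add_distrib, ← Finset.mul_sum, ← hWdef, ← hDdef, hγdef,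
      div_mul_cancel₀ _ (ne_of_gt hD)]
    ring
  have hupin : ∀ i : Fin m, u (α i) = 1/((r:ℝ)+1+(i:ℕ)) := by
    intro i
    simp only [hu]
    rw [hns0 _ (hαle i), mul_zero, add_zero, hw_pin]
  have hmono : StrictMono u := by
    intro k k' hkk'
    have hv : (k:ℕ) < (k':ℕ) := hkk'
    have hvr : ((k:ℕ):ℝ) < ((k':ℕ):ℝ) := by exact_mod_cast hv
    have hnsmono : γ * ((((k):ℕ) - ((istar):ℕ) : ℕ) : ℝ) ≤ γ * ((((k'):ℕ) - ((istar):ℕ) : ℕ) : ℝ) := by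
      apply mul_le_mul_of_nonneg_left _ (le_of_lt hγ)
      exact_mod_cast Nat.sub_le_sub_right (le_of_lt hv) _
    simp only [hu]
    by_cases hb' : (k':ℕ) ≤ (β:ℕ)
    · have hb : (k:ℕ) ≤ (β:ℕ) := le_trans (le_of_lt hv) hb'
      have hz1 : ((k:ℕ) - (istar:ℕ) : ℕ) = 0 := Nat.sub_eq_zero_of_le (le_trans hb hβi)
      have hz2 : ((k':ℕ) - (istar:ℕ) : ℕ) = 0 := Nat.sub_eq_zero_of_le (le_trans hb' hβi)
      simp only [hw]
      rw [if_pos hb, if_pos hb', hz1, hz2]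
      simp only [Nat.cast_zero, mul_zero, add_zero]
      nlinarith [hεpos]
    · by_cases hb : (k:ℕ) ≤ (β:ℕ)
      · have hz1 : ((k:ℕ) - (istar:ℕ) : ℕ) = 0 := Nat.sub_eq_zero_of_le (le_trans hb hβi)
        have hwk : w k ≤ 0 := by
          simp only [hw]
          rw [if_pos hb]
          have : ((k:ℕ):ℝ) ≤ ((β:ℕ):ℝ) := by exact_mod_cast hb
          nlinarith [hεpos]
        have hwk' : 0 < w k' + γ * ((((k'):ℕ) - ((istar):ℕ) : ℕ) : ℝ) := by
          have hg1 : (0:ℝ) < 1/((r:ℝ)+1+(g k' : ℕ)) := by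
            have : (0:ℝ) ≤ ((g k' : ℕ):ℝ) := Nat.cast_nonneg _
            apply div_pos one_pos
            linarith
          have hite : (0:ℝ) ≤ (if ∃ i, α i = k' then 0 else ε * (((k':ℕ):ℝ) - ((β:ℕ):ℝ))) := by
            split_ifs with h
            · exact le_rfl
            · have : ((β:ℕ):ℝ) < ((k':ℕ):ℝ) := by exact_mod_cast not_le.mp hb'
              nlinarith [hεpos]
          have hns : (0:ℝ) ≤ γ * ((((k'):ℕ) - ((istar):ℕ) : ℕ) : ℝ) :=
            mul_nonneg (le_of_lt hγ) (Nat.cast_nonneg _)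
          have hwex : w k' = 1/((r:ℝ)+1+(g k' : ℕ)) + (if ∃ i, α i = k' then 0 else ε * (((k':ℕ):ℝ) - ((β:ℕ):ℝ))) := by
            simp only [hw]
            rw [if_neg hb']
          rw [hwex]
          linarith
        rw [hz1]
        simp only [Nat.cast_zero, mul_zero, add_zero]
        linarith
      · have hkβ : (β:ℕ) < (k:ℕ) := not_le.mp hb
        have hεkl : ε * (((k:ℕ):ℝ) - ((β:ℕ):ℝ)) ≤ ε * (l:ℝ) := by
          apply mul_le_mul_of_nonneg_left _ (le_of_lt hεpos)
          have h1 : ((k:ℕ):ℝ) ≤ (l:ℝ) := by exact_mod_cast le_of_lt k.isLt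
          have h2 : (0:ℝ) ≤ ((β:ℕ):ℝ) := Nat.cast_nonneg _
          linarith
        by_cases hA : ∃ i, k < α i ∧ α i ≤ k'
        · obtain ⟨i, hi1, hi2⟩ := hA
          have hglt : g k' < g k := hg_lt i hi1 hi2
          have hup : w k ≤ 1/((r:ℝ)+1+(g k:ℕ)) + ε * (l:ℝ) := by
            simp only [hw]
            rw [if_neg hb]
            split_ifs with h
            · have : 0 ≤ ε * (l:ℝ) := mul_nonneg (le_of_lt hεpos) (Nat.cast_nonneg _)
              linarith
            · linarith
          have hlow : 1/((r:ℝ)+1+(g k':ℕ)) ≤ w k' := by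
            simp only [hw]
            rw [if_neg hb']
            split_ifs with h
            · linarith
            · have : ((β:ℕ):ℝ) < ((k':ℕ):ℝ) := by exact_mod_cast not_le.mp hb'
              nlinarith [hεpos]
          have hgp := hgap (g k) (g k') hglt (hg_le k)
          linarith
        · push_neg at hA
          have hgeq : g k = g k' := by
            apply le_antisymm
            · apply Finset.card_le_card
              intro i hi
              simp only [mem_filter, mem_univ, true_and] at hi ⊢
              exact hA i hi
            · exact hg_anti (le_of_lt hkk')
          have hk'na : ¬ ∃ i, α i = k' := by
            rintro ⟨i, hik⟩
            have := hA i (hik ▸ hkk')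
            rw [hik] at this
            exact lt_irrefl _ this
          simp only [hw]
          rw [if_neg hb, if_neg hb', if_neg hk'na, hgeq]
          have hβk' : ((β:ℕ):ℝ) < ((k':ℕ):ℝ) := by exact_mod_cast not_le.mp hb'
          by_cases hka : ∃ i, α i = k
          · rw [if_pos hka]
            have : 0 < ε * (((k':ℕ):ℝ) - ((β:ℕ):ℝ)) := mul_pos hεpos (by linarith)
            linarith
          · rw [if_neg hka]
            have : ε * (((k:ℕ):ℝ) - ((β:ℕ):ℝ)) < ε * (((k':ℕ):ℝ) - ((β:ℕ):ℝ)) := by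
              apply mul_lt_mul_of_pos_left _ hεpos
              linarith
            linarith
  exact ⟨u, hmono, huβ, hsum, hupin⟩


/-- Coherence via a block-value function. -/
lemma coherent_of_blockvalue {r m l : ℕ}
    (v : Fin r ⊕ Fin m → Fin r → ℝ) (π : (Fin r → ℝ) →ₗ[ℝ] ℝ)
    (b : Fin r ⊕ Fin m → Fin l) (ψ : (Fin r → ℝ) →ₗ[ℝ] ℝ) (u : Fin l → ℝ)
    (hmono : StrictMono u)
    (key : ∀ e, ψ (v e) / π (v e) = u (b e)) :
    IsCoherent v π l b := by
  refine ⟨ψ, fun e e' => ⟨fun h => ?_, fun h => ?_⟩⟩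
  · rw [key, key, h]
  · rw [key, key]; exact hmono h

/-- Case: all a's in blocks above the block of e_r. -/
lemma lemA (r m : ℕ) (hr : 1 ≤ r) (hm : 1 ≤ m)
    (v : Fin r ⊕ Fin m → Fin r → ℝ)
    (hv1 : ∀ j : Fin r, v (Sum.inl j) = Pi.single j 1)
    (hv2 : ∀ i : Fin m, v (Sum.inr i)
      = fun k : Fin r => (if (k : ℕ) = r - 1 then ((i : ℕ) + 1 : ℝ) else 0) + 1)
    (π : (Fin r → ℝ) →ₗ[ℝ] ℝ) (hπ : ∀ x, π x = ∑ k, x k)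
    (l : ℕ) (b : Fin r ⊕ Fin m → Fin l)
    (hcell : IsCellularString v l b)
    (z : Fin r) (hz : (z : ℕ) = r - 1)
    (habove : ∀ i : Fin m, b (Sum.inl z) < b (Sum.inr i)) :
    IsCoherent v π l b := by
  classical
  obtain ⟨hsurj, hφ⟩ := hcell
  set B : Fin r → Fin l := fun j => b (Sum.inl j) with hB
  set α : Fin m → Fin l := fun i => b (Sum.inr i) with hα
  -- forward monotonicity
  have hfwd : ∀ i i' : Fin m, α i < α i' → i' < i := by
    intro i i' hlt
    obtain ⟨f, hf⟩ := hφ (α i)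
    have h0 : f (v (Sum.inr i)) = 0 := (hf (Sum.inr i)).1 rfl
    have hpos : 0 < f (v (Sum.inr i')) := (hf (Sum.inr i')).2.2 hlt
    have hτ : f (v (Sum.inl z)) < 0 := (hf (Sum.inl z)).2.1 (habove i)
    rw [f_inr hr v hv1 hv2 z hz f] at h0 hpos
    have : ((i':ℕ):ℝ) < ((i:ℕ):ℝ) := by nlinarith
    have : (i':ℕ) < (i:ℕ) := by exact_mod_cast this
    exact this
  have hinj : ∀ i i' : Fin m, α i = α i' → i = i' := by
    intro i i' heq
    obtain ⟨f, hf⟩ := hφ (α i)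
    have h0 : f (v (Sum.inr i)) = 0 := (hf (Sum.inr i)).1 rfl
    have h0' : f (v (Sum.inr i')) = 0 := (hf (Sum.inr i')).1 heq.symm
    have hτ : f (v (Sum.inl z)) < 0 := (hf (Sum.inl z)).2.1 (habove i)
    rw [f_inr hr v hv1 hv2 z hz f] at h0 h0'
    have : ((i':ℕ):ℝ) = ((i:ℕ):ℝ) := by
      have hτ' : f (v (Sum.inl z)) ≠ 0 := ne_of_lt hτ
      nlinarith [mul_self_nonneg (((i':ℕ):ℝ) - ((i:ℕ):ℝ))]
    have : (i':ℕ) = (i:ℕ) := by exact_mod_cast this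
    exact (Fin.ext this).symm
  have H2 : ∀ i i' : Fin m, i' < i ↔ α i < α i' := by
    intro i i'
    constructor
    · intro h
      rcases lt_trichotomy (α i) (α i') with hc | hc | hc
      · exact hc
      · exact absurd (hinj i i' hc) (ne_of_gt h)
      · exact absurd (hfwd i' i hc) (not_lt.mpr (le_of_lt h))
    · exact hfwd i i'
  have H3 : ∃ j, α ⟨0, hm⟩ < B j := by
    obtain ⟨f, hf⟩ := hφ (α ⟨0, hm⟩)
    have h0 : f (v (Sum.inr ⟨0, hm⟩)) = 0 := (hf (Sum.inr ⟨0, hm⟩)).1 rfl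
    have hτ : f (v (Sum.inl z)) < 0 := (hf (Sum.inl z)).2.1 (habove ⟨0, hm⟩)
    rw [f_inr hr v hv1 hv2 z hz f] at h0
    have hσ : 0 < ∑ j, f (v (Sum.inl j)) := by
      simp only [Fin.val_mk] at h0
      nlinarith
    have hex : ∃ j, 0 < f (v (Sum.inl j)) := by
      by_contra hno
      push_neg at hno
      exact absurd (Finset.sum_nonpos (fun j _ => hno j)) (not_le.mpr hσ)
    obtain ⟨j, hj⟩ := hex
    refine ⟨j, ?_⟩
    rcases lt_trichotomy (B j) (α ⟨0, hm⟩) with hc | hc | hc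
    · exact absurd ((hf (Sum.inl j)).2.1 hc) (not_lt.mpr (le_of_lt hj))
    · exact absurd ((hf (Sum.inl j)).1 hc) (ne_of_gt hj)
    · exact hc
  obtain ⟨u, humono, huz, husum, hupin⟩ := core_lemma l r m hr hm B α z habove H2 H3
  set ψ : (Fin r → ℝ) →ₗ[ℝ] ℝ := ∑ j, u (B j) • (LinearMap.proj j : (Fin r → ℝ) →ₗ[ℝ] ℝ) with hψ
  have hψinl : ∀ j, ψ (v (Sum.inl j)) = u (B j) := by
    intro j
    rw [hψ, hv1, psi_apply]
    simp [Pi.single_apply]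
  apply coherent_of_blockvalue v π b ψ u humono
  intro e
  match e with
  | Sum.inl j =>
    rw [hψinl j, pi_inl v hv1 π hπ j, div_one]
  | Sum.inr i =>
    rw [f_inr hr v hv1 hv2 z hz ψ i, pi_inr hr v hv1 hv2 π hπ z hz i]
    simp only [hψinl]
    rw [husum, huz]
    rw [mul_zero, add_zero]
    have := hupin i
    rw [this]

/-- Case: all a's in the block of e_r. -/
lemma lemB (r m : ℕ) (hr : 1 ≤ r) (hm : 1 ≤ m)
    (v : Fin r ⊕ Fin m → Fin r → ℝ)
    (hv1 : ∀ j : Fin r, v (Sum.inl j) = Pi.single j 1)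
    (hv2 : ∀ i : Fin m, v (Sum.inr i)
      = fun k : Fin r => (if (k : ℕ) = r - 1 then ((i : ℕ) + 1 : ℝ) else 0) + 1)
    (π : (Fin r → ℝ) →ₗ[ℝ] ℝ) (hπ : ∀ x, π x = ∑ k, x k)
    (l : ℕ) (b : Fin r ⊕ Fin m → Fin l)
    (hcell : IsCellularString v l b)
    (z : Fin r) (hz : (z : ℕ) = r - 1)
    (heq : ∀ i : Fin m, b (Sum.inr i) = b (Sum.inl z)) :
    IsCoherent v π l b := by
  classical
  obtain ⟨hsurj, hφ⟩ := hcell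
  set B : Fin r → Fin l := fun j => b (Sum.inl j) with hB
  set β : Fin l := b (Sum.inl z) with hβ
  obtain ⟨f, hf⟩ := hφ β
  have hτ : f (v (Sum.inl z)) = 0 := (hf _).1 rfl
  have hσ : ∑ j, f (v (Sum.inl j)) = 0 := by
    have h0 : f (v (Sum.inr ⟨0, hm⟩)) = 0 := (hf _).1 (heq _)
    rw [f_inr hr v hv1 hv2 z hz f, hτ] at h0
    simpa using h0
  have hsign : ∀ j, (B j = β → f (v (Sum.inl j)) = 0) ∧ (B j < β → f (v (Sum.inl j)) < 0) ∧
      (β < B j → 0 < f (v (Sum.inl j))) := fun j => hf (Sum.inl j)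
  have himp1 : (∃ j, β < B j) → (∃ j, B j < β) := by
    rintro ⟨j0, hj0⟩
    by_contra hno
    push_neg at hno
    have hpos : 0 < ∑ j, f (v (Sum.inl j)) := by
      apply Finset.sum_pos'
      · intro j _
        rcases lt_or_eq_of_le (hno j) with h | h
        · exact le_of_lt ((hsign j).2.2 h)
        · rw [(hsign j).1 h.symm]
      · exact ⟨j0, mem_univ _, (hsign j0).2.2 hj0⟩
    rw [hσ] at hpos
    exact lt_irrefl _ hpos
  have himp2 : (∃ j, B j < β) → (∃ j, β < B j) := by
    rintro ⟨j0, hj0⟩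
    by_contra hno
    push_neg at hno
    have hneg : ∑ j, f (v (Sum.inl j)) < 0 := by
      have hpos : 0 < ∑ j, (-(f (v (Sum.inl j)))) := by
        apply Finset.sum_pos'
        · intro j _
          rcases lt_or_eq_of_le (hno j) with h | h
          · exact le_of_lt (neg_pos.mpr ((hsign j).2.1 h))
          · rw [(hsign j).1 h, neg_zero]
        · exact ⟨j0, mem_univ _, neg_pos.mpr ((hsign j0).2.1 hj0)⟩
      rw [Finset.sum_neg_distrib] at hpos
      linarith
    rw [hσ] at hneg
    exact lt_irrefl _ hneg
  set P : ℝ := ∑ j, (if β < B j then ((((B j):ℕ) - ((β):ℕ) : ℕ) : ℝ) else 0) with hP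
  set Q : ℝ := ∑ j, (if B j < β then ((((β):ℕ) - (((B j)):ℕ) : ℕ) : ℝ) else 0) with hQ
  set Pd : ℝ := if 0 < P then P else 1 with hPd
  set Qd : ℝ := if 0 < Q then Q else 1 with hQd
  have hPdpos : 0 < Pd := by
    rw [hPd]; split_ifs with h
    · exact h
    · exact one_pos
  have hQdpos : 0 < Qd := by
    rw [hQd]; split_ifs with h
    · exact h
    · exact one_pos
  set u : Fin l → ℝ := fun k =>
    if (k:ℕ) < (β:ℕ) then (((k:ℕ):ℝ) - ((β:ℕ):ℝ))/Qd else (((k:ℕ):ℝ) - ((β:ℕ):ℝ))/Pd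
    with hu
  have huβ : u β = 0 := by
    simp [hu]
  have humono : StrictMono u := by
    intro k k' hkk'
    have hv : (k:ℕ) < (k':ℕ) := hkk'
    have hvr : ((k:ℕ):ℝ) < ((k':ℕ):ℝ) := by exact_mod_cast hv
    simp only [hu]
    by_cases h1 : (k':ℕ) < (β:ℕ)
    · have h2 : (k:ℕ) < (β:ℕ) := lt_trans hv h1
      rw [if_pos h1, if_pos h2]
      apply div_lt_div_of_pos_right ?_ hQdpos
      linarith
    · by_cases h2 : (k:ℕ) < (β:ℕ)
      · rw [if_neg h1, if_pos h2]
        have ha : (((k:ℕ):ℝ) - ((β:ℕ):ℝ))/Qd < 0 := by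
          apply div_neg_of_neg_of_pos ?_ hQdpos
          have : ((k:ℕ):ℝ) < ((β:ℕ):ℝ) := by exact_mod_cast h2
          linarith
        have hb : (0:ℝ) ≤ (((k':ℕ):ℝ) - ((β:ℕ):ℝ))/Pd := by
          apply div_nonneg ?_ (le_of_lt hPdpos)
          have : ((β:ℕ):ℝ) ≤ ((k':ℕ):ℝ) := by exact_mod_cast not_lt.mp h1
          linarith
        linarith
      · rw [if_neg h1, if_neg h2]
        apply div_lt_div_of_pos_right ?_ hPdpos
        linarith
  have hkey : ∀ j, u (B j) = (if β < B j then ((((B j):ℕ) - ((β):ℕ) : ℕ) : ℝ) else 0)/Pd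
      - (if B j < β then ((((β):ℕ) - (((B j)):ℕ) : ℕ) : ℝ) else 0)/Qd := by
    intro j
    simp only [hu]
    rcases lt_trichotomy (B j) β with hc | hc | hc
    · have hcv : ((B j):ℕ) < (β:ℕ) := hc
      rw [if_pos hcv, if_neg (not_lt.mpr (le_of_lt hc)), if_pos hc]
      rw [Nat.cast_sub (le_of_lt hcv)]
      field_simp
      ring
    · have hcv : ¬ (((B j):ℕ) < (β:ℕ)) := by rw [hc]; exact lt_irrefl _
      rw [if_neg hcv, if_neg (by rw [hc]; exact lt_irrefl β), if_neg (by rw [hc]; exact lt_irrefl β), hc]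
      simp
    · have hcv : ¬ (((B j):ℕ) < (β:ℕ)) := not_lt.mpr (le_of_lt hc)
      rw [if_neg hcv, if_pos hc, if_neg (not_lt.mpr (le_of_lt hc))]
      rw [Nat.cast_sub (le_of_lt (show (β:ℕ) < ((B j):ℕ) from hc))]
      field_simp
      ring
  have husum : ∑ j, u (B j) = 0 := by
    rw [Finset.sum_congr rfl (fun j _ => hkey j), Finset.sum_sub_distrib,
      ← Finset.sum_div, ← Finset.sum_div, ← hP, ← hQ]
    by_cases hex : ∃ j, β < B j
    · have hPpos : 0 < P := by
        obtain ⟨j0, hj0⟩ := hex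
        rw [hP]
        apply Finset.sum_pos'
        · intro j _
          split_ifs
          · exact Nat.cast_nonneg _
          · exact le_rfl
        · refine ⟨j0, mem_univ _, ?_⟩
          rw [if_pos hj0]
          have h1 : (β:ℕ) < ((B j0):ℕ) := hj0
          exact_mod_cast Nat.sub_pos_of_lt h1
      have hQpos : 0 < Q := by
        obtain ⟨j0, hj0⟩ := himp1 hex
        rw [hQ]
        apply Finset.sum_pos'
        · intro j _
          split_ifs
          · exact Nat.cast_nonneg _
          · exact le_rfl
        · refine ⟨j0, mem_univ _, ?_⟩
          rw [if_pos hj0]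
          have h1 : ((B j0):ℕ) < (β:ℕ) := hj0
          exact_mod_cast Nat.sub_pos_of_lt h1
      have e1 : Pd = P := by rw [hPd, if_pos hPpos]
      have e2 : Qd = Q := by rw [hQd, if_pos hQpos]
      rw [e1, e2, div_self (ne_of_gt hPpos), div_self (ne_of_gt hQpos)]
      ring
    · have hex2 : ¬ ∃ j, B j < β := fun h => hex (himp2 h)
      push_neg at hex hex2
      have hP0 : P = 0 := by
        rw [hP]
        apply Finset.sum_eq_zero
        intro j _
        rw [if_neg (not_lt.mpr (hex j))]
      have hQ0 : Q = 0 := by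
        rw [hQ]
        apply Finset.sum_eq_zero
        intro j _
        rw [if_neg (not_lt.mpr (hex2 j))]
      rw [hP0, hQ0]
      simp
  set ψ : (Fin r → ℝ) →ₗ[ℝ] ℝ := ∑ j, u (B j) • (LinearMap.proj j : (Fin r → ℝ) →ₗ[ℝ] ℝ) with hψ
  have hψinl : ∀ j, ψ (v (Sum.inl j)) = u (B j) := by
    intro j
    rw [hψ, hv1, psi_apply]
    simp [Pi.single_apply]
  apply coherent_of_blockvalue v π b ψ u humono
  intro e
  match e with
  | Sum.inl j => rw [hψinl j, pi_inl v hv1 π hπ j, div_one]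
  | Sum.inr i =>
    rw [f_inr hr v hv1 hv2 z hz ψ i, pi_inr hr v hv1 hv2 π hπ z hz i]
    simp only [hψinl]
    rw [husum, heq i, show u (B z) = 0 from huβ, mul_zero, add_zero, zero_div]

lemma cell_rev {E : Type*} [Fintype E] {V : Type*} [AddCommGroup V] [Module ℝ V]
    (v : E → V) (l : ℕ) (b : E → Fin l) (h : IsCellularString v l b) :
    IsCellularString v l (fun e => (b e).rev) := by
  obtain ⟨hs, hφ⟩ := h
  constructor
  · intro i
    obtain ⟨e, he⟩ := hs i.rev
    exact ⟨e, by show (b e).rev = i; rw [he, Fin.rev_rev]⟩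
  · intro i
    obtain ⟨φ, hφi⟩ := hφ i.rev
    refine ⟨-φ, fun e => ⟨?_, ?_, ?_⟩⟩
    · intro hbe
      have hbe2 : (b e).rev = i := hbe
      have h1 : b e = i.rev := by rw [← hbe2, Fin.rev_rev]
      simp [(hφi e).1 h1]
    · intro hbe
      have hbe2 : (b e).rev < i := hbe
      have h2 : (b e).rev < (i.rev).rev := by rwa [Fin.rev_rev]
      have h3 : i.rev < b e := Fin.rev_lt_rev.mp h2
      have := (hφi e).2.2 h3
      simpa using this
    · intro hbe
      have hbe2 : i < (b e).rev := hbe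
      have h2 : (i.rev).rev < (b e).rev := by rwa [Fin.rev_rev]
      have h3 : b e < i.rev := Fin.rev_lt_rev.mp h2
      have := (hφi e).2.1 h3
      simpa using this

lemma coh_rev {E : Type*} [Fintype E] {V : Type*} [AddCommGroup V] [Module ℝ V]
    (v : E → V) (π : V →ₗ[ℝ] ℝ) (l : ℕ) (b : E → Fin l)
    (h : IsCoherent v π l (fun e => (b e).rev)) : IsCoherent v π l b := by
  obtain ⟨ψ, hψ⟩ := h
  refine ⟨-ψ, fun e e' => ⟨?_, ?_⟩⟩
  · intro hbe
    have h1 := (hψ e e').1 (by show (b e).rev = (b e').rev; rw [hbe])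
    simp only [LinearMap.neg_apply, neg_div]
    rw [h1]
  · intro hbe
    have h2 : (b e').rev < (b e).rev := Fin.rev_lt_rev.mpr hbe
    have h1 := (hψ e' e).2 h2
    simp only [LinearMap.neg_apply, neg_div]
    linarith

/-- For all positive integers `r, m`, the configuration `E_{r,m}` — the
standard basis vectors `e_1, …, e_r` of `ℝ^r` together with `a_i = i•e_r + (e_1 + ⋯ + e_r)`
for `i = 1, …, m`, with `π(x) = x_1 + ⋯ + x_r` — is all-coherent. -/
theorem statement9 (r m : ℕ) (hr : 1 ≤ r) (hm : 1 ≤ m)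
    (v : Fin r ⊕ Fin m → Fin r → ℝ)
    (hv1 : ∀ j : Fin r, v (Sum.inl j) = Pi.single j 1)
    (hv2 : ∀ i : Fin m, v (Sum.inr i)
      = fun k : Fin r => (if (k : ℕ) = r - 1 then ((i : ℕ) + 1 : ℝ) else 0) + 1)
    (π : (Fin r → ℝ) →ₗ[ℝ] ℝ) (hπ : ∀ x, π x = ∑ k, x k) :
    AllCoherent v π := by
  intro l b hcell
  classical
  have hzlt : r - 1 < r := by omega
  set z : Fin r := ⟨r - 1, hzlt⟩ with hzdef
  have hz : (z : ℕ) = r - 1 := rfl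
  obtain ⟨f, hf⟩ := hcell.2 (b (Sum.inl z))
  have hτ : f (v (Sum.inl z)) = 0 := (hf _).1 rfl
  have hfa : ∀ i : Fin m, f (v (Sum.inr i)) = ∑ j, f (v (Sum.inl j)) := by
    intro i
    rw [f_inr hr v hv1 hv2 z hz f, hτ, mul_zero, add_zero]
  set i0 : Fin m := ⟨0, hm⟩ with hi0
  rcases lt_trichotomy (b (Sum.inr i0)) (b (Sum.inl z)) with hc | hc | hc
  · have hσ : ∑ j, f (v (Sum.inl j)) < 0 := by
      have := (hf (Sum.inr i0)).2.1 hc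
      rwa [hfa i0] at this
    have hbelow : ∀ i : Fin m, b (Sum.inr i) < b (Sum.inl z) := by
      intro i
      rcases lt_trichotomy (b (Sum.inr i)) (b (Sum.inl z)) with h | h | h
      · exact h
      · exact absurd ((hf (Sum.inr i)).1 h) (by rw [hfa i]; exact ne_of_lt hσ)
      · exact absurd ((hf (Sum.inr i)).2.2 h) (by rw [hfa i]; exact not_lt.mpr (le_of_lt hσ))
    apply coh_rev v π l b
    apply lemA r m hr hm v hv1 hv2 π hπ l _ (cell_rev v l b hcell) z hz
    intro i
    exact Fin.rev_lt_rev.mpr (hbelow i)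
  · have hσ : ∑ j, f (v (Sum.inl j)) = 0 := by rw [← hfa i0]; exact (hf (Sum.inr i0)).1 hc
    have heqa : ∀ i : Fin m, b (Sum.inr i) = b (Sum.inl z) := by
      intro i
      rcases lt_trichotomy (b (Sum.inr i)) (b (Sum.inl z)) with h | h | h
      · exact absurd ((hf (Sum.inr i)).2.1 h) (by rw [hfa i, hσ]; exact lt_irrefl 0)
      · exact h
      · exact absurd ((hf (Sum.inr i)).2.2 h) (by rw [hfa i, hσ]; exact lt_irrefl 0)
    exact lemB r m hr hm v hv1 hv2 π hπ l b hcell z hz heqa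
  · have hσ : 0 < ∑ j, f (v (Sum.inl j)) := by
      have := (hf (Sum.inr i0)).2.2 hc
      rwa [hfa i0] at this
    have habove : ∀ i : Fin m, b (Sum.inl z) < b (Sum.inr i) := by
      intro i
      rcases lt_trichotomy (b (Sum.inr i)) (b (Sum.inl z)) with h | h | h
      · exact absurd ((hf (Sum.inr i)).2.1 h) (by rw [hfa i]; exact not_lt.mpr (le_of_lt hσ))
      · exact absurd ((hf (Sum.inr i)).1 h) (by rw [hfa i]; exact (ne_of_gt hσ))
      · exact h
    exact lemA r m hr hm v hv1 hv2 π hπ l b hcell z hz habove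
end

section
/- Let r ≥ 2 and m ≥ 1, and let E = {e_1, …, e_r, a_1, …, a_m} be the vectors of the configuration E_{r,m}. Let ≺ be a linear order on E that is a monotone path order, i.e., for every u ∈ E there exists a linear functional φ on ℝ^r with φ(u) = 0, φ(w) < 0 for all w ≺ u, and φ(w) > 0 for all w with u ≺ w. Then the ≺-maximum and ≺-minimum elements of E both belong to {e_1, …, e_r}, and either e_r ≺ a_m ≺ ⋯ ≺ a_1 or a_1 ≺ ⋯ ≺ a_m ≺ e_r. -/
open Finset

lemma my_exists_min {α : Type*} (p : α → α → Prop)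
    (tri : ∀ a b, a ≠ b → p a b ∨ p b a)
    (tr : ∀ a b c, p a b → p b c → p a c)
    (s : Finset α) (hs : s.Nonempty) :
    ∃ a ∈ s, ∀ b ∈ s, b ≠ a → p a b := by
  classical
  induction s using Finset.induction_on with
  | empty => simp at hs
  | @insert x s hx ih =>
    rcases s.eq_empty_or_nonempty with rfl | hsn
    · exact ⟨x, Finset.mem_insert_self _ _, by
        intro b hb hbx
        simp only [Finset.mem_insert, Finset.notMem_empty, or_false] at hb
        exact absurd hb hbx⟩
    · obtain ⟨a, ha, hamin⟩ := ih hsn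
      have hax : a ≠ x := fun h => hx (h ▸ ha)
      rcases tri a x hax with h | h
      · exact ⟨a, Finset.mem_insert_of_mem ha, by
          intro b hb hba
          rcases Finset.mem_insert.1 hb with rfl | hb
          · exact h
          · exact hamin b hb hba⟩
      · refine ⟨x, Finset.mem_insert_self _ _, ?_⟩
        intro b hb hbx
        rcases Finset.mem_insert.1 hb with rfl | hb
        · exact absurd rfl hbx
        · by_cases hba : b = a
          · exact hba ▸ h
          · exact tr x a b h (hamin b hb hba)

/-- For the configuration `E_{r,m}` (`r ≥ 2`, `m ≥ 1`), every monotone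
path order `≺` (a linear order such that each vector is cut off from its predecessors and
successors by a linear functional) has its maximum and minimum among the basis vectors
`e_1, …, e_r`, and satisfies `e_r ≺ a_m ≺ ⋯ ≺ a_1` or `a_1 ≺ ⋯ ≺ a_m ≺ e_r`. -/
theorem statement11 (r m : ℕ) (hr : 2 ≤ r) (hm : 1 ≤ m)
    (v : Fin r ⊕ Fin m → Fin r → ℝ)
    (hv1 : ∀ j : Fin r, v (Sum.inl j) = Pi.single j 1)
    (hv2 : ∀ i : Fin m, v (Sum.inr i)
      = fun k : Fin r => (if (k : ℕ) = r - 1 then ((i : ℕ) + 1 : ℝ) else 0) + 1)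
    (prec : Fin r ⊕ Fin m → Fin r ⊕ Fin m → Prop)
    (hord : IsStrictTotalOrder (Fin r ⊕ Fin m) prec)
    (hmono : ∀ u : Fin r ⊕ Fin m, ∃ φ : (Fin r → ℝ) →ₗ[ℝ] ℝ,
      φ (v u) = 0 ∧ (∀ w, prec w u → φ (v w) < 0) ∧ (∀ w, prec u w → 0 < φ (v w))) :
    ((∃ j : Fin r, ∀ u, u ≠ Sum.inl j → prec (Sum.inl j) u) ∧
     (∃ j : Fin r, ∀ u, u ≠ Sum.inl j → prec u (Sum.inl j))) ∧
    ((prec (Sum.inl ⟨r - 1, by omega⟩) (Sum.inr ⟨m - 1, by omega⟩) ∧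
        ∀ i i' : Fin m, i < i' → prec (Sum.inr i') (Sum.inr i)) ∨
     ((∀ i i' : Fin m, i < i' → prec (Sum.inr i) (Sum.inr i')) ∧
        prec (Sum.inr ⟨m - 1, by omega⟩) (Sum.inl ⟨r - 1, by omega⟩))) := by
  classical
  have tri : ∀ a b, a ≠ b → prec a b ∨ prec b a := by
    intro a b h
    rcases (by have := hord.trichotomous a b; tauto : prec a b ∨ a = b ∨ prec b a) with h1 | h1 | h1
    · exact Or.inl h1
    · exact absurd h1 h
    · exact Or.inr h1
  have tr : ∀ a b c, prec a b → prec b c → prec a c := fun a b c => hord.trans a b c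
  have asym : ∀ a b, prec a b → ¬ prec b a := by
    intro a b hab hba
    exact hord.irrefl a (tr a b a hab hba)
  set rr : Fin r := ⟨r - 1, by omega⟩ with hrr
  -- value of any functional on the configuration vectors
  have hval : ∀ (φ : (Fin r → ℝ) →ₗ[ℝ] ℝ) (k : Fin m),
      φ (v (Sum.inr k)) = (∑ j, φ (v (Sum.inl j))) + ((k : ℕ) + 1 : ℝ) * φ (v (Sum.inl rr)) := by
    intro φ k
    have hδ : ∀ j : Fin r, (fun j' => if j = j' then (1:ℝ) else 0) = v (Sum.inl j) := by
      intro j; rw [hv1]; funext j'; simp [Pi.single_apply, eq_comm]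
    rw [hv2, LinearMap.pi_apply_eq_sum_univ]
    simp only [hδ]
    have hcond : ∀ j : Fin r, ((j : ℕ) = r - 1) = (j = rr) := by
      intro j
      simp [Fin.ext_iff, hrr]
    simp only [hcond, smul_eq_mul, add_mul, one_mul, Finset.sum_add_distrib, ite_mul, zero_mul,
      Finset.sum_ite_eq', Finset.mem_univ, if_true]
    ring
  -- Part 1: min and max are basis vectors
  have part1min : ∃ j : Fin r, ∀ u, u ≠ Sum.inl j → prec (Sum.inl j) u := by
    obtain ⟨u0, -, hu0⟩ := my_exists_min prec tri tr Finset.univ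
      ⟨Sum.inl ⟨0, by omega⟩, Finset.mem_univ _⟩
    obtain i | i := u0
    · exact ⟨i, fun u hu => hu0 u (Finset.mem_univ _) hu⟩
    · exfalso
      obtain ⟨φ, hφ0, -, hφpos⟩ := hmono (Sum.inr i)
      have hb : ∀ j : Fin r, 0 < φ (v (Sum.inl j)) := fun j =>
        hφpos _ (hu0 _ (Finset.mem_univ _) (by simp))
      have hs : 0 < ∑ j, φ (v (Sum.inl j)) :=
        Finset.sum_pos (fun j _ => hb j) ⟨⟨0, by omega⟩, Finset.mem_univ _⟩
      have := hval φ i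
      rw [hφ0] at this
      nlinarith [hb rr, (by positivity : (0:ℝ) < (i : ℕ) + 1)]
  have part1max : ∃ j : Fin r, ∀ u, u ≠ Sum.inl j → prec u (Sum.inl j) := by
    obtain ⟨u0, -, hu0⟩ := my_exists_min (fun a b => prec b a)
      (fun a b h => (tri a b h).symm) (fun a b c h1 h2 => tr c b a h2 h1) Finset.univ
      ⟨Sum.inl ⟨0, by omega⟩, Finset.mem_univ _⟩
    obtain i | i := u0
    · exact ⟨i, fun u hu => hu0 u (Finset.mem_univ _) hu⟩
    · exfalso
      obtain ⟨φ, hφ0, hφneg, -⟩ := hmono (Sum.inr i)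
      have hb : ∀ j : Fin r, φ (v (Sum.inl j)) < 0 := fun j =>
        hφneg _ (hu0 _ (Finset.mem_univ _) (by simp))
      have hs : ∑ j, φ (v (Sum.inl j)) < 0 :=
        Finset.sum_neg (fun j _ => hb j) ⟨⟨0, by omega⟩, Finset.mem_univ _⟩
      have := hval φ i
      rw [hφ0] at this
      nlinarith [hb rr, (by positivity : (0:ℝ) < (i : ℕ) + 1)]
  -- Part 2
  choose φ hφ0 hφneg hφpos using hmono
  set c : Fin m → ℝ := fun i => φ (Sum.inr i) (v (Sum.inl rr)) with hc
  have hkval : ∀ i k : Fin m,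
      φ (Sum.inr i) (v (Sum.inr k)) = ((k : ℕ) - (i : ℕ) : ℝ) * c i := by
    intro i k
    have h1 := hval (φ (Sum.inr i)) k
    have h2 := hval (φ (Sum.inr i)) i
    have h0 := hφ0 (Sum.inr i)
    rw [h2] at h0
    rw [h1]
    linear_combination h0
  have hc0 : ∀ i, c i ≠ 0 := by
    intro i h
    rcases tri (Sum.inl rr) (Sum.inr i) (by simp) with h1 | h1
    · have h2 : c i < 0 := hφneg (Sum.inr i) _ h1
      rw [h] at h2; exact lt_irrefl _ h2
    · have h2 : 0 < c i := hφpos (Sum.inr i) _ h1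
      rw [h] at h2; exact lt_irrefl _ h2
  have hlt : ∀ i k : Fin m, 0 < c i → i < k → prec (Sum.inr i) (Sum.inr k) := by
    intro i k hci hik
    have hpos : 0 < φ (Sum.inr i) (v (Sum.inr k)) := by
      rw [hkval]
      have : (i : ℝ) < (k : ℝ) := by exact_mod_cast hik
      nlinarith
    rcases tri (Sum.inr i) (Sum.inr k) (by simp [Fin.ext_iff]; omega) with h | h
    · exact h
    · exact absurd (hφneg (Sum.inr i) _ h) (by linarith)
  have hlt' : ∀ i k : Fin m, 0 < c i → k < i → prec (Sum.inr k) (Sum.inr i) := by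
    intro i k hci hki
    have hneg : φ (Sum.inr i) (v (Sum.inr k)) < 0 := by
      rw [hkval]
      have : (k : ℝ) < (i : ℝ) := by exact_mod_cast hki
      nlinarith
    rcases tri (Sum.inr k) (Sum.inr i) (by simp [Fin.ext_iff]; omega) with h | h
    · exact h
    · exact absurd (hφpos (Sum.inr i) _ h) (by linarith)
  have hgt : ∀ i k : Fin m, c i < 0 → i < k → prec (Sum.inr k) (Sum.inr i) := by
    intro i k hci hik
    have hneg : φ (Sum.inr i) (v (Sum.inr k)) < 0 := by
      rw [hkval]
      have : (i : ℝ) < (k : ℝ) := by exact_mod_cast hik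
      nlinarith
    rcases tri (Sum.inr k) (Sum.inr i) (by simp [Fin.ext_iff]; omega) with h | h
    · exact h
    · exact absurd (hφpos (Sum.inr i) _ h) (by linarith)
  have hgt' : ∀ i k : Fin m, c i < 0 → k < i → prec (Sum.inr i) (Sum.inr k) := by
    intro i k hci hki
    have hpos : 0 < φ (Sum.inr i) (v (Sum.inr k)) := by
      rw [hkval]
      have : (k : ℝ) < (i : ℝ) := by exact_mod_cast hki
      nlinarith
    rcases tri (Sum.inr i) (Sum.inr k) (by simp [Fin.ext_iff]; omega) with h | h
    · exact h
    · exact absurd (hφneg (Sum.inr i) _ h) (by linarith)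
  have her_pos : ∀ i : Fin m, 0 < c i → prec (Sum.inr i) (Sum.inl rr) := by
    intro i hci
    rcases tri (Sum.inr i) (Sum.inl rr) (by simp) with h | h
    · exact h
    · exact absurd (hφneg (Sum.inr i) _ h) (not_lt.2 hci.le)
  have her_neg : ∀ i : Fin m, c i < 0 → prec (Sum.inl rr) (Sum.inr i) := by
    intro i hci
    rcases tri (Sum.inl rr) (Sum.inr i) (by simp) with h | h
    · exact h
    · exact absurd (hφpos (Sum.inr i) _ h) (not_lt.2 hci.le)
  have hsign : (∀ i, 0 < c i) ∨ (∀ i, c i < 0) := by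
    by_contra hcon
    push_neg at hcon
    obtain ⟨⟨i, hi⟩, ⟨k, hk⟩⟩ := hcon
    have hineg : c i < 0 := lt_of_le_of_ne hi (hc0 i)
    have hkpos : 0 < c k := lt_of_le_of_ne hk (Ne.symm (hc0 k))
    have hik : i ≠ k := by rintro rfl; linarith
    rcases lt_or_gt_of_ne hik with h | h
    · exact asym _ _ (hgt i k hineg h) (hlt' k i hkpos h)
    · exact asym _ _ (hgt' i k hineg h) (hlt k i hkpos h)
  refine ⟨⟨part1min, part1max⟩, ?_⟩
  rcases hsign with hpos | hneg
  · exact Or.inr ⟨fun i i' h => hlt i i' (hpos i) h, her_pos ⟨m - 1, by omega⟩ (hpos _)⟩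
  · exact Or.inl ⟨her_neg ⟨m - 1, by omega⟩ (hneg _), fun i i' h => hgt i i' (hneg i) h⟩
end

section
/- Let b_1, b_2, b_3 be affinely independent points in ℝ², and let a_1, a_2, a_3, a_4 be four distinct points of the closed triangle conv{b_1, b_2, b_3}, none equal to any of b_1, b_2, b_3, and not all four lying on a common line. Then it is not the case that for every pair of indices 1 ≤ i < j ≤ 4 there exists k ∈ {1, 2, 3} such that a_i, a_j, b_k are collinear. -/
/-- Twice the signed area of triangle `p q r`. -/
def TT (p q r : Fin 2 → ℝ) : ℝ :=
  (q 0 - p 0) * (r 1 - p 1) - (q 1 - p 1) * (r 0 - p 0)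

lemma TTz1 {p q r : Fin 2 → ℝ} (h : TT p q r = 0) : TT p r q = 0 := by
  unfold TT at h ⊢; linear_combination -h
lemma TTz2 {p q r : Fin 2 → ℝ} (h : TT p q r = 0) : TT q p r = 0 := by
  unfold TT at h ⊢; linear_combination -h
lemma TTz3 {p q r : Fin 2 → ℝ} (h : TT p q r = 0) : TT q r p = 0 := by
  unfold TT at h ⊢; linear_combination h
lemma TTz4 {p q r : Fin 2 → ℝ} (h : TT p q r = 0) : TT r p q = 0 := by
  unfold TT at h ⊢; linear_combination h

lemma TT_self1 (p q : Fin 2 → ℝ) : TT p q p = 0 := by unfold TT; ring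
lemma TT_self2 (p q : Fin 2 → ℝ) : TT p q q = 0 := by unfold TT; ring

lemma fun2_ne {p q : Fin 2 → ℝ} (h : p ≠ q) : q 0 - p 0 ≠ 0 ∨ q 1 - p 1 ≠ 0 := by
  by_contra hc
  push_neg at hc
  apply h
  funext c
  fin_cases c
  · have := hc.1; simpa using by linarith
  · have := hc.2; simpa using by linarith

lemma glue {p q r s : Fin 2 → ℝ} (hpq : p ≠ q) (h1 : TT p q r = 0) (h2 : TT p q s = 0) :
    TT p r s = 0 := by
  rcases fun2_ne hpq with h | h
  · have key : (q 0 - p 0) * TT p r s =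
        (r 0 - p 0) * TT p q s - (s 0 - p 0) * TT p q r := by unfold TT; ring
    rw [h1, h2] at key
    have h' : (q 0 - p 0) * TT p r s = 0 := by rw [key]; ring
    exact (mul_eq_zero.mp h').resolve_left h
  · have key : (q 1 - p 1) * TT p r s =
        (r 1 - p 1) * TT p q s - (s 1 - p 1) * TT p q r := by unfold TT; ring
    rw [h1, h2] at key
    have h' : (q 1 - p 1) * TT p r s = 0 := by rw [key]; ring
    exact (mul_eq_zero.mp h').resolve_left h

lemma line_mem {p q r : Fin 2 → ℝ} (hpq : p ≠ q) (h : TT p q r = 0) :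
    ∃ t : ℝ, r = t • (q - p) + p := by
  rcases fun2_ne hpq with h0 | h0
  · refine ⟨(r 0 - p 0) / (q 0 - p 0), funext fun c => ?_⟩
    simp only [Pi.add_apply, Pi.smul_apply, Pi.sub_apply, smul_eq_mul]
    fin_cases c
    all_goals simp only [Fin.zero_eta, Fin.mk_one]
    · field_simp; ring
    · unfold TT at h
      field_simp
      linear_combination h
  · refine ⟨(r 1 - p 1) / (q 1 - p 1), funext fun c => ?_⟩
    simp only [Pi.add_apply, Pi.smul_apply, Pi.sub_apply, smul_eq_mul]
    fin_cases c
    all_goals simp only [Fin.zero_eta, Fin.mk_one]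
    · unfold TT at h
      field_simp
      linear_combination -h
    · field_simp; ring

lemma collinear_of_TT {p q r : Fin 2 → ℝ} (h : TT p q r = 0) :
    Collinear ℝ ({p, q, r} : Set (Fin 2 → ℝ)) := by
  by_cases hpq : p = q
  · subst hpq
    simp only [Set.insert_idem]
    exact collinear_pair ℝ p r
  · obtain ⟨t, ht⟩ := line_mem hpq h
    rw [collinear_iff_exists_forall_eq_smul_vadd]
    refine ⟨p, q - p, ?_⟩
    intro x hx
    simp only [Set.mem_insert_iff, Set.mem_singleton_iff] at hx
    rcases hx with rfl | rfl | rfl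
    · exact ⟨0, by simp⟩
    · exact ⟨1, by simp⟩
    · exact ⟨t, by simpa using ht⟩

lemma TT_of_collinear {p q r : Fin 2 → ℝ} (h : Collinear ℝ ({p, q, r} : Set (Fin 2 → ℝ))) :
    TT p q r = 0 := by
  rw [collinear_iff_exists_forall_eq_smul_vadd] at h
  obtain ⟨p₀, v, hv⟩ := h
  obtain ⟨t1, h1⟩ := hv p (by simp)
  obtain ⟨t2, h2⟩ := hv q (by simp)
  obtain ⟨t3, h3⟩ := hv r (by simp)
  have e1 : ∀ c, p c = t1 * v c + p₀ c := fun c => by rw [h1]; simp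
  have e2 : ∀ c, q c = t2 * v c + p₀ c := fun c => by rw [h2]; simp
  have e3 : ∀ c, r c = t3 * v c + p₀ c := fun c => by rw [h3]; simp
  unfold TT
  rw [e1 0, e1 1, e2 0, e2 1, e3 0, e3 1]
  ring

lemma core17 (x y z : Fin 4 → ℝ)
    (hx : ∀ i, 0 ≤ x i) (hy : ∀ i, 0 ≤ y i) (hz : ∀ i, 0 ≤ z i)
    (hsum : ∀ i, x i + y i + z i = 1)
    (hxy : ∀ i, ¬(x i = 0 ∧ y i = 0)) (hxz : ∀ i, ¬(x i = 0 ∧ z i = 0))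
    (hyz : ∀ i, ¬(y i = 0 ∧ z i = 0))
    (hne : ¬(x 0 = x 1 ∧ y 0 = y 1 ∧ z 0 = z 1))
    (hdet : x 0*(y 1*z 2 - z 1*y 2) - y 0*(x 1*z 2 - z 1*x 2) + z 0*(x 1*y 2 - y 1*x 2) ≠ 0)
    (h01 : y 0*z 1 = z 0*y 1) (h23 : y 2*z 3 = z 2*y 3)
    (h02 : z 0*x 2 = x 0*z 2) (h13 : z 1*x 3 = x 1*z 3)
    (h03 : x 0*y 3 = y 0*x 3) (h12 : x 1*y 2 = y 1*x 2) : False := by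
  have pxz : ∀ j, z j = 0 → 0 < x j :=
    fun j hj => lt_of_le_of_ne (hx j) (fun h => hxz j ⟨h.symm, hj⟩)
  have pyz : ∀ j, z j = 0 → 0 < y j :=
    fun j hj => lt_of_le_of_ne (hy j) (fun h => hyz j ⟨h.symm, hj⟩)
  have pxy : ∀ j, y j = 0 → 0 < x j :=
    fun j hj => lt_of_le_of_ne (hx j) (fun h => hxy j ⟨h.symm, hj⟩)
  have pzy : ∀ j, y j = 0 → 0 < z j :=
    fun j hj => lt_of_le_of_ne (hz j) (fun h => hyz j ⟨hj, h.symm⟩)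
  have pyx : ∀ j, x j = 0 → 0 < y j :=
    fun j hj => lt_of_le_of_ne (hy j) (fun h => hxy j ⟨hj, h.symm⟩)
  have pzx : ∀ j, x j = 0 → 0 < z j :=
    fun j hj => lt_of_le_of_ne (hz j) (fun h => hxz j ⟨hj, h.symm⟩)
  have zprop : ∀ i, z i ≠ 0 := by
    have i01 : z 0 = 0 → z 1 = 0 := fun h => by
      have h' : y 0 * z 1 = 0 := by rw [h01, h]; ring
      exact (mul_eq_zero.mp h').resolve_left (pyz 0 h).ne'
    have i10 : z 1 = 0 → z 0 = 0 := fun h => by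
      have h' : z 0 * y 1 = 0 := by rw [← h01, h]; ring
      exact (mul_eq_zero.mp h').resolve_right (pyz 1 h).ne'
    have i02 : z 0 = 0 → z 2 = 0 := fun h => by
      have h' : x 0 * z 2 = 0 := by rw [← h02, h]; ring
      exact (mul_eq_zero.mp h').resolve_left (pxz 0 h).ne'
    have i20 : z 2 = 0 → z 0 = 0 := fun h => by
      have h' : z 0 * x 2 = 0 := by rw [h02, h]; ring
      exact (mul_eq_zero.mp h').resolve_right (pxz 2 h).ne'
    have i13 : z 1 = 0 → z 3 = 0 := fun h => by
      have h' : x 1 * z 3 = 0 := by rw [← h13, h]; ring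
      exact (mul_eq_zero.mp h').resolve_left (pxz 1 h).ne'
    have i31 : z 3 = 0 → z 1 = 0 := fun h => by
      have h' : z 1 * x 3 = 0 := by rw [h13, h]; ring
      exact (mul_eq_zero.mp h').resolve_right (pxz 3 h).ne'
    intro i hzi
    have hall : z 0 = 0 ∧ z 1 = 0 ∧ z 2 = 0 ∧ z 3 = 0 := by
      fin_cases i
      · exact ⟨hzi, i01 hzi, i02 hzi, i13 (i01 hzi)⟩
      · exact ⟨i10 hzi, hzi, i02 (i10 hzi), i13 hzi⟩
      · exact ⟨i20 hzi, i01 (i20 hzi), hzi, i13 (i01 (i20 hzi))⟩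
      · exact ⟨i10 (i31 hzi), i31 hzi, i02 (i10 (i31 hzi)), hzi⟩
    apply hdet
    rw [hall.1, hall.2.1, hall.2.2.1]; ring
  have yprop : ∀ i, y i ≠ 0 := by
    have i01 : y 0 = 0 → y 1 = 0 := fun h => by
      have h' : z 0 * y 1 = 0 := by rw [← h01, h]; ring
      exact (mul_eq_zero.mp h').resolve_left (pzy 0 h).ne'
    have i10 : y 1 = 0 → y 0 = 0 := fun h => by
      have h' : y 0 * z 1 = 0 := by rw [h01, h]; ring
      exact (mul_eq_zero.mp h').resolve_right (pzy 1 h).ne'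
    have i03 : y 0 = 0 → y 3 = 0 := fun h => by
      have h' : x 0 * y 3 = 0 := by rw [h03, h]; ring
      exact (mul_eq_zero.mp h').resolve_left (pxy 0 h).ne'
    have i30 : y 3 = 0 → y 0 = 0 := fun h => by
      have h' : y 0 * x 3 = 0 := by rw [← h03, h]; ring
      exact (mul_eq_zero.mp h').resolve_right (pxy 3 h).ne'
    have i12 : y 1 = 0 → y 2 = 0 := fun h => by
      have h' : x 1 * y 2 = 0 := by rw [h12, h]; ring
      exact (mul_eq_zero.mp h').resolve_left (pxy 1 h).ne'
    have i21 : y 2 = 0 → y 1 = 0 := fun h => by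
      have h' : y 1 * x 2 = 0 := by rw [← h12, h]; ring
      exact (mul_eq_zero.mp h').resolve_right (pxy 2 h).ne'
    intro i hyi
    have hall : y 0 = 0 ∧ y 1 = 0 ∧ y 2 = 0 ∧ y 3 = 0 := by
      fin_cases i
      · exact ⟨hyi, i01 hyi, i12 (i01 hyi), i03 hyi⟩
      · exact ⟨i10 hyi, hyi, i12 hyi, i03 (i10 hyi)⟩
      · exact ⟨i10 (i21 hyi), i21 hyi, hyi, i03 (i10 (i21 hyi))⟩
      · exact ⟨i30 hyi, i01 (i30 hyi), i12 (i01 (i30 hyi)), hyi⟩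
    apply hdet
    rw [hall.1, hall.2.1, hall.2.2.1]; ring
  have xprop : ∀ i, x i ≠ 0 := by
    have i02 : x 0 = 0 → x 2 = 0 := fun h => by
      have h' : z 0 * x 2 = 0 := by rw [h02, h]; ring
      exact (mul_eq_zero.mp h').resolve_left (pzx 0 h).ne'
    have i20 : x 2 = 0 → x 0 = 0 := fun h => by
      have h' : x 0 * z 2 = 0 := by rw [← h02, h]; ring
      exact (mul_eq_zero.mp h').resolve_right (pzx 2 h).ne'
    have i03 : x 0 = 0 → x 3 = 0 := fun h => by
      have h' : y 0 * x 3 = 0 := by rw [← h03, h]; ring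
      exact (mul_eq_zero.mp h').resolve_left (pyx 0 h).ne'
    have i30 : x 3 = 0 → x 0 = 0 := fun h => by
      have h' : x 0 * y 3 = 0 := by rw [h03, h]; ring
      exact (mul_eq_zero.mp h').resolve_right (pyx 3 h).ne'
    have i13 : x 1 = 0 → x 3 = 0 := fun h => by
      have h' : z 1 * x 3 = 0 := by rw [h13, h]; ring
      exact (mul_eq_zero.mp h').resolve_left (pzx 1 h).ne'
    have i31 : x 3 = 0 → x 1 = 0 := fun h => by
      have h' : x 1 * z 3 = 0 := by rw [← h13, h]; ring
      exact (mul_eq_zero.mp h').resolve_right (pzx 3 h).ne'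
    intro i hxi
    have hall : x 0 = 0 ∧ x 1 = 0 ∧ x 2 = 0 ∧ x 3 = 0 := by
      fin_cases i
      · exact ⟨hxi, i31 (i03 hxi), i02 hxi, i03 hxi⟩
      · exact ⟨i30 (i13 hxi), hxi, i02 (i30 (i13 hxi)), i13 hxi⟩
      · exact ⟨i20 hxi, i31 (i03 (i20 hxi)), hxi, i03 (i20 hxi)⟩
      · exact ⟨i30 hxi, i31 hxi, i02 (i30 hxi), hxi⟩
    apply hdet
    rw [hall.1, hall.2.1, hall.2.2.1]; ring
  have px : ∀ i, 0 < x i := fun i => lt_of_le_of_ne (hx i) (Ne.symm (xprop i))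
  have py : ∀ i, 0 < y i := fun i => lt_of_le_of_ne (hy i) (Ne.symm (yprop i))
  have pz : ∀ i, 0 < z i := fun i => lt_of_le_of_ne (hz i) (Ne.symm (zprop i))
  have key1 : x 1*y 2*z 0^2 = x 0*y 0*z 1*z 2 := by
    linear_combination (z 0^2)*h12 - (x 2*z 0)*h01 + (y 0*z 1)*h02
  have key2' : x 0*y 2*z 1*(y 3*z 3) = x 1*y 0*z 2*(y 3*z 3) := by
    linear_combination (y 2*z 3*z 1)*h03 + (y 0*z 1*x 3)*h23 + (y 0*z 2*y 3)*h13
  have key2 : x 0*y 2*z 1 = x 1*y 0*z 2 :=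
    mul_right_cancel₀ (mul_pos (py 3) (pz 3)).ne' key2'
  have key3 : (x 1*z 0)^2*y 2 = (x 0*z 1)^2*y 2 := by
    linear_combination (x 1)*key1 - (x 0*z 1)*key2
  have keysq : (x 1*z 0)^2 = (x 0*z 1)^2 := mul_right_cancel₀ (py 2).ne' key3
  have key4 : x 1*z 0 = x 0*z 1 := by
    have h1 : (0:ℝ) ≤ x 1*z 0 := le_of_lt (mul_pos (px 1) (pz 0))
    have h2 : (0:ℝ) ≤ x 0*z 1 := le_of_lt (mul_pos (px 0) (pz 1))
    nlinarith [keysq, h1, h2]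
  have hz01 : z 0 = z 1 := by
    have e : (x 1 + y 1 + z 1)*z 0 = (x 0 + y 0 + z 0)*z 1 := by
      linear_combination key4 - h01
    rw [hsum 0, hsum 1] at e
    linarith [e]
  have hx01 : x 0 = x 1 := by
    have : x 1 * z 0 = x 0 * z 0 := by rw [key4, hz01]
    exact (mul_right_cancel₀ (zprop 0) this).symm
  have hy01 : y 0 = y 1 := by
    have : y 0 * z 1 = y 1 * z 1 := by rw [h01, hz01]; ring
    exact mul_right_cancel₀ (zprop 1) this
  exact hne ⟨hx01, hy01, hz01⟩

/-- If `b 0, b 1, b 2` are affinely independent points of the plane and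
`a 0, a 1, a 2, a 3` are four distinct points of the triangle `conv {b 0, b 1, b 2}`, none a
vertex and not all collinear, then it is not the case that every pair `a i, a j` is
collinear with some vertex `b k`. -/
theorem statement17 (b : Fin 3 → Fin 2 → ℝ) (hb : AffineIndependent ℝ b)
    (a : Fin 4 → Fin 2 → ℝ) (hainj : Function.Injective a)
    (hconv : ∀ i, a i ∈ convexHull ℝ {b 0, b 1, b 2})
    (hav : ∀ i k, a i ≠ b k)
    (hline : ¬ Collinear ℝ (Set.range a)) :
    ¬ ∀ i j : Fin 4, i < j → ∃ k : Fin 3, Collinear ℝ {a i, a j, b k} := by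
  intro H
  -- basic setup
  have hrange : Set.range b = {b 0, b 1, b 2} := by
    ext x
    simp only [Set.mem_range, Set.mem_insert_iff, Set.mem_singleton_iff]
    constructor
    · rintro ⟨i, rfl⟩; fin_cases i <;> simp
    · rintro (rfl | rfl | rfl)
      exacts [⟨0, rfl⟩, ⟨1, rfl⟩, ⟨2, rfl⟩]
  have hbne : ¬ Collinear ℝ ({b 0, b 1, b 2} : Set (Fin 2 → ℝ)) := by
    rw [← hrange]
    exact affineIndependent_iff_not_collinear.mp hb
  have hD : TT (b 0) (b 1) (b 2) ≠ 0 := fun h => hbne (collinear_of_TT h)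
  have htot : affineSpan ℝ (Set.range b) = ⊤ := by
    rw [hb.affineSpan_eq_top_iff_card_eq_finrank_add_one]
    simp
  let B : AffineBasis (Fin 3) ℝ (Fin 2 → ℝ) := ⟨b, hb, htot⟩
  have hex : ∀ i, ∃ wv : Fin 3 → ℝ, (∀ k, 0 ≤ wv k) ∧ (wv 0 + wv 1 + wv 2 = 1) ∧
      ∀ c, a i c = wv 0 * b 0 c + wv 1 * b 1 c + wv 2 * b 2 c := by
    intro i
    refine ⟨fun k => B.coord k (a i), ?_, ?_, ?_⟩
    · intro k
      have h := hconv i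
      rw [← hrange] at h
      have hrB : Set.range ⇑B = Set.range b := rfl
      rw [← hrB, B.convexHull_eq_nonneg_coord] at h
      exact h k
    · have := B.sum_coord_apply_eq_one (a i)
      rwa [Fin.sum_univ_three] at this
    · intro c
      have h := B.affineCombination_coord_eq_self (a i)
      rw [Finset.affineCombination_eq_linear_combination _ _ _
        (B.sum_coord_apply_eq_one (a i))] at h
      rw [Fin.sum_univ_three] at h
      have h2 := congrFun h c
      simp only [Pi.add_apply, Pi.smul_apply, smul_eq_mul] at h2
      exact h2.symm
  choose w hw0 hw1 hw2 using hex
  -- pairwise collinearity through vertices, symmetric form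
  have Hsym : ∀ i j : Fin 4, i ≠ j → ∃ k, TT (a i) (a j) (b k) = 0 := by
    intro i j hij
    rcases lt_or_gt_of_ne hij with h | h
    · obtain ⟨k, hk⟩ := H i j h
      exact ⟨k, TT_of_collinear hk⟩
    · obtain ⟨k, hk⟩ := H j i h
      exact ⟨k, TTz2 (TT_of_collinear hk)⟩
  -- Step A : no three of the points a are collinear
  have hA3 : ∀ i j l : Fin 4, i ≠ j → i ≠ l → j ≠ l → TT (a i) (a j) (a l) ≠ 0 := by
    intro i j l hij hil hjl hT
    obtain ⟨m, hmi, hmj, hml⟩ : ∃ m : Fin 4, m ≠ i ∧ m ≠ j ∧ m ≠ l := by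
      have : ∀ i j l : Fin 4, i ≠ j → i ≠ l → j ≠ l →
          ∃ m : Fin 4, m ≠ i ∧ m ≠ j ∧ m ≠ l := by decide
      exact this i j l hij hil hjl
    have haij : a i ≠ a j := fun h => hij (hainj h)
    have hail : a i ≠ a l := fun h => hil (hainj h)
    have hajl : a j ≠ a l := fun h => hjl (hainj h)
    obtain ⟨k1, e1⟩ := Hsym i j hij
    obtain ⟨k4, e4⟩ := Hsym i m (Ne.symm hmi)
    obtain ⟨k5, e5⟩ := Hsym j m (Ne.symm hmj)
    obtain ⟨k6, e6⟩ := Hsym l m (Ne.symm hml)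
    have finish : TT (a i) (a j) (a m) = 0 → False := by
      intro onLm
      apply hline
      have hmem : ∀ n : Fin 4, n = i ∨ n = j ∨ n = l ∨ n = m := by
        have : ∀ i j l m : Fin 4, i ≠ j → i ≠ l → j ≠ l → m ≠ i → m ≠ j → m ≠ l →
            ∀ n : Fin 4, n = i ∨ n = j ∨ n = l ∨ n = m := by decide
        exact this i j l m hij hil hjl hmi hmj hml
      have hall : ∀ n : Fin 4, TT (a i) (a j) (a n) = 0 := by
        intro n
        rcases hmem n with rfl | rfl | rfl | rfl
        · exact TT_self1 _ _
        · exact TT_self2 _ _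
        · exact hT
        · exact onLm
      rw [collinear_iff_exists_forall_eq_smul_vadd]
      refine ⟨a i, a j - a i, ?_⟩
      rintro x ⟨n, rfl⟩
      obtain ⟨t, ht⟩ := line_mem haij (hall n)
      exact ⟨t, by simpa using ht⟩
    by_cases c4 : TT (a i) (a j) (b k4) = 0
    · exact finish (TTz1 (glue (hav i k4) (TTz1 e4) (TTz1 c4)))
    by_cases c5 : TT (a i) (a j) (b k5) = 0
    · exact finish (TTz4 (glue (hav j k5) (TTz1 e5) (TTz3 c5)))
    by_cases c6 : TT (a i) (a j) (b k6) = 0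
    · have hl1 : TT (a i) (a l) (b k6) = 0 := glue haij hT c6
      have h3 : TT (a l) (a m) (a i) = 0 := glue (hav l k6) (TTz1 e6) (TTz3 hl1)
      exact finish (TTz1 (glue hail (TTz4 h3) (TTz1 hT)))
    by_cases c45 : k4 = k5
    · subst c45
      have h3 : TT (a m) (a i) (a j) = 0 := glue (hav m k4) (TTz3 e4) (TTz3 e5)
      exact finish (TTz3 h3)
    by_cases c46 : k4 = k6
    · subst c46
      have h3 : TT (a m) (a i) (a l) = 0 := glue (hav m k4) (TTz3 e4) (TTz3 e6)
      exact finish (TTz1 (glue hail (TTz3 h3) (TTz1 hT)))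
    by_cases c56 : k5 = k6
    · subst c56
      have h3 : TT (a m) (a j) (a l) = 0 := glue (hav m k5) (TTz3 e5) (TTz3 e6)
      have h4 : TT (a j) (a m) (a i) = 0 := glue hajl (TTz3 h3) (TTz3 hT)
      exact finish (TTz4 h4)
    have : k1 = k4 ∨ k1 = k5 ∨ k1 = k6 := by
      have : ∀ x y z u : Fin 3, y ≠ z → y ≠ u → z ≠ u → x = y ∨ x = z ∨ x = u := by decide
      exact this k1 k4 k5 k6 c45 c46 c56
    rcases this with rfl | rfl | rfl
    · exact c4 e1
    · exact c5 e1
    · exact c6 e1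
  -- Step B : the coloring of pairs is a proper edge coloring of K4
  have hdiff : ∀ (i j l : Fin 4) (k : Fin 3), i ≠ j → i ≠ l → j ≠ l →
      TT (a i) (a j) (b k) = 0 → TT (a i) (a l) (b k) = 0 → False := by
    intro i j l k hij hil hjl h1 h2
    exact hA3 i j l hij hil hjl (glue (hav i k) (TTz1 h1) (TTz1 h2))
  obtain ⟨k01, e01⟩ := Hsym 0 1 (by decide)
  obtain ⟨k02, e02⟩ := Hsym 0 2 (by decide)
  obtain ⟨k03, e03⟩ := Hsym 0 3 (by decide)
  obtain ⟨k12, e12⟩ := Hsym 1 2 (by decide)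
  obtain ⟨k13, e13⟩ := Hsym 1 3 (by decide)
  obtain ⟨k23, e23⟩ := Hsym 2 3 (by decide)
  have d1 : k01 ≠ k02 := fun h =>
    hdiff 0 1 2 k01 (by decide) (by decide) (by decide) e01 (by rw [h]; exact e02)
  have d2 : k01 ≠ k03 := fun h =>
    hdiff 0 1 3 k01 (by decide) (by decide) (by decide) e01 (by rw [h]; exact e03)
  have d3 : k02 ≠ k03 := fun h =>
    hdiff 0 2 3 k02 (by decide) (by decide) (by decide) e02 (by rw [h]; exact e03)
  have d4 : k01 ≠ k12 := fun h =>
    hdiff 1 0 2 k01 (by decide) (by decide) (by decide) (TTz2 e01) (by rw [h]; exact e12)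
  have d5 : k01 ≠ k13 := fun h =>
    hdiff 1 0 3 k01 (by decide) (by decide) (by decide) (TTz2 e01) (by rw [h]; exact e13)
  have d6 : k12 ≠ k13 := fun h =>
    hdiff 1 2 3 k12 (by decide) (by decide) (by decide) e12 (by rw [h]; exact e13)
  have d7 : k02 ≠ k12 := fun h =>
    hdiff 2 0 1 k02 (by decide) (by decide) (by decide) (TTz2 e02) (by rw [h]; exact TTz2 e12)
  have d8 : k02 ≠ k23 := fun h =>
    hdiff 2 0 3 k02 (by decide) (by decide) (by decide) (TTz2 e02) (by rw [h]; exact e23)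
  have d9 : k12 ≠ k23 := fun h =>
    hdiff 2 1 3 k12 (by decide) (by decide) (by decide) (TTz2 e12) (by rw [h]; exact e23)
  have d10 : k03 ≠ k13 := fun h =>
    hdiff 3 0 1 k03 (by decide) (by decide) (by decide) (TTz2 e03) (by rw [h]; exact TTz2 e13)
  have d11 : k03 ≠ k23 := fun h =>
    hdiff 3 0 2 k03 (by decide) (by decide) (by decide) (TTz2 e03) (by rw [h]; exact TTz2 e23)
  have d12 : k13 ≠ k23 := fun h =>
    hdiff 3 1 2 k13 (by decide) (by decide) (by decide) (TTz2 e13) (by rw [h]; exact TTz2 e23)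
  obtain ⟨hm1, hm2, hm3⟩ : k23 = k01 ∧ k13 = k02 ∧ k12 = k03 := by
    have : ∀ k01 k02 k03 k12 k13 k23 : Fin 3,
        k01 ≠ k02 → k01 ≠ k03 → k02 ≠ k03 → k01 ≠ k12 → k01 ≠ k13 → k12 ≠ k13 →
        k02 ≠ k12 → k02 ≠ k23 → k12 ≠ k23 → k03 ≠ k13 → k03 ≠ k23 → k13 ≠ k23 →
        k23 = k01 ∧ k13 = k02 ∧ k12 = k03 := by decide
    exact this k01 k02 k03 k12 k13 k23 d1 d2 d3 d4 d5 d6 d7 d8 d9 d10 d11 d12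
  rw [hm1] at e23
  rw [hm2] at e13
  rw [hm3] at e12
  -- cross-product identities in barycentric coordinates
  have cross0 : ∀ i j, TT (a i) (a j) (b 0) =
      TT (b 0) (b 1) (b 2) * (w i 1 * w j 2 - w i 2 * w j 1) := by
    intro i j
    have ei : w i 0 = 1 - w i 1 - w i 2 := by linarith [hw1 i]
    have ej : w j 0 = 1 - w j 1 - w j 2 := by linarith [hw1 j]
    unfold TT
    rw [hw2 i 0, hw2 i 1, hw2 j 0, hw2 j 1, ei, ej]
    ring
  have cross1 : ∀ i j, TT (a i) (a j) (b 1) =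
      TT (b 0) (b 1) (b 2) * (w i 2 * w j 0 - w i 0 * w j 2) := by
    intro i j
    have ei : w i 0 = 1 - w i 1 - w i 2 := by linarith [hw1 i]
    have ej : w j 0 = 1 - w j 1 - w j 2 := by linarith [hw1 j]
    unfold TT
    rw [hw2 i 0, hw2 i 1, hw2 j 0, hw2 j 1, ei, ej]
    ring
  have cross2 : ∀ i j, TT (a i) (a j) (b 2) =
      TT (b 0) (b 1) (b 2) * (w i 0 * w j 1 - w i 1 * w j 0) := by
    intro i j
    have ei : w i 0 = 1 - w i 1 - w i 2 := by linarith [hw1 i]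
    have ej : w j 0 = 1 - w j 1 - w j 2 := by linarith [hw1 j]
    unfold TT
    rw [hw2 i 0, hw2 i 1, hw2 j 0, hw2 j 1, ei, ej]
    ring
  have C0 : ∀ i j, TT (a i) (a j) (b 0) = 0 → w i 1 * w j 2 = w i 2 * w j 1 := by
    intro i j h
    rw [cross0 i j] at h
    rcases mul_eq_zero.mp h with h | h
    · exact absurd h hD
    · linarith [h]
  have C1 : ∀ i j, TT (a i) (a j) (b 1) = 0 → w i 2 * w j 0 = w i 0 * w j 2 := by
    intro i j h
    rw [cross1 i j] at h
    rcases mul_eq_zero.mp h with h | h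
    · exact absurd h hD
    · linarith [h]
  have C2 : ∀ i j, TT (a i) (a j) (b 2) = 0 → w i 0 * w j 1 = w i 1 * w j 0 := by
    intro i j h
    rw [cross2 i j] at h
    rcases mul_eq_zero.mp h with h | h
    · exact absurd h hD
    · linarith [h]
  have detid : TT (a 0) (a 1) (a 2) = TT (b 0) (b 1) (b 2) *
      (w 0 0*(w 1 1*w 2 2 - w 1 2*w 2 1) - w 0 1*(w 1 0*w 2 2 - w 1 2*w 2 0)
        + w 0 2*(w 1 0*w 2 1 - w 1 1*w 2 0)) := by
    have ei : w 0 0 = 1 - w 0 1 - w 0 2 := by linarith [hw1 0]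
    have ej : w 1 0 = 1 - w 1 1 - w 1 2 := by linarith [hw1 1]
    have el : w 2 0 = 1 - w 2 1 - w 2 2 := by linarith [hw1 2]
    unfold TT
    rw [hw2 0 0, hw2 0 1, hw2 1 0, hw2 1 1, hw2 2 0, hw2 2 1, ei, ej, el]
    ring
  have Hdet : w 0 0*(w 1 1*w 2 2 - w 1 2*w 2 1) - w 0 1*(w 1 0*w 2 2 - w 1 2*w 2 0)
      + w 0 2*(w 1 0*w 2 1 - w 1 1*w 2 0) ≠ 0 := by
    intro h
    apply hA3 0 1 2 (by decide) (by decide) (by decide)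
    rw [detid, h, mul_zero]
  have hv01 : ∀ i, w i 0 = 0 → w i 1 = 0 → False := by
    intro i h0 h1
    apply hav i 2
    have h2' : w i 2 = 1 := by linarith [hw1 i]
    funext c
    rw [hw2 i c, h0, h1, h2']
    ring
  have hv02 : ∀ i, w i 0 = 0 → w i 2 = 0 → False := by
    intro i h0 h2
    apply hav i 1
    have h1' : w i 1 = 1 := by linarith [hw1 i]
    funext c
    rw [hw2 i c, h0, h2, h1']
    ring
  have hv12 : ∀ i, w i 1 = 0 → w i 2 = 0 → False := by
    intro i h1 h2
    apply hav i 0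
    have h0' : w i 0 = 1 := by linarith [hw1 i]
    funext c
    rw [hw2 i c, h1, h2, h0']
    ring
  have Hne : ¬(w 0 0 = w 1 0 ∧ w 0 1 = w 1 1 ∧ w 0 2 = w 1 2) := by
    rintro ⟨h1, h2, h3⟩
    have : a 0 = a 1 := funext fun c => by rw [hw2 0 c, hw2 1 c, h1, h2, h3]
    exact (by decide : (0 : Fin 4) ≠ 1) (hainj this)
  -- Step C : case analysis on the permutation and application of the core lemma
  have perm3 : ∀ u v t : Fin 3, u ≠ v → u ≠ t → v ≠ t →
      (u=0∧v=1∧t=2) ∨ (u=0∧v=2∧t=1) ∨ (u=1∧v=0∧t=2) ∨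
      (u=1∧v=2∧t=0) ∨ (u=2∧v=0∧t=1) ∨ (u=2∧v=1∧t=0) := by decide
  rcases perm3 k01 k02 k03 d1 d2 d3 with
    ⟨rfl, rfl, rfl⟩ | ⟨rfl, rfl, rfl⟩ | ⟨rfl, rfl, rfl⟩ |
    ⟨rfl, rfl, rfl⟩ | ⟨rfl, rfl, rfl⟩ | ⟨rfl, rfl, rfl⟩
  · -- (0,1,2)
    exact core17 (fun i => w i 0) (fun i => w i 1) (fun i => w i 2)
      (fun i => hw0 i 0) (fun i => hw0 i 1) (fun i => hw0 i 2)
      hw1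
      (fun i h => hv01 i h.1 h.2) (fun i h => hv02 i h.1 h.2) (fun i h => hv12 i h.1 h.2)
      Hne Hdet
      (C0 0 1 e01) (C0 2 3 e23) (C1 0 2 e02) (C1 1 3 e13) (C2 0 3 e03) (C2 1 2 e12)
  · -- (0,2,1)
    exact core17 (fun i => w i 0) (fun i => w i 2) (fun i => w i 1)
      (fun i => hw0 i 0) (fun i => hw0 i 2) (fun i => hw0 i 1)
      (fun i => by linarith [hw1 i])
      (fun i h => hv02 i h.1 h.2) (fun i h => hv01 i h.1 h.2) (fun i h => hv12 i h.2 h.1)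
      (fun h => Hne ⟨h.1, h.2.2, h.2.1⟩)
      (fun h => Hdet (by linear_combination -h))
      (C0 0 1 e01).symm (C0 2 3 e23).symm (C2 0 2 e02).symm (C2 1 3 e13).symm
      (C1 0 3 e03).symm (C1 1 2 e12).symm
  · -- (1,0,2)
    exact core17 (fun i => w i 1) (fun i => w i 0) (fun i => w i 2)
      (fun i => hw0 i 1) (fun i => hw0 i 0) (fun i => hw0 i 2)
      (fun i => by linarith [hw1 i])
      (fun i h => hv01 i h.2 h.1) (fun i h => hv12 i h.1 h.2) (fun i h => hv02 i h.1 h.2)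
      (fun h => Hne ⟨h.2.1, h.1, h.2.2⟩)
      (fun h => Hdet (by linear_combination -h))
      (C1 0 1 e01).symm (C1 2 3 e23).symm (C0 0 2 e02).symm (C0 1 3 e13).symm
      (C2 0 3 e03).symm (C2 1 2 e12).symm
  · -- (1,2,0)
    exact core17 (fun i => w i 1) (fun i => w i 2) (fun i => w i 0)
      (fun i => hw0 i 1) (fun i => hw0 i 2) (fun i => hw0 i 0)
      (fun i => by linarith [hw1 i])
      (fun i h => hv12 i h.1 h.2) (fun i h => hv01 i h.2 h.1) (fun i h => hv02 i h.2 h.1)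
      (fun h => Hne ⟨h.2.2, h.1, h.2.1⟩)
      (fun h => Hdet (by linear_combination h))
      (C1 0 1 e01) (C1 2 3 e23) (C2 0 2 e02) (C2 1 3 e13) (C0 0 3 e03) (C0 1 2 e12)
  · -- (2,0,1)
    exact core17 (fun i => w i 2) (fun i => w i 0) (fun i => w i 1)
      (fun i => hw0 i 2) (fun i => hw0 i 0) (fun i => hw0 i 1)
      (fun i => by linarith [hw1 i])
      (fun i h => hv02 i h.2 h.1) (fun i h => hv12 i h.2 h.1) (fun i h => hv01 i h.1 h.2)
      (fun h => Hne ⟨h.2.1, h.2.2, h.1⟩)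
      (fun h => Hdet (by linear_combination h))
      (C2 0 1 e01) (C2 2 3 e23) (C0 0 2 e02) (C0 1 3 e13) (C1 0 3 e03) (C1 1 2 e12)
  · -- (2,1,0)
    exact core17 (fun i => w i 2) (fun i => w i 1) (fun i => w i 0)
      (fun i => hw0 i 2) (fun i => hw0 i 1) (fun i => hw0 i 0)
      (fun i => by linarith [hw1 i])
      (fun i h => hv12 i h.2 h.1) (fun i h => hv02 i h.2 h.1) (fun i h => hv01 i h.2 h.1)
      (fun h => Hne ⟨h.2.2, h.2.1, h.1⟩)
      (fun h => Hdet (by linear_combination -h))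
      (C2 0 1 e01).symm (C2 2 3 e23).symm (C1 0 2 e02).symm (C1 1 3 e13).symm
      (C0 0 3 e03).symm (C0 1 2 e12).symm
end
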